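/- arXiv:0906.3734 — 12 statements merged into one kernel-verified Lean document; each statement's English description precedes it below -/
import Mathlib

section
/- Let Γ be a group, G an abelian group written additively, K a group, and χ : Γ → G a group homomorphism. Suppose λ : Γ × G → K and μ : G × G → K satisfy, for all a, b ∈ Γ and g, h, z ∈ G: (i) λ(ba, z) = λ(b, z + χ(a)) · λ(a, z); (ii) μ(g + h, z) = μ(g, z + h) · μ(h, z); (iii) λ(a, z + g) · μ(g, z) = μ(g, z + χ(a)) · λ(a, z). Define λ'(a) := μ(χ(a), 0)⁻¹ · λ(a, 0). Then λ' is a group homomorphism Γ → K, i.e. λ'(ba) = λ'(b) · λ'(a) for all a, b ∈ Γ, and moreover λ(a, z) = μ(z + χ(a), 0) · λ'(a) · μ(z, 0)⁻¹ for all a ∈ Γ and z ∈ G. -/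
/-- Let `Γ` be a group, `G` an abelian group (additive), `K` a group, and `χ : Γ → G` a group
homomorphism.  Suppose `λ : Γ × G → K` and `μ : G × G → K` satisfy
(i)   `λ(ba, z) = λ(b, z + χ(a)) · λ(a, z)`,
(ii)  `μ(g + h, z) = μ(g, z + h) · μ(h, z)`,
(iii) `λ(a, z + g) · μ(g, z) = μ(g, z + χ(a)) · λ(a, z)`.
Define `λ'(a) := μ(χ(a), 0)⁻¹ · λ(a, 0)`.  Then `λ'` is a group homomorphism `Γ → K`
(`λ'(ba) = λ'(b) · λ'(a)`), and `λ(a, z) = μ(z + χ(a), 0) · λ'(a) · μ(z, 0)⁻¹` for all `a, z`. -/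
theorem statement0 {Γ G K : Type*} [Group Γ] [AddCommGroup G] [Group K]
    (χ : Γ → G) (hχ : ∀ a b : Γ, χ (a * b) = χ a + χ b)
    (lam : Γ → G → K) (mu : G → G → K)
    (hlam : ∀ (a b : Γ) (z : G), lam (b * a) z = lam b (z + χ a) * lam a z)
    (hmu : ∀ g h z : G, mu (g + h) z = mu g (z + h) * mu h z)
    (hcomm : ∀ (a : Γ) (g z : G), lam a (z + g) * mu g z = mu g (z + χ a) * lam a z) :
    (∀ a b : Γ,
        (mu (χ (b * a)) 0)⁻¹ * lam (b * a) 0 =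
          ((mu (χ b) 0)⁻¹ * lam b 0) * ((mu (χ a) 0)⁻¹ * lam a 0)) ∧
      (∀ (a : Γ) (z : G),
        lam a z = mu (z + χ a) 0 * ((mu (χ a) 0)⁻¹ * lam a 0) * (mu z 0)⁻¹) := by
  have key : ∀ (a : Γ) (z : G),
      lam a z = mu (z + χ a) 0 * ((mu (χ a) 0)⁻¹ * lam a 0) * (mu z 0)⁻¹ := by
    intro a z
    have h1 := hcomm a z 0
    simp only [zero_add] at h1
    -- lam a z * mu z 0 = mu z (χ a) * lam a 0
    have h2 := hmu z (χ a) 0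
    simp only [zero_add] at h2
    -- mu (z + χ a) 0 = mu z (χ a) * mu (χ a) 0
    have h3 : mu z (χ a) = mu (z + χ a) 0 * (mu (χ a) 0)⁻¹ := by
      rw [h2]; group
    have : lam a z = mu z (χ a) * lam a 0 * (mu z 0)⁻¹ := by
      rw [← h1]; group
    rw [this, h3]; group
  refine ⟨?_, key⟩
  intro a b
  have h0 := hlam a b 0
  simp only [zero_add] at h0
  have hb := key b (χ a)
  rw [h0, hb, hχ]
  have hc : χ b + χ a = χ a + χ b := add_comm _ _
  rw [hc]
  group
end

section
/- Let H be a complex Hilbert space, U the group of unitary operators on H, Z the center of U, and K := U/Z the quotient group; K acts on U by conjugation, k[u] := V u V⁻¹ for any representative V ∈ U of k ∈ K (this is well defined since Z is central). Let Γ be a group, G an abelian group written additively, N a subgroup of G, π : G → G/N the quotient homomorphism, and χ : Γ → G/N a group homomorphism. Suppose λ : Γ × G/N → K and μ : G × G/N → K satisfy λ(ba, z) = λ(b, z + χ(a)) · λ(a, z), μ(g + h, z) = μ(g, z + π(h)) · μ(h, z), and λ(a, z + π(g)) · μ(g, z) = μ(g, z + χ(a)) · λ(a, z) for all a, b ∈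 Γ, g, h ∈ G, z ∈ G/N. Define ν : (Γ × G) × G/N → K by ν((a,g), z) := λ(a, z + π(g)) · μ(g, z), and for x = (a, g) ∈ Γ × G write z · x := z + χ(a) + π(g). Then for a function n : Γ × G × G/N → U the following are equivalent: (1) n(yx, z) = ν(x, z)⁻¹[n(y, z · x)] · n(x, z) for all x, y ∈ Γ × G (with componentwise multiplication on Γ × G) and all z ∈ G/N; (2) the functions l(a, z) := n(a, 0, z) and m(g, z) := n(1, g, z) satisfy l(ba, z) = λ(a, z)⁻¹[l(b, z + χ(a))] · l(a, z), m(g + h, z) = μ(g, z)⁻¹[m(h, z + π(g))] · m(g, z), λ(a, z)⁻¹[m(g, z + χ(a))] · l(a, z) = μ(g, z)⁻¹[l(a, z + π(g))] · m(g, z), and n(a, g, z) = μ(g, z)⁻¹[l(a, z + π(g))] · m(g, z), for all a, b ∈ Γ, g, h ∈ G, z ∈ G/N. -/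
/-!
Write `x = (a, g) = (a, 0) · (1, g)`. Specialising the joint cocycle identity to pairs of such
generators gives the cocycle identities of `l` and `m`, the formula for `n` in terms of them and,
comparing the two factorisations `(a, g) = (a, 0) · (1, g) = (1, g) · (a, 0)`, the compatibility
of `l` and `m`. Conversely, when `n` is given by that formula, the joint cocycle identity for
`(b, h) · (a, g)` reduces, after factoring out `μ(g, z)`, to the compatibility of `l` and `m` at
`(a, h, z + π g)`; the conjugating parts agree because `λ` and `μ` commute in the twisted sense.
-/

/-- The conjugation action of the projective unitary group
`PU(H) = U(H) / center U(H)` on the unitary group `U(H)`: a class `k` acts by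
`k[u] = V * u * V⁻¹` for any representative `V` of `k`; this is well defined since the
center acts trivially by conjugation. -/
noncomputable def projUnitaryConj (H : Type*) [NormedAddCommGroup H] [InnerProductSpace ℂ H]
    [CompleteSpace H] :
    (unitary (H →L[ℂ] H) ⧸ Subgroup.center (unitary (H →L[ℂ] H))) →*
      MulAut (unitary (H →L[ℂ] H)) :=
  QuotientGroup.lift _ MulAut.conj (by
    intro z hz
    ext u
    rw [MulAut.conj_apply, MulAut.one_apply, Subgroup.mem_center_iff] at *
    rw [← hz u, mul_inv_cancel_right])

namespace OuterCocycle

variable {U K Γ G Z : Type*} [Group U] [Group K] [Group Γ] [AddCommGroup G] [AddCommGroup Z]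

section Action

variable (α : K →* MulAut U)

theorem map_inv_apply_map_inv_apply (A B : K) (u : U) :
    α B⁻¹ (α A⁻¹ u) = α (A * B)⁻¹ u := by
  rw [mul_inv_rev, map_mul, MulAut.mul_apply]

theorem map_inv_apply_mul_mul (A B : K) (u v w : U) :
    α B⁻¹ (α A⁻¹ u * v) * w = α (A * B)⁻¹ u * (α B⁻¹ v * w) := by
  rw [map_mul, mul_assoc, map_inv_apply_map_inv_apply]

theorem map_inv_apply_mul_eq {A B A' B' : K} {u v w v' w' : U} (hK : A * B = A' * B')
    (hU : α B⁻¹ v * w = α B'⁻¹ v' * w') :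
    α B⁻¹ (α A⁻¹ u * v) * w = α B'⁻¹ (α A'⁻¹ u * v') * w' := by
  rw [map_inv_apply_mul_mul, map_inv_apply_mul_mul, hK, hU]

end Action

variable (α : K →* MulAut U) (χ : Γ → Z) (π : G →+ Z) (lam : Γ → Z → K) (mu : G → Z → K)
  (n : Γ → G → Z → U)

def IsJointCocycle : Prop :=
  ∀ (x y : Γ × G) (z : Z), n (y.1 * x.1) (y.2 + x.2) z =
    α (lam x.1 (z + π x.2) * mu x.2 z)⁻¹ (n y.1 y.2 (z + χ x.1 + π x.2)) * n x.1 x.2 z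

variable {χ lam mu}

theorem chi_one (hχ : ∀ a b : Γ, χ (a * b) = χ a + χ b) : χ 1 = 0 := by
  simpa using hχ 1 1

theorem lam_one (hχ : ∀ a b : Γ, χ (a * b) = χ a + χ b)
    (hlam : ∀ (a b : Γ) (z : Z), lam (b * a) z = lam b (z + χ a) * lam a z) (z : Z) :
    lam 1 z = 1 := by
  simpa [chi_one hχ] using hlam 1 1 z

theorem mu_zero (hmu : ∀ (g h : G) (z : Z), mu (g + h) z = mu g (z + π h) * mu h z) (z : Z) :
    mu 0 z = 1 := by
  simpa using hmu 0 0 z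

variable {α π n}

theorem IsJointCocycle.fst_cocycle (hn : IsJointCocycle α χ π lam mu n)
    (hmu : ∀ (g h : G) (z : Z), mu (g + h) z = mu g (z + π h) * mu h z) (a b : Γ) (z : Z) :
    n (b * a) 0 z = α (lam a z)⁻¹ (n b 0 (z + χ a)) * n a 0 z := by
  simpa [mu_zero π hmu] using hn (a, 0) (b, 0) z

theorem IsJointCocycle.snd_cocycle (hn : IsJointCocycle α χ π lam mu n)
    (hχ : ∀ a b : Γ, χ (a * b) = χ a + χ b)
    (hlam : ∀ (a b : Γ) (z : Z), lam (b * a) z = lam b (z + χ a) * lam a z) (g h : G) (z : Z) :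
    n 1 (g + h) z = α (mu g z)⁻¹ (n 1 h (z + π g)) * n 1 g z := by
  simpa [lam_one hχ hlam, chi_one hχ, add_comm] using hn (1, g) (1, h) z

theorem IsJointCocycle.eq_snd_mul_fst (hn : IsJointCocycle α χ π lam mu n)
    (hχ : ∀ a b : Γ, χ (a * b) = χ a + χ b)
    (hlam : ∀ (a b : Γ) (z : Z), lam (b * a) z = lam b (z + χ a) * lam a z) (a : Γ) (g : G)
    (z : Z) :
    n a g z = α (mu g z)⁻¹ (n a 0 (z + π g)) * n 1 g z := by
  simpa [lam_one hχ hlam, chi_one hχ] using hn (1, g) (a, 0) z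

theorem IsJointCocycle.eq_fst_mul_snd (hn : IsJointCocycle α χ π lam mu n)
    (hmu : ∀ (g h : G) (z : Z), mu (g + h) z = mu g (z + π h) * mu h z) (a : Γ) (g : G)
    (z : Z) :
    n a g z = α (lam a z)⁻¹ (n 1 g (z + χ a)) * n a 0 z := by
  simpa [mu_zero π hmu] using hn (a, 0) (1, g) z

theorem isJointCocycle_of_eq_snd_mul_fst
    (hmu : ∀ (g h : G) (z : Z), mu (g + h) z = mu g (z + π h) * mu h z)
    (hcomm : ∀ (a : Γ) (g : G) (z : Z), lam a (z + π g) * mu g z = mu g (z + χ a) * lam a z)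
    (hl : ∀ (a b : Γ) (z : Z), n (b * a) 0 z = α (lam a z)⁻¹ (n b 0 (z + χ a)) * n a 0 z)
    (hm : ∀ (g h : G) (z : Z), n 1 (g + h) z = α (mu g z)⁻¹ (n 1 h (z + π g)) * n 1 g z)
    (hlm : ∀ (a : Γ) (g : G) (z : Z),
      α (lam a z)⁻¹ (n 1 g (z + χ a)) * n a 0 z = α (mu g z)⁻¹ (n a 0 (z + π g)) * n 1 g z)
    (hn : ∀ (a : Γ) (g : G) (z : Z), n a g z = α (mu g z)⁻¹ (n a 0 (z + π g)) * n 1 g z) :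
    IsJointCocycle α χ π lam mu n := by
  rintro ⟨a, g⟩ ⟨b, h⟩ z
  dsimp only
  set w := z + π g
  have key : α (mu h w)⁻¹ (α (lam a (w + π h))⁻¹ (n b 0 (w + π h + χ a)) * n a 0 (w + π h)) *
        n 1 h w =
      α (lam a w)⁻¹ (α (mu h (w + χ a))⁻¹ (n b 0 (w + χ a + π h)) * n 1 h (w + χ a)) *
        n a 0 w := by
    rw [add_right_comm w (π h) (χ a)]
    exact map_inv_apply_mul_eq α (hcomm a h w) (hlm a h w).symm
  calc n (b * a) (h + g) z
      = α (mu g z)⁻¹ (α (mu h w)⁻¹ (α (lam a (w + π h))⁻¹ (n b 0 (w + π h + χ a)) *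
          n a 0 (w + π h)) * n 1 h w) * n 1 g z := by
        rw [hn, hl, hmu, add_comm h g, hm, map_add, ← add_assoc]
        simp only [map_inv_apply_mul_mul, mul_assoc, w]
    _ = α (mu g z)⁻¹ (α (lam a w)⁻¹ (α (mu h (w + χ a))⁻¹ (n b 0 (w + χ a + π h)) *
          n 1 h (w + χ a)) * n a 0 w) * n 1 g z := by
        rw [key]
    _ = α (lam a w * mu g z)⁻¹ (n b h (z + χ a + π g)) * n a g z := by
        rw [hn b h, hn a g, add_right_comm, map_inv_apply_mul_mul]

theorem isJointCocycle_iff (hχ : ∀ a b : Γ, χ (a * b) = χ a + χ b)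
    (hlam : ∀ (a b : Γ) (z : Z), lam (b * a) z = lam b (z + χ a) * lam a z)
    (hmu : ∀ (g h : G) (z : Z), mu (g + h) z = mu g (z + π h) * mu h z)
    (hcomm : ∀ (a : Γ) (g : G) (z : Z), lam a (z + π g) * mu g z = mu g (z + χ a) * lam a z) :
    IsJointCocycle α χ π lam mu n ↔
      ∀ (a b : Γ) (g h : G) (z : Z),
        n (b * a) 0 z = α (lam a z)⁻¹ (n b 0 (z + χ a)) * n a 0 z ∧
        n 1 (g + h) z = α (mu g z)⁻¹ (n 1 h (z + π g)) * n 1 g z ∧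
        α (lam a z)⁻¹ (n 1 g (z + χ a)) * n a 0 z = α (mu g z)⁻¹ (n a 0 (z + π g)) * n 1 g z ∧
        n a g z = α (mu g z)⁻¹ (n a 0 (z + π g)) * n 1 g z := by
  constructor
  · intro hn a b g h z
    exact ⟨hn.fst_cocycle hmu a b z, hn.snd_cocycle hχ hlam g h z,
      (hn.eq_fst_mul_snd hmu a g z).symm.trans (hn.eq_snd_mul_fst hχ hlam a g z),
      hn.eq_snd_mul_fst hχ hlam a g z⟩
  · intro h
    exact isJointCocycle_of_eq_snd_mul_fst hmu hcomm (fun a b z => (h a b 0 0 z).1)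
      (fun g h' z => (h 1 1 g h' z).2.1) (fun a g z => (h a a g g z).2.2.1)
      (fun a g z => (h a a g g z).2.2.2)

end OuterCocycle

/-- Outer conjugation cocycles for the joint group `Γ × G` are equivalent to compatible pairs
of cocycles `(l, m)`:  a unitary-valued function `n` on `Γ × G × G/N` satisfies the joint
cocycle identity (1) iff the functions `l(a,z) := n(a,0,z)` and `m(g,z) := n(1,g,z)`
satisfy the three cocycle/compatibility identities and reconstruct `n` as in (2).
Here `U = unitary (H →L[ℂ] H)` and `K = U ⧸ center U` acts on `U` by conjugation. -/
theorem statement1 {H : Type*} [NormedAddCommGroup H] [InnerProductSpace ℂ H] [CompleteSpace H]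
    {Γ G : Type*} [Group Γ] [AddCommGroup G] (N : AddSubgroup G)
    (χ : Γ → G ⧸ N) (hχ : ∀ a b : Γ, χ (a * b) = χ a + χ b)
    (lam : Γ → G ⧸ N →
      (unitary (H →L[ℂ] H) ⧸ Subgroup.center (unitary (H →L[ℂ] H))))
    (mu : G → G ⧸ N →
      (unitary (H →L[ℂ] H) ⧸ Subgroup.center (unitary (H →L[ℂ] H))))
    (hlam : ∀ (a b : Γ) (z : G ⧸ N), lam (b * a) z = lam b (z + χ a) * lam a z)
    (hmu : ∀ (g h : G) (z : G ⧸ N), mu (g + h) z = mu g (z + (h : G ⧸ N)) * mu h z)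
    (hcomm : ∀ (a : Γ) (g : G) (z : G ⧸ N),
      lam a (z + (g : G ⧸ N)) * mu g z = mu g (z + χ a) * lam a z)
    (n : Γ → G → G ⧸ N → unitary (H →L[ℂ] H)) :
    (∀ (x y : Γ × G) (z : G ⧸ N),
        n (y.1 * x.1) (y.2 + x.2) z =
          projUnitaryConj H (lam x.1 (z + (x.2 : G ⧸ N)) * mu x.2 z)⁻¹
              (n y.1 y.2 (z + χ x.1 + (x.2 : G ⧸ N))) *
            n x.1 x.2 z) ↔
      (∀ (a b : Γ) (g h : G) (z : G ⧸ N),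
        n (b * a) 0 z =
            projUnitaryConj H (lam a z)⁻¹ (n b 0 (z + χ a)) * n a 0 z ∧
        n 1 (g + h) z =
            projUnitaryConj H (mu g z)⁻¹ (n 1 h (z + (g : G ⧸ N))) * n 1 g z ∧
        projUnitaryConj H (lam a z)⁻¹ (n 1 g (z + χ a)) * n a 0 z =
            projUnitaryConj H (mu g z)⁻¹ (n a 0 (z + (g : G ⧸ N))) * n 1 g z ∧
        n a g z =
            projUnitaryConj H (mu g z)⁻¹ (n a 0 (z + (g : G ⧸ N))) * n 1 g z) := by
  exact OuterCocycle.isJointCocycle_iff (α := projUnitaryConj H) (π := QuotientAddGroup.mk' N)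
    hχ hlam hmu hcomm
end

section
/- Let ψ : Γ × Γ × G/N → U(1) and φ : Γ × G × G/N → U(1) satisfy, for all a, b ∈ Γ, g, h ∈ G, z ∈ G/N: (R2) φ(b, g, z + χ(a)) · φ(ba, g, z)⁻¹ · φ(a, g, z) = ψ(a, b, z + π(g)) · ψ(a, b, z)⁻¹, and (R3) φ(a, g + h, z) = φ(a, h, z + π(g)) · φ(a, g, z). Then: (i) for every a ∈ Γ, n ∈ N and z ∈ G/N one has φ(a, n, z) = φ(a, n, 0); (ii) for every a ∈ Γ the map N → U(1), n ↦ φ(a, n, 0)⁻¹, is a group homomorphism; (iii) the resulting map χ̂₀ : Γ → Hom(N, U(1)), defined by χ̂₀(a)(n) := φ(a, n, 0)⁻¹, is a group homomorphism. -/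
/-!
Relation (R3) says that each `φ a` is a cocycle for the translation action of `G` on `G/N`.
Since elements of `N` act trivially on `G/N`, comparing the two expansions of
`φ a (n + g) = φ a (g + n)` shows that `φ a n` is a constant function of `z` for `n ∈ N`;
(R3) then makes `n ↦ φ a n 0` multiplicative. Finally, for `n ∈ N` the right-hand side of (R2)
is `ψ(a, b, z) ψ(a, b, z)⁻¹ = 1`, and constancy turns (R2) into `φ (b a) n = φ b n · φ a n`.
-/

namespace QuotientAddGroup

variable {G : Type*} [AddCommGroup G] {N : AddSubgroup G}

section Cocycle

variable {M : Type*} [CancelCommMonoid M] {f : G → G ⧸ N → M}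
  (hf : ∀ (g h : G) (z : G ⧸ N), f (g + h) z = f h (z + g) * f g z)
include hf

theorem cocycle_add_mk_of_mem {n : G} (hn : n ∈ N) (g : G) (z : G ⧸ N) :
    f n (z + g) = f n z := by
  have hn₀ : ((n : G) : G ⧸ N) = 0 := (eq_zero_iff n).mpr hn
  have h := hf g n z
  rw [add_comm g n, hf n g z, hn₀, add_zero, mul_comm] at h
  exact (mul_right_cancel h).symm

theorem cocycle_eq_zero_of_mem {n : G} (hn : n ∈ N) (z : G ⧸ N) : f n z = f n 0 := by
  obtain ⟨g, rfl⟩ := mk_surjective z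
  simpa only [zero_add] using cocycle_add_mk_of_mem hf hn g 0

theorem cocycle_add_of_mem (n : G) {n' : G} (hn' : n' ∈ N) (z : G ⧸ N) :
    f (n + n') z = f n z * f n' z := by
  rw [hf, cocycle_add_mk_of_mem hf hn' n z, mul_comm]

end Cocycle

theorem cocycle_mul_of_mem {M : Type*} [CommGroup M] {Γ : Type*} [Mul Γ] {χ : Γ → G ⧸ N}
    {ψ : Γ → Γ → G ⧸ N → M} {φ : Γ → G → G ⧸ N → M}
    (R2 : ∀ (a b : Γ) (g : G) (z : G ⧸ N),
      φ b g (z + χ a) * (φ (b * a) g z)⁻¹ * φ a g z = ψ a b (z + (g : G ⧸ N)) * (ψ a b z)⁻¹)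
    (R3 : ∀ (a : Γ) (g h : G) (z : G ⧸ N), φ a (g + h) z = φ a h (z + (g : G ⧸ N)) * φ a g z)
    (a b : Γ) {n : G} (hn : n ∈ N) (z : G ⧸ N) :
    φ (b * a) n z = φ b n z * φ a n z := by
  have h := R2 a b n z
  rw [(eq_zero_iff n).mpr hn, add_zero, mul_inv_cancel,
    cocycle_eq_zero_of_mem (R3 b) hn (z + χ a), ← cocycle_eq_zero_of_mem (R3 b) hn z,
    mul_right_comm, mul_inv_eq_one] at h
  exact h.symm

end QuotientAddGroup

theorem statement2_general
    {Γ : Type*} [Group Γ]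
    {G : Type*} [AddCommGroup G]
    (N : AddSubgroup G)
    (χ : Γ → G ⧸ N)
    (ψ : Γ → Γ → (G ⧸ N) → Circle) (φ : Γ → G → (G ⧸ N) → Circle)
    (R2 : ∀ (a b : Γ) (g : G) (z : G ⧸ N),
      φ b g (z + χ a) * (φ (b * a) g z)⁻¹ * φ a g z = ψ a b (z + (g : G ⧸ N)) * (ψ a b z)⁻¹)
    (R3 : ∀ (a : Γ) (g h : G) (z : G ⧸ N),
      φ a (g + h) z = φ a h (z + (g : G ⧸ N)) * φ a g z) :
    -- (i)
    (∀ (a : Γ) (n : N) (z : G ⧸ N), φ a (n : G) z = φ a (n : G) 0) ∧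
    -- (ii)
    (∀ (a : Γ) (n n' : N),
      (φ a ((n + n' : N) : G) 0)⁻¹ = (φ a (n : G) 0)⁻¹ * (φ a (n' : G) 0)⁻¹) ∧
    -- (iii)
    (∀ (a b : Γ) (n : N),
      (φ (a * b) (n : G) 0)⁻¹ = (φ a (n : G) 0)⁻¹ * (φ b (n : G) 0)⁻¹) := by
  refine ⟨fun a n z => QuotientAddGroup.cocycle_eq_zero_of_mem (R3 a) n.2 z,
    fun a n n' => ?_, fun a b n => ?_⟩
  · rw [AddSubgroup.coe_add, QuotientAddGroup.cocycle_add_of_mem (R3 a) n n'.2, mul_inv]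
  · rw [QuotientAddGroup.cocycle_mul_of_mem R2 R3 b a n.2, mul_inv]

/-- `Γ` is a finite group, `G` a second-countable locally compact Hausdorff abelian topological
group, `N ≤ G` a discrete subgroup with `G/N` compact, `χ : Γ → G/N` a homomorphism, and
`ψ : Γ × Γ × G/N → U(1)`, `φ : Γ × G × G/N → U(1)` satisfy (R2) and (R3).  Then
(i)   `φ(a, n, z) = φ(a, n, 0)` for `n ∈ N`;
(ii)  for each `a`, the map `N → U(1)`, `n ↦ φ(a, n, 0)⁻¹`, is a group homomorphism;
(iii) the map `χ̂₀ : Γ → Hom(N, U(1))`, `χ̂₀(a)(n) := φ(a, n, 0)⁻¹`, is a group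
homomorphism. -/
theorem statement2
    {Γ : Type*} [Group Γ] [Finite Γ]
    {G : Type*} [AddCommGroup G] [TopologicalSpace G] [IsTopologicalAddGroup G]
      [LocallyCompactSpace G] [SecondCountableTopology G] [T2Space G]
    (N : AddSubgroup G) [DiscreteTopology N] [CompactSpace (G ⧸ N)]
    (χ : Γ → G ⧸ N) (hχ : ∀ a b : Γ, χ (a * b) = χ a + χ b)
    (ψ : Γ → Γ → (G ⧸ N) → Circle) (φ : Γ → G → (G ⧸ N) → Circle)
    (R2 : ∀ (a b : Γ) (g : G) (z : G ⧸ N),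
      φ b g (z + χ a) * (φ (b * a) g z)⁻¹ * φ a g z = ψ a b (z + (g : G ⧸ N)) * (ψ a b z)⁻¹)
    (R3 : ∀ (a : Γ) (g h : G) (z : G ⧸ N),
      φ a (g + h) z = φ a h (z + (g : G ⧸ N)) * φ a g z) :
    -- (i)
    (∀ (a : Γ) (n : N) (z : G ⧸ N), φ a (n : G) z = φ a (n : G) 0) ∧
    -- (ii)
    (∀ (a : Γ) (n n' : N),
      (φ a ((n + n' : N) : G) 0)⁻¹ = (φ a (n : G) 0)⁻¹ * (φ a (n' : G) 0)⁻¹) ∧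
    -- (iii)
    (∀ (a b : Γ) (n : N),
      (φ (a * b) (n : G) 0)⁻¹ = (φ a (n : G) 0)⁻¹ * (φ b (n : G) 0)⁻¹) :=
  statement2_general N χ ψ φ R2 R3
end

section
/- Let ψ : Γ × Γ × G/N → U(1) and φ : Γ × G × G/N → U(1) satisfy, for all a, b, c ∈ Γ, g, h ∈ G, z ∈ G/N: (R1) ψ(b, c, z + χ(a)) · ψ(ba, c, z)⁻¹ · ψ(a, cb, z) · ψ(a, b, z)⁻¹ = 1; (R2) φ(b, g, z + χ(a)) · φ(ba, g, z)⁻¹ · φ(a, g, z) = ψ(a, b, z + π(g)) · ψ(a, b, z)⁻¹; (R3) φ(a, g + h, z) = φ(a, h, z + π(g)) · φ(a, g, z). Let χ̄ : Γ → G be any lift of χ (π ∘ χ̄ = χ) and let χ̂ : Γ → Ĝ/N⊥ be a group homomorphism such that ⟨χ̂(a), n⟩ = φ(a, n, 0)⁻¹ for all a ∈ Γ and n ∈ N. Define ψ̂(a, b, ẑ) := ψ(a, b, 0) · φ(b, χ̄(a), 0)⁻¹ · ⟨χ̂(ba) + ẑ, χ̄(ba) − χ̄(a) − χ̄(b)⟩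 for ẑ ∈ Ĝ/N⊥ (note χ̄(ba) − χ̄(a) − χ̄(b) ∈ N), and φ̂(a, ĝ, ẑ) := ⟨ĝ, χ̄(a)⟩⁻¹ for ĝ ∈ Ĝ. Then for all a, b, c ∈ Γ, ĝ, ĥ ∈ Ĝ, ẑ ∈ Ĝ/N⊥: (D1) ψ̂(b, c, ẑ + χ̂(a)) · ψ̂(ba, c, ẑ)⁻¹ · ψ̂(a, cb, ẑ) · ψ̂(a, b, ẑ)⁻¹ = 1; (D2) ψ̂(a, b, ẑ + π̂(ĝ)) · ψ̂(a, b, ẑ)⁻¹ = φ̂(b, ĝ, ẑ + χ̂(a)) · φ̂(ba, ĝ, ẑ)⁻¹ · φ̂(a, ĝ, ẑ); (D3) φ̂(a, ĝ + ĥ, ẑ) = φ̂(a, ĥ, ẑ + π̂(ĝ)) · φ̂(a, ĝ, ẑ). -/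
/-!
Write `∂_κ f` for the twisted coboundary appearing in (R1) and (D1). It is multiplicative in `f`,
so `∂ψ̂` splits over the three factors of `ψ̂`. With `η(a,b) = χ̄(ba) - χ̄(a) - χ̄(b) ∈ N`:
by (R1) the factor `ψ(a,b,0)` contributes `ψ(b,c,0) / ψ(b,c,χ(a))`; by (R3) and (R2) the factor
`φ(b,χ̄(a),0)⁻¹` contributes the inverse of that times `φ(c,η(a,b),0)`; and since `η` is a
2-cocycle, the pairing factor contributes `⟨χ̂(c), η(a,b)⟩ = φ(c,η(a,b),0)⁻¹`.
(D2) and (D3) are instances of the biadditivity of the pairing.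
-/

section TwistedCoboundary

variable {Γ X M : Type*} [Group Γ] [CommGroup M]

def twistedCoboundary [Add X] (κ : Γ → X) (f : Γ → Γ → X → M) (a b c : Γ) (x : X) : M :=
  f b c (x + κ a) * (f (b * a) c x)⁻¹ * f a (c * b) x * (f a b x)⁻¹

theorem twistedCoboundary_mul [Add X] (κ : Γ → X) (f g : Γ → Γ → X → M) (a b c : Γ) (x : X) :
    twistedCoboundary κ (f * g) a b c x =
      twistedCoboundary κ f a b c x * twistedCoboundary κ g a b c x := by
  simp only [twistedCoboundary, Pi.mul_apply, mul_inv]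
  ac_rfl

theorem twistedCoboundary_fix_basepoint [Add X] {Y : Type*} [Add Y] (κ : Γ → X) (κ' : Γ → Y)
    (f : Γ → Γ → X → M) (a b c : Γ) (x : X) (y : Y) :
    twistedCoboundary κ' (fun a b _ => f a b x) a b c y =
      f b c x / f b c (x + κ a) * twistedCoboundary κ f a b c x := by
  simp only [twistedCoboundary, div_eq_mul_inv]
  group

theorem twistedCoboundary_pairing [AddCommGroup X] {A : Type*} [AddCommGroup A] (P : X → A → M)
    (hP₁ : ∀ x y n, P (x + y) n = P x n * P y n) (hP₂ : ∀ x n m, P x (n + m) = P x n * P x m)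
    (κ : Γ → X) (hκ : ∀ a b, κ (a * b) = κ a + κ b)
    (η : Γ → Γ → A) (hη : ∀ a b c, η b c + η a (c * b) = η (b * a) c + η a b) (a b c : Γ) (x : X) :
    twistedCoboundary κ (fun a b y => P (κ (b * a) + y) (η a b)) a b c x = P (κ c) (η a b) := by
  have hcb : κ (c * b) + (x + κ a) = κ c + (κ (b * a) + x) := by rw [hκ, hκ]; abel
  have hcba : κ (c * (b * a)) + x = κ c + (κ (b * a) + x) := by rw [hκ, add_assoc]
  have hcba' : κ (c * b * a) + x = κ c + (κ (b * a) + x) := by rw [mul_assoc, hcba]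
  simp only [twistedCoboundary]
  rw [hcb, hcba, hcba', mul_right_comm (P _ (η b c)), ← hP₂, hη, hP₂, mul_inv_cancel_comm, hP₁,
    mul_inv_cancel_right]

end TwistedCoboundary

theorem map_sub_eq_div_of_map_add {B M : Type*} [AddGroup B] [Group M] {f : B → M}
    (hf : ∀ x y, f (x + y) = f x * f y) (x y : B) : f (x - y) = f x / f y := by
  rw [eq_div_iff_mul_eq', ← hf, sub_add_cancel]

theorem twistedCoboundary_inv_apply_lift {Γ G X M : Type*} [Group Γ] [AddCommGroup G] [Add X]
    [CommGroup M] {N : AddSubgroup G} {χ : Γ → G ⧸ N} {ψ : Γ → Γ → G ⧸ N → M}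
    {φ : Γ → G → G ⧸ N → M}
    (R2 : ∀ (a b : Γ) (g : G) (z : G ⧸ N),
      φ b g (z + χ a) * (φ (b * a) g z)⁻¹ * φ a g z = ψ a b (z + (g : G ⧸ N)) * (ψ a b z)⁻¹)
    (R3 : ∀ (a : Γ) (g h : G) (z : G ⧸ N),
      φ a (g + h) z = φ a h (z + (g : G ⧸ N)) * φ a g z)
    {χbar : Γ → G} (hχbar : ∀ a : Γ, ((χbar a : G) : G ⧸ N) = χ a) (κ : Γ → X) (a b c : Γ)
    (hη : χbar (b * a) - χbar a - χbar b ∈ N) (x : X) :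
    twistedCoboundary κ (fun a b (_ : X) => (φ b (χbar a) 0)⁻¹) a b c x =
      ψ b c (χ a) / ψ b c 0 * φ c (χbar (b * a) - χbar a - χbar b) 0 := by
  set η := χbar (b * a) - χbar a - χbar b with hη_def
  have hsplit : φ c (χbar (b * a)) 0 = φ c (χbar a) (χ b) * φ c (χbar b) 0 * φ c η 0 := by
    have hφ := R3 c η (χbar b + χbar a) 0
    rwa [(QuotientAddGroup.eq_zero_iff η).mpr hη, zero_add, R3 c (χbar b), zero_add, hχbar,
      show η + (χbar b + χbar a) = χbar (b * a) by rw [hη_def]; abel] at hφ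
  have hR2 := R2 b c (χbar a) 0
  rw [zero_add, zero_add, hχbar] at hR2
  simp only [twistedCoboundary, inv_inv]
  rw [hsplit, mul_comm (φ c (χbar a) (χ b)), mul_assoc (φ c (χbar b) 0), inv_mul_cancel_left,
    div_eq_mul_inv, ← hR2]
  ac_rfl

theorem statement3_general
    {Γ : Type*} [Group Γ]
    {G : Type*} [AddCommGroup G]
    (N : AddSubgroup G)
    -- the Pontryagin dual of `G`, abstracted by its pairing with `G`
    {Ghat : Type*} [AddCommGroup Ghat]
    (e : Ghat → G → Circle)
    (he₁ : ∀ (x y : Ghat) (g : G), e (x + y) g = e x g * e y g)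
    (he₂ : ∀ (x : Ghat) (g h : G), e x (g + h) = e x g * e x h)
    -- the annihilator `N⊥` of `N`
    (Nperp : AddSubgroup Ghat)
    -- the well-defined pairing of `Ĝ/N⊥` with `N`
    (eQN : Ghat ⧸ Nperp → N → Circle)
    (heQN : ∀ (x : Ghat) (n : N), eQN (x : Ghat ⧸ Nperp) n = e x (n : G))
    -- the base homomorphism `χ` and its dual `χ̂`
    (χ : Γ → G ⧸ N)
    (χhat : Γ → Ghat ⧸ Nperp) (hχhat : ∀ a b : Γ, χhat (a * b) = χhat a + χhat b)
    -- the cocycle data `(ψ, φ, 1)` of a dualisable dynamical triple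
    (ψ : Γ → Γ → (G ⧸ N) → Circle) (φ : Γ → G → (G ⧸ N) → Circle)
    (R1 : ∀ (a b c : Γ) (z : G ⧸ N),
      ψ b c (z + χ a) * (ψ (b * a) c z)⁻¹ * ψ a (c * b) z * (ψ a b z)⁻¹ = 1)
    (R2 : ∀ (a b : Γ) (g : G) (z : G ⧸ N),
      φ b g (z + χ a) * (φ (b * a) g z)⁻¹ * φ a g z = ψ a b (z + (g : G ⧸ N)) * (ψ a b z)⁻¹)
    (R3 : ∀ (a : Γ) (g h : G) (z : G ⧸ N),
      φ a (g + h) z = φ a h (z + (g : G ⧸ N)) * φ a g z)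
    -- `χ̂` is determined by `⟨χ̂(a), n⟩ = φ(a, n, 0)⁻¹`
    (hpair : ∀ (a : Γ) (n : N), eQN (χhat a) n = (φ a (n : G) 0)⁻¹)
    -- a lift `χ̄` of `χ`
    (χbar : Γ → G) (hχbar : ∀ a : Γ, ((χbar a : G) : G ⧸ N) = χ a)
    (hη : ∀ a b : Γ, χbar (b * a) - χbar a - χbar b ∈ N)
    -- the dual cocycle data `ψ̂` and `φ̂`
    (ψhat : Γ → Γ → (Ghat ⧸ Nperp) → Circle)
    (hψhat : ∀ (a b : Γ) (zh : Ghat ⧸ Nperp),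
      ψhat a b zh = ψ a b 0 * (φ b (χbar a) 0)⁻¹ *
        eQN (χhat (b * a) + zh) ⟨χbar (b * a) - χbar a - χbar b, hη a b⟩)
    (φhat : Γ → Ghat → (Ghat ⧸ Nperp) → Circle)
    (hφhat : ∀ (a : Γ) (gh : Ghat) (zh : Ghat ⧸ Nperp), φhat a gh zh = (e gh (χbar a))⁻¹) :
    -- (D1)
    (∀ (a b c : Γ) (zh : Ghat ⧸ Nperp),
      ψhat b c (zh + χhat a) * (ψhat (b * a) c zh)⁻¹ * ψhat a (c * b) zh * (ψhat a b zh)⁻¹ = 1) ∧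
    -- (D2)
    (∀ (a b : Γ) (gh : Ghat) (zh : Ghat ⧸ Nperp),
      ψhat a b (zh + (gh : Ghat ⧸ Nperp)) * (ψhat a b zh)⁻¹ =
        φhat b gh (zh + χhat a) * (φhat (b * a) gh zh)⁻¹ * φhat a gh zh) ∧
    -- (D3)
    (∀ (a : Γ) (gh hh : Ghat) (zh : Ghat ⧸ Nperp),
      φhat a (gh + hh) zh = φhat a hh (zh + (gh : Ghat ⧸ Nperp)) * φhat a gh zh) := by
  have eQN_add_left : ∀ (u v : Ghat ⧸ Nperp) (n : N), eQN (u + v) n = eQN u n * eQN v n := by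
    intro u v n
    induction u using QuotientAddGroup.induction_on
    induction v using QuotientAddGroup.induction_on
    rw [← QuotientAddGroup.mk_add, heQN, heQN, heQN, he₁]
  have eQN_add_right : ∀ (u : Ghat ⧸ Nperp) (n m : N), eQN u (n + m) = eQN u n * eQN u m := by
    intro u n m
    induction u using QuotientAddGroup.induction_on
    rw [heQN, heQN, heQN, AddSubgroup.coe_add, he₂]
  refine ⟨fun a b c zh => ?_, fun a b gh zh => ?_, fun a gh hh zh => ?_⟩
  · have hψhat_split : ψhat = (fun a b _ => ψ a b 0) * (fun a b _ => (φ b (χbar a) 0)⁻¹) *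
        fun a b zh => eQN (χhat (b * a) + zh) ⟨_, hη a b⟩ :=
      funext₃ hψhat
    change twistedCoboundary χhat ψhat a b c zh = 1
    rw [hψhat_split, twistedCoboundary_mul, twistedCoboundary_mul,
      twistedCoboundary_fix_basepoint χ, show twistedCoboundary χ ψ a b c 0 = 1 from R1 a b c 0,
      zero_add, twistedCoboundary_inv_apply_lift R2 R3 hχbar _ a b c (hη a b),
      twistedCoboundary_pairing eQN eQN_add_left eQN_add_right χhat hχhat _
        (fun a b c => Subtype.ext (by simp only [AddSubgroup.coe_add, mul_assoc]; abel)), hpair]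
    simp only [div_eq_mul_inv]
    group
  · have hshift : ψhat a b (zh + gh) = ψhat a b zh * e gh (χbar (b * a) - χbar a - χbar b) := by
      rw [hψhat, hψhat, ← add_assoc, eQN_add_left, heQN, ← mul_assoc]
    rw [hshift, mul_inv_cancel_comm, hφhat, hφhat, hφhat, map_sub_eq_div_of_map_add (he₂ gh),
      map_sub_eq_div_of_map_add (he₂ gh)]
    simp only [div_eq_mul_inv, inv_inv]
    ac_rfl
  · rw [hφhat, hφhat, hφhat, he₁, mul_inv, mul_comm]

/-- `G` is a second-countable locally compact Hausdorff abelian topological group, `N ≤ G`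
discrete with `G/N` compact.  The Pontryagin dual `Ĝ` is modelled by an abelian group
`Ghat` together with a biadditive pairing `e : Ĝ × G → U(1)`, its annihilator subgroup
`N⊥ = {x | ∀ n ∈ N, ⟨x, n⟩ = 1}`, and the induced (well-defined) pairing
`eQN : Ĝ/N⊥ × N → U(1)` descending `e`.

Given a dualisable dynamical-triple cocycle `(ψ, φ, 1)` (hypotheses (R1), (R2), (R3)),
a lift `χ̄` of `χ`, and the dual base homomorphism `χ̂` determined by
`⟨χ̂(a), n⟩ = φ(a, n, 0)⁻¹`, the dual data
`ψ̂(a,b,zh) := ψ(a,b,0)·φ(b,χ̄(a),0)⁻¹·⟨χ̂(ba)+zh, χ̄(ba)−χ̄(a)−χ̄(b)⟩` and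
`φ̂(a,gh,zh) := ⟨gh, χ̄(a)⟩⁻¹` again satisfy the total cocycle conditions
(D1), (D2), (D3). -/
theorem statement3
    {Γ : Type*} [Group Γ] [Finite Γ]
    {G : Type*} [AddCommGroup G] [TopologicalSpace G] [IsTopologicalAddGroup G]
      [LocallyCompactSpace G] [SecondCountableTopology G] [T2Space G]
    (N : AddSubgroup G) [DiscreteTopology N] [CompactSpace (G ⧸ N)]
    -- the Pontryagin dual of `G`, abstracted by its pairing with `G`
    {Ghat : Type*} [AddCommGroup Ghat]
    (e : Ghat → G → Circle)
    (he₁ : ∀ (x y : Ghat) (g : G), e (x + y) g = e x g * e y g)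
    (he₂ : ∀ (x : Ghat) (g h : G), e x (g + h) = e x g * e x h)
    -- the annihilator `N⊥` of `N`
    (Nperp : AddSubgroup Ghat)
    (hNperp : ∀ x : Ghat, x ∈ Nperp ↔ ∀ n ∈ N, e x (n : G) = 1)
    -- the well-defined pairing of `Ĝ/N⊥` with `N`
    (eQN : Ghat ⧸ Nperp → N → Circle)
    (heQN : ∀ (x : Ghat) (n : N), eQN (x : Ghat ⧸ Nperp) n = e x (n : G))
    -- the base homomorphism `χ` and its dual `χ̂`
    (χ : Γ → G ⧸ N) (hχ : ∀ a b : Γ, χ (a * b) = χ a + χ b)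
    (χhat : Γ → Ghat ⧸ Nperp) (hχhat : ∀ a b : Γ, χhat (a * b) = χhat a + χhat b)
    -- the cocycle data `(ψ, φ, 1)` of a dualisable dynamical triple
    (ψ : Γ → Γ → (G ⧸ N) → Circle) (φ : Γ → G → (G ⧸ N) → Circle)
    (R1 : ∀ (a b c : Γ) (z : G ⧸ N),
      ψ b c (z + χ a) * (ψ (b * a) c z)⁻¹ * ψ a (c * b) z * (ψ a b z)⁻¹ = 1)
    (R2 : ∀ (a b : Γ) (g : G) (z : G ⧸ N),
      φ b g (z + χ a) * (φ (b * a) g z)⁻¹ * φ a g z = ψ a b (z + (g : G ⧸ N)) * (ψ a b z)⁻¹)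
    (R3 : ∀ (a : Γ) (g h : G) (z : G ⧸ N),
      φ a (g + h) z = φ a h (z + (g : G ⧸ N)) * φ a g z)
    -- `χ̂` is determined by `⟨χ̂(a), n⟩ = φ(a, n, 0)⁻¹`
    (hpair : ∀ (a : Γ) (n : N), eQN (χhat a) n = (φ a (n : G) 0)⁻¹)
    -- a lift `χ̄` of `χ`
    (χbar : Γ → G) (hχbar : ∀ a : Γ, ((χbar a : G) : G ⧸ N) = χ a)
    (hη : ∀ a b : Γ, χbar (b * a) - χbar a - χbar b ∈ N)
    -- the dual cocycle data `ψ̂` and `φ̂`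
    (ψhat : Γ → Γ → (Ghat ⧸ Nperp) → Circle)
    (hψhat : ∀ (a b : Γ) (zh : Ghat ⧸ Nperp),
      ψhat a b zh = ψ a b 0 * (φ b (χbar a) 0)⁻¹ *
        eQN (χhat (b * a) + zh) ⟨χbar (b * a) - χbar a - χbar b, hη a b⟩)
    (φhat : Γ → Ghat → (Ghat ⧸ Nperp) → Circle)
    (hφhat : ∀ (a : Γ) (gh : Ghat) (zh : Ghat ⧸ Nperp), φhat a gh zh = (e gh (χbar a))⁻¹) :
    -- (D1)
    (∀ (a b c : Γ) (zh : Ghat ⧸ Nperp),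
      ψhat b c (zh + χhat a) * (ψhat (b * a) c zh)⁻¹ * ψhat a (c * b) zh * (ψhat a b zh)⁻¹ = 1) ∧
    -- (D2)
    (∀ (a b : Γ) (gh : Ghat) (zh : Ghat ⧸ Nperp),
      ψhat a b (zh + (gh : Ghat ⧸ Nperp)) * (ψhat a b zh)⁻¹ =
        φhat b gh (zh + χhat a) * (φhat (b * a) gh zh)⁻¹ * φhat a gh zh) ∧
    -- (D3)
    (∀ (a : Γ) (gh hh : Ghat) (zh : Ghat ⧸ Nperp),
      φhat a (gh + hh) zh = φhat a hh (zh + (gh : Ghat ⧸ Nperp)) * φhat a gh zh) :=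
  statement3_general N e he₁ he₂ Nperp eQN heQN χ χhat hχhat ψ φ R1 R2 R3 hpair χbar hχbar hη ψhat
    hψhat φhat hφhat
end

section
/- Assume the hypotheses (R1), (R2), (R3) on ψ, φ, the lift χ̄ of χ, and the homomorphism χ̂ : Γ → Ĝ/N⊥ with ⟨χ̂(a), n⟩ = φ(a, n, 0)⁻¹, and define ψ̂ and φ̂ as in the dual-cocycle construction: ψ̂(a, b, ẑ) := ψ(a, b, 0) · φ(b, χ̄(a), 0)⁻¹ · ⟨χ̂(ba) + ẑ, χ̄(ba) − χ̄(a) − χ̄(b)⟩ and φ̂(a, ĝ, ẑ) := ⟨ĝ, χ̄(a)⟩⁻¹. Let χ̂̄ : Γ → Ĝ be any lift of χ̂ (π̂ ∘ χ̂̄ = χ̂). Then: (a) for all a ∈ Γ, n⊥ ∈ N⊥ and ẑ ∈ Ĝ/N⊥ one has φ̂(a, n⊥, ẑ)⁻¹ = ⟨n⊥, χ(a)⟩, i.e. the double-dual base homomorphism equals χ; (b) defining ψ̂̂(a, b, z) := ψ̂(a, b, 0) · φ̂(b, χ̂̄(a), 0)⁻¹ · ⟨χ̂̄(ba) − χ̂̄(a)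 − χ̂̄(b), χ(ba) + z⟩ for z ∈ G/N (note χ̂̄(ba) − χ̂̄(a) − χ̂̄(b) ∈ N⊥) and φ̂̂(a, g, z) := ⟨χ̂̄(a), g⟩⁻¹, there exists a function ν₁ : Γ × G/N → U(1) such that for all a, b ∈ Γ, g ∈ G, z ∈ G/N: ψ̂̂(a, b, z) = ψ(a, b, z) · ν₁(b, z + χ(a)) · ν₁(ba, z)⁻¹ · ν₁(a, z) and φ̂̂(a, g, z) = φ(a, g, z) · ν₁(a, z + π(g)) · ν₁(a, z)⁻¹. -/
/-!
Part (a) is immediate from `φ̂(a, ĝ, ẑ) = ⟨ĝ, χ̄(a)⟩⁻¹`.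

For (b), fix `a`. By (R3) and the defining property `⟨χ̂̄(a), n⟩ = φ(a, n, 0)⁻¹` of `χ̂`, the
potential `θ(g) = φ(a, g, 0) ⟨χ̂̄(a), g⟩` satisfies `θ(h + g) = φ(a, g, π h) θ(h) ⟨χ̂̄(a), g⟩` and
is `N`-periodic, so it descends to `G/N`; with the constant correction `⟨χ̂̄(a), χ̄(a)⟩` its inverse
is `ν₁(a, ·)`, and the `φ`-equation is the transformation law of `θ`. Both `(ψ̂̂, φ̂̂)` and
`(ψ, φ) · ∂ν₁` satisfy (R2) with the same second component, and (R2) determines the first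
component from its values at `z = 0`. At `z = 0` the `ψ`-equation is an identity for the
bimultiplicative pairing, which needs only `⟨χ̂̄(ba) − χ̂̄(a) − χ̂̄(b), χ̄(ba) − χ̄(a) − χ̄(b)⟩ = 1`,
i.e. that `N⊥` annihilates `N`.
-/

section Cocycle

variable {Γ Z G M : Type*} [Group Γ] [AddCommGroup Z] [CommGroup M]

def SatisfiesR2 (χ : Γ → Z) (π : G → Z) (ψ : Γ → Γ → Z → M) (φ : Γ → G → Z → M) : Prop :=
  ∀ a b g z, φ b g (z + χ a) * (φ (b * a) g z)⁻¹ * φ a g z = ψ a b (z + π g) * (ψ a b z)⁻¹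

def coboundaryPsi (χ : Γ → Z) (ν : Γ → Z → M) : Γ → Γ → Z → M :=
  fun a b z => ν b (z + χ a) * (ν (b * a) z)⁻¹ * ν a z

def coboundaryPhi (π : G → Z) (ν : Γ → Z → M) : Γ → G → Z → M :=
  fun a g z => ν a (z + π g) * (ν a z)⁻¹

variable {χ : Γ → Z} {π : G → Z}

theorem SatisfiesR2.mul {ψ₁ ψ₂ : Γ → Γ → Z → M} {φ₁ φ₂ : Γ → G → Z → M}
    (h₁ : SatisfiesR2 χ π ψ₁ φ₁) (h₂ : SatisfiesR2 χ π ψ₂ φ₂) :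
    SatisfiesR2 χ π (ψ₁ * ψ₂) (φ₁ * φ₂) := by
  intro a b g z
  convert congrArg₂ (· * ·) (h₁ a b g z) (h₂ a b g z) using 1 <;>
    simp only [Pi.mul_apply, mul_inv] <;> ac_rfl

theorem satisfiesR2_coboundary (ν : Γ → Z → M) :
    SatisfiesR2 χ π (coboundaryPsi χ ν) (coboundaryPhi π ν) := by
  intro a b g z
  simp only [coboundaryPsi, coboundaryPhi, add_right_comm z (χ a) (π g)]
  apply Additive.ofMul.injective
  simp only [ofMul_mul, ofMul_inv]
  abel

theorem SatisfiesR2.eq_of_forall_eq_zero (hπ : Function.Surjective π)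
    {ψ₁ ψ₂ : Γ → Γ → Z → M} {φ : Γ → G → Z → M}
    (h₁ : SatisfiesR2 χ π ψ₁ φ) (h₂ : SatisfiesR2 χ π ψ₂ φ) (h₀ : ∀ a b, ψ₁ a b 0 = ψ₂ a b 0) :
    ψ₁ = ψ₂ := by
  ext a b z
  obtain ⟨g, rfl⟩ := hπ z
  have h := (h₁ a b g 0).symm.trans (h₂ a b g 0)
  rwa [zero_add, h₀, mul_left_inj] at h

end Cocycle

section Potential

variable {G M : Type*} [AddCommGroup G] [CommGroup M] {N : AddSubgroup G}
  (φ : G → G ⧸ N → M) (ε : G → M)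

def potential (g : G) : M := φ g 0 * ε g

noncomputable def descendedPotential (k : M) (z : G ⧸ N) : M := (potential φ ε z.out * k)⁻¹

variable {φ ε} (hR3 : ∀ (g h : G) (z : G ⧸ N), φ (g + h) z = φ h (z + g) * φ g z)
  (hε : ∀ g h, ε (g + h) = ε g * ε h)
include hR3 hε

theorem potential_add (g h : G) : potential φ ε (g + h) = φ h g * potential φ ε g * ε h := by
  simp only [potential, hR3 g h 0, hε, zero_add]
  apply Additive.ofMul.injective
  simp only [ofMul_mul]
  abel

theorem potential_zero : potential φ ε 0 = 1 := by
  have h := potential_add hR3 hε 0 0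
  rw [add_zero, QuotientAddGroup.mk_zero, mul_right_comm, ← potential] at h
  exact left_eq_mul.mp h

theorem potential_add_of_mem (hN : ∀ n ∈ N, ε n = (φ n 0)⁻¹) (g : G) {n : G} (hn : n ∈ N) :
    potential φ ε (g + n) = potential φ ε g := by
  rw [add_comm, potential_add hR3 hε, (QuotientAddGroup.eq_zero_iff n).mpr hn, potential, hN n hn,
    mul_inv_cancel, mul_one, potential]

theorem descendedPotential_mk (hN : ∀ n ∈ N, ε n = (φ n 0)⁻¹) (k : M) (g : G) :
    descendedPotential φ ε k g = (potential φ ε g * k)⁻¹ := by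
  obtain ⟨⟨n, hn⟩, h⟩ := QuotientAddGroup.mk_out_eq_add N g
  rw [descendedPotential, h, potential_add_of_mem hR3 hε hN g hn]

theorem descendedPotential_zero (hN : ∀ n ∈ N, ε n = (φ n 0)⁻¹) (k : M) :
    descendedPotential φ ε k 0 = k⁻¹ := by
  rw [← QuotientAddGroup.mk_zero, descendedPotential_mk hR3 hε hN, potential_zero hR3 hε, one_mul]

theorem mul_descendedPotential_add_mul_inv (hN : ∀ n ∈ N, ε n = (φ n 0)⁻¹) (k : M) (g : G)
    (z : G ⧸ N) :
    φ g z * (descendedPotential φ ε k (z + g) * (descendedPotential φ ε k z)⁻¹) = (ε g)⁻¹ := by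
  obtain ⟨h, rfl⟩ := QuotientAddGroup.mk_surjective z
  rw [← QuotientAddGroup.mk_add, descendedPotential_mk hR3 hε hN, descendedPotential_mk hR3 hε hN,
    potential_add hR3 hε]
  apply Additive.ofMul.injective
  simp only [ofMul_mul, ofMul_inv]
  abel

end Potential

theorem pairing_sub_left {X Y M : Type*} [AddCommGroup X] [CommGroup M] {e : X → Y → M}
    (he₁ : ∀ (x x' : X) (y : Y), e (x + x') y = e x y * e x' y) (x x' : X) (y : Y) :
    e (x - x') y = e x y * (e x' y)⁻¹ := by
  rw [eq_mul_inv_iff_mul_eq, ← he₁, sub_add_cancel]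

theorem pairing_identity {X Y M : Type*} [AddCommGroup X] [AddCommGroup Y] [CommGroup M]
    {e : X → Y → M} (he₁ : ∀ (x x' : X) (y : Y), e (x + x') y = e x y * e x' y)
    (he₂ : ∀ (x : X) (y y' : Y), e x (y + y') = e x y * e x y') (x₁ x₂ x₃ : X) (y₁ y₂ y₃ : Y)
    (h : e (x₃ - x₁ - x₂) (y₃ - y₁ - y₂) = 1) :
    e x₃ (y₃ - y₁ - y₂) * e x₁ y₂ * e (x₃ - x₁ - x₂) y₃ =
      (e x₂ y₁ * e x₂ y₂)⁻¹ * e x₃ y₃ * (e x₁ y₁)⁻¹ := by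
  obtain ⟨ξ, rfl⟩ : ∃ ξ, x₃ = ξ + x₂ + x₁ := ⟨x₃ - x₁ - x₂, by abel⟩
  obtain ⟨η, rfl⟩ : ∃ η, y₃ = η + y₂ + y₁ := ⟨y₃ - y₁ - y₂, by abel⟩
  simp only [add_sub_cancel_right] at h ⊢
  simp only [he₁, he₂, h]
  apply Additive.ofMul.injective
  simp only [ofMul_mul, ofMul_inv, ofMul_one]
  abel

theorem satisfiesR2_dual {Γ G X M : Type*} [Group Γ] [AddCommGroup G] [AddCommGroup X]
    [CommGroup M] {N : AddSubgroup G} {P : AddSubgroup X} {e : X → G → M}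
    (he₁ : ∀ (x x' : X) (g : G), e (x + x') g = e x g * e x' g)
    (he₂ : ∀ (x : X) (g g' : G), e x (g + g') = e x g * e x g')
    {ePQ : P → G ⧸ N → M} (hePQ : ∀ (p : P) (g : G), ePQ p g = e p g)
    {χ : Γ → G ⧸ N} {χ' : Γ → X} (hχ' : ∀ a b, χ' (b * a) - χ' a - χ' b ∈ P)
    {C : Γ → Γ → M} {ψ : Γ → Γ → G ⧸ N → M} {φ : Γ → G → G ⧸ N → M}
    (hψ : ∀ a b z, ψ a b z = C a b * ePQ ⟨_, hχ' a b⟩ (χ (b * a) + z))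
    (hφ : ∀ a g z, φ a g z = (e (χ' a) g)⁻¹) :
    SatisfiesR2 χ QuotientAddGroup.mk ψ φ := by
  intro a b g z
  obtain ⟨w, hw⟩ := QuotientAddGroup.mk_surjective (χ (b * a) + z)
  simp only [hψ, hφ, ← add_assoc, ← hw, ← QuotientAddGroup.mk_add, hePQ, he₂,
    pairing_sub_left he₁]
  apply Additive.ofMul.injective
  simp only [ofMul_mul, ofMul_inv]
  abel

theorem coboundaryPsi_descendedPotential_zero {Γ G X M : Type*} [Group Γ] [AddCommGroup G]
    [AddCommGroup X] [CommGroup M] {N : AddSubgroup G} {e : X → G → M}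
    (he₁ : ∀ (x x' : X) (g : G), e (x + x') g = e x g * e x' g)
    (he₂ : ∀ (x : X) (g g' : G), e x (g + g') = e x g * e x g')
    {φ : Γ → G → G ⧸ N → M}
    (hR3 : ∀ (a : Γ) (g h : G) (z : G ⧸ N), φ a (g + h) z = φ a h (z + g) * φ a g z)
    {χ : Γ → G ⧸ N} {χbar : Γ → G} (hχbar : ∀ a, (χbar a : G ⧸ N) = χ a) {χ' : Γ → X}
    (hN : ∀ a, ∀ n ∈ N, e (χ' a) n = (φ a n 0)⁻¹) (a b : Γ)
    (h : e (χ' (b * a) - χ' a - χ' b) (χbar (b * a) - χbar a - χbar b) = 1) :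
    coboundaryPsi χ (fun c => descendedPotential (φ c) (e (χ' c)) (e (χ' c) (χbar c))) a b 0 =
      (φ b (χbar a) 0)⁻¹ * e (χ' (b * a)) (χbar (b * a) - χbar a - χbar b) *
        e (χ' a) (χbar b) * e (χ' (b * a) - χ' a - χ' b) (χbar (b * a)) := by
  have key := pairing_identity he₁ he₂ (χ' a) (χ' b) (χ' (b * a)) (χbar a) (χbar b)
    (χbar (b * a)) h
  simp only [coboundaryPsi, zero_add, ← hχbar, descendedPotential_mk (hR3 _) (he₂ _) (hN _),
    descendedPotential_zero (hR3 _) (he₂ _) (hN _), potential]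
  apply Additive.ofMul.injective
  replace key := congrArg Additive.ofMul key
  simp only [ofMul_mul, ofMul_inv] at key ⊢
  linear_combination (norm := abel) (-1 : ℤ) • key

theorem statement4_general
    {Γ : Type*} [Group Γ]
    {G : Type*} [AddCommGroup G]
    (N : AddSubgroup G)
    -- the Pontryagin dual of `G`, abstracted by its pairing with `G`
    {Ghat : Type*} [AddCommGroup Ghat]
    (e : Ghat → G → Circle)
    (he₁ : ∀ (x y : Ghat) (g : G), e (x + y) g = e x g * e y g)
    (he₂ : ∀ (x : Ghat) (g h : G), e x (g + h) = e x g * e x h)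
    -- the annihilator `N⊥` of `N`
    (Nperp : AddSubgroup Ghat)
    (hNperp : ∀ x : Ghat, x ∈ Nperp ↔ ∀ n ∈ N, e x (n : G) = 1)
    -- the well-defined pairing of `Ĝ/N⊥` with `N`
    (eQN : Ghat ⧸ Nperp → N → Circle)
    (heQN : ∀ (x : Ghat) (n : N), eQN (x : Ghat ⧸ Nperp) n = e x (n : G))
    -- the well-defined pairing of `N⊥` with `G/N`
    (ePQ : Nperp → G ⧸ N → Circle)
    (hePQ : ∀ (p : Nperp) (g : G), ePQ p ((g : G) : G ⧸ N) = e (p : Ghat) g)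
    -- the base homomorphism `χ` and its dual `χ̂`
    (χ : Γ → G ⧸ N)
    (χhat : Γ → Ghat ⧸ Nperp)
    -- the cocycle data `(ψ, φ, 1)` of a dualisable dynamical triple
    (ψ : Γ → Γ → (G ⧸ N) → Circle) (φ : Γ → G → (G ⧸ N) → Circle)
    (R2 : ∀ (a b : Γ) (g : G) (z : G ⧸ N),
      φ b g (z + χ a) * (φ (b * a) g z)⁻¹ * φ a g z = ψ a b (z + (g : G ⧸ N)) * (ψ a b z)⁻¹)
    (R3 : ∀ (a : Γ) (g h : G) (z : G ⧸ N),
      φ a (g + h) z = φ a h (z + (g : G ⧸ N)) * φ a g z)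
    (hpair : ∀ (a : Γ) (n : N), eQN (χhat a) n = (φ a (n : G) 0)⁻¹)
    -- a lift `χ̄` of `χ`
    (χbar : Γ → G) (hχbar : ∀ a : Γ, ((χbar a : G) : G ⧸ N) = χ a)
    (hη : ∀ a b : Γ, χbar (b * a) - χbar a - χbar b ∈ N)
    -- the dual cocycle data `ψ̂` and `φ̂`
    (ψhat : Γ → Γ → (Ghat ⧸ Nperp) → Circle)
    (hψhat : ∀ (a b : Γ) (zh : Ghat ⧸ Nperp),
      ψhat a b zh = ψ a b 0 * (φ b (χbar a) 0)⁻¹ *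
        eQN (χhat (b * a) + zh) ⟨χbar (b * a) - χbar a - χbar b, hη a b⟩)
    (φhat : Γ → Ghat → (Ghat ⧸ Nperp) → Circle)
    (hφhat : ∀ (a : Γ) (gh : Ghat) (zh : Ghat ⧸ Nperp), φhat a gh zh = (e gh (χbar a))⁻¹)
    -- a lift `χ̂̄` of `χ̂`
    (χhatbar : Γ → Ghat) (hχhatbar : ∀ a : Γ, ((χhatbar a : Ghat) : Ghat ⧸ Nperp) = χhat a)
    (hηhat : ∀ a b : Γ, χhatbar (b * a) - χhatbar a - χhatbar b ∈ Nperp)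
    -- the double-dual cocycle data `ψ̂̂` and `φ̂̂`
    (ψhathat : Γ → Γ → (G ⧸ N) → Circle)
    (hψhathat : ∀ (a b : Γ) (z : G ⧸ N),
      ψhathat a b z = ψhat a b 0 * (φhat b (χhatbar a) 0)⁻¹ *
        ePQ ⟨χhatbar (b * a) - χhatbar a - χhatbar b, hηhat a b⟩ (χ (b * a) + z))
    (φhathat : Γ → G → (G ⧸ N) → Circle)
    (hφhathat : ∀ (a : Γ) (g : G) (z : G ⧸ N), φhathat a g z = (e (χhatbar a) g)⁻¹) :
    -- (a) the double-dual base homomorphism is `χ`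
    (∀ (a : Γ) (p : Nperp) (zh : Ghat ⧸ Nperp), (φhat a (p : Ghat) zh)⁻¹ = ePQ p (χ a)) ∧
    -- (b) `(ψ̂̂, φ̂̂, 1)` differs from `(ψ, φ, 1)` by a total coboundary `∂_χ(ν₁, 1)`
    (∃ ν₁ : Γ → (G ⧸ N) → Circle,
      ∀ (a b : Γ) (g : G) (z : G ⧸ N),
        ψhathat a b z = ψ a b z * (ν₁ b (z + χ a) * (ν₁ (b * a) z)⁻¹ * ν₁ a z) ∧
        φhathat a g z = φ a g z * (ν₁ a (z + (g : G ⧸ N)) * (ν₁ a z)⁻¹)) := by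
  have hε : ∀ c, ∀ n ∈ N, e (χhatbar c) n = (φ c n 0)⁻¹ := fun c n hn => by
    rw [← hpair c ⟨n, hn⟩, ← hχhatbar, heQN]
  let ν c := descendedPotential (φ c) (e (χhatbar c)) (e (χhatbar c) (χbar c))
  have hφeq : φhathat = φ * coboundaryPhi QuotientAddGroup.mk ν := by
    ext a g z
    rw [hφhathat, Pi.mul_apply, Pi.mul_apply, Pi.mul_apply, coboundaryPhi,
      mul_descendedPotential_add_mul_inv (R3 a) (he₂ _) (hε a)]
  have hψeq : ψhathat = ψ * coboundaryPsi χ ν := by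
    refine SatisfiesR2.eq_of_forall_eq_zero QuotientAddGroup.mk_surjective ?_
      ((show SatisfiesR2 χ QuotientAddGroup.mk ψ φ from R2).mul (satisfiesR2_coboundary ν))
      fun a b => ?_
    · rw [← hφeq]
      exact satisfiesR2_dual he₁ he₂ hePQ hηhat hψhathat hφhathat
    · simp only [Pi.mul_apply, ν]
      rw [coboundaryPsi_descendedPotential_zero he₁ he₂ R3 hχbar hε a b
        ((hNperp _).1 (hηhat a b) _ (hη a b)), hψhathat, hψhat, hφhat, inv_inv, add_zero,
        add_zero, ← hχhatbar, heQN, ← hχbar, hePQ]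
      simp only [mul_assoc]
  refine ⟨fun a p zh => by rw [hφhat, inv_inv, ← hχbar a, hePQ], ν, fun a b g z => ⟨?_, ?_⟩⟩
  · rw [hψeq]; rfl
  · rw [hφeq]; rfl

/-- With the setup of the duality construction (hypotheses (R1), (R2), (R3) on `(ψ, φ)`, a lift
`χ̄` of `χ`, the dual homomorphism `χ̂` with `⟨χ̂(a), n⟩ = φ(a,n,0)⁻¹`, and the dual data
`ψ̂, φ̂`), and a lift `χ̂̄ : Γ → Ĝ` of `χ̂`:
(a) the double-dual base homomorphism equals `χ`:
    `φ̂(a, n⊥, ẑ)⁻¹ = ⟨n⊥, χ(a)⟩` for `n⊥ ∈ N⊥`; and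
(b) the double-dual data `ψ̂̂, φ̂̂` differ from `ψ, φ` by the total coboundary of some
    `ν₁ : Γ × G/N → U(1)`. -/
theorem statement4
    {Γ : Type*} [Group Γ] [Finite Γ]
    {G : Type*} [AddCommGroup G] [TopologicalSpace G] [IsTopologicalAddGroup G]
      [LocallyCompactSpace G] [SecondCountableTopology G] [T2Space G]
    (N : AddSubgroup G) [DiscreteTopology N] [CompactSpace (G ⧸ N)]
    -- the Pontryagin dual of `G`, abstracted by its pairing with `G`
    {Ghat : Type*} [AddCommGroup Ghat]
    (e : Ghat → G → Circle)
    (he₁ : ∀ (x y : Ghat) (g : G), e (x + y) g = e x g * e y g)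
    (he₂ : ∀ (x : Ghat) (g h : G), e x (g + h) = e x g * e x h)
    -- the annihilator `N⊥` of `N`
    (Nperp : AddSubgroup Ghat)
    (hNperp : ∀ x : Ghat, x ∈ Nperp ↔ ∀ n ∈ N, e x (n : G) = 1)
    -- the well-defined pairing of `Ĝ/N⊥` with `N`
    (eQN : Ghat ⧸ Nperp → N → Circle)
    (heQN : ∀ (x : Ghat) (n : N), eQN (x : Ghat ⧸ Nperp) n = e x (n : G))
    -- the well-defined pairing of `N⊥` with `G/N`
    (ePQ : Nperp → G ⧸ N → Circle)
    (hePQ : ∀ (p : Nperp) (g : G), ePQ p ((g : G) : G ⧸ N) = e (p : Ghat) g)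
    -- the base homomorphism `χ` and its dual `χ̂`
    (χ : Γ → G ⧸ N) (hχ : ∀ a b : Γ, χ (a * b) = χ a + χ b)
    (χhat : Γ → Ghat ⧸ Nperp) (hχhat : ∀ a b : Γ, χhat (a * b) = χhat a + χhat b)
    -- the cocycle data `(ψ, φ, 1)` of a dualisable dynamical triple
    (ψ : Γ → Γ → (G ⧸ N) → Circle) (φ : Γ → G → (G ⧸ N) → Circle)
    (R1 : ∀ (a b c : Γ) (z : G ⧸ N),
      ψ b c (z + χ a) * (ψ (b * a) c z)⁻¹ * ψ a (c * b) z * (ψ a b z)⁻¹ = 1)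
    (R2 : ∀ (a b : Γ) (g : G) (z : G ⧸ N),
      φ b g (z + χ a) * (φ (b * a) g z)⁻¹ * φ a g z = ψ a b (z + (g : G ⧸ N)) * (ψ a b z)⁻¹)
    (R3 : ∀ (a : Γ) (g h : G) (z : G ⧸ N),
      φ a (g + h) z = φ a h (z + (g : G ⧸ N)) * φ a g z)
    (hpair : ∀ (a : Γ) (n : N), eQN (χhat a) n = (φ a (n : G) 0)⁻¹)
    -- a lift `χ̄` of `χ`
    (χbar : Γ → G) (hχbar : ∀ a : Γ, ((χbar a : G) : G ⧸ N) = χ a)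
    (hη : ∀ a b : Γ, χbar (b * a) - χbar a - χbar b ∈ N)
    -- the dual cocycle data `ψ̂` and `φ̂`
    (ψhat : Γ → Γ → (Ghat ⧸ Nperp) → Circle)
    (hψhat : ∀ (a b : Γ) (zh : Ghat ⧸ Nperp),
      ψhat a b zh = ψ a b 0 * (φ b (χbar a) 0)⁻¹ *
        eQN (χhat (b * a) + zh) ⟨χbar (b * a) - χbar a - χbar b, hη a b⟩)
    (φhat : Γ → Ghat → (Ghat ⧸ Nperp) → Circle)
    (hφhat : ∀ (a : Γ) (gh : Ghat) (zh : Ghat ⧸ Nperp), φhat a gh zh = (e gh (χbar a))⁻¹)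
    -- a lift `χ̂̄` of `χ̂`
    (χhatbar : Γ → Ghat) (hχhatbar : ∀ a : Γ, ((χhatbar a : Ghat) : Ghat ⧸ Nperp) = χhat a)
    (hηhat : ∀ a b : Γ, χhatbar (b * a) - χhatbar a - χhatbar b ∈ Nperp)
    -- the double-dual cocycle data `ψ̂̂` and `φ̂̂`
    (ψhathat : Γ → Γ → (G ⧸ N) → Circle)
    (hψhathat : ∀ (a b : Γ) (z : G ⧸ N),
      ψhathat a b z = ψhat a b 0 * (φhat b (χhatbar a) 0)⁻¹ *
        ePQ ⟨χhatbar (b * a) - χhatbar a - χhatbar b, hηhat a b⟩ (χ (b * a) + z))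
    (φhathat : Γ → G → (G ⧸ N) → Circle)
    (hφhathat : ∀ (a : Γ) (g : G) (z : G ⧸ N), φhathat a g z = (e (χhatbar a) g)⁻¹) :
    -- (a) the double-dual base homomorphism is `χ`
    (∀ (a : Γ) (p : Nperp) (zh : Ghat ⧸ Nperp), (φhat a (p : Ghat) zh)⁻¹ = ePQ p (χ a)) ∧
    -- (b) `(ψ̂̂, φ̂̂, 1)` differs from `(ψ, φ, 1)` by a total coboundary `∂_χ(ν₁, 1)`
    (∃ ν₁ : Γ → (G ⧸ N) → Circle,
      ∀ (a b : Γ) (g : G) (z : G ⧸ N),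
        ψhathat a b z = ψ a b z * (ν₁ b (z + χ a) * (ν₁ (b * a) z)⁻¹ * ν₁ a z) ∧
        φhathat a g z = φ a g z * (ν₁ a (z + (g : G ⧸ N)) * (ν₁ a z)⁻¹)) :=
  statement4_general N e he₁ he₂ Nperp hNperp eQN heQN ePQ hePQ χ χhat ψ φ R2 R3 hpair χbar hχbar hη
    ψhat hψhat φhat hφhat χhatbar hχhatbar hηhat ψhathat hψhathat φhathat hφhathat
end

section
/- Define β : Γ × G/N × Ĝ/N⊥ → U(1) by β(a, z, ẑ) := ⟨σ̂(ẑ + χ̂(a)) − σ̂(ẑ) − σ̂(χ̂(a)), σ(z + χ(a))⟩ · ⟨σ̂(ẑ), σ(χ(a))⟩, where the pairings are between Ĝ and G. Then for all a, b ∈ Γ, z ∈ G/N, ẑ ∈ Ĝ/N⊥: β(b, z + χ(a), ẑ + χ̂(a)) · β(ba, z, ẑ)⁻¹ · β(a, z, ẑ) = γ(a,b) · ⟨η̂(a,b), z⟩⁻¹ · ⟨ẑ, η(a,b)⟩. In particular, for each fixed a, b ∈ Γ the function (z, ẑ) ↦ β(b, z + χ(a), ẑ + χ̂(a)) · β(ba,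 z, ẑ)⁻¹ · β(a, z, ẑ) is continuous on G/N × Ĝ/N⊥, even though σ and σ̂ need not be continuous. -/
/-!
The sections `σ`, `σ̂` are additive only up to `N` and `N⊥`, and the pairing kills `N⊥ × N`.
Expanding the coboundary by biadditivity, every term in which a defect of `σ̂` meets a defect
of `σ` drops out, and what remains only involves `σ̂` and `σ` through the constant defects
`η̂(a,b)`, `η(a,b)` paired against `z` and `ẑ`; such pairings factor through the quotients, where
they are continuous.
-/

section Biadditive

variable {P Q M : Type*} [AddCommGroup P] [AddCommGroup Q] [CommGroup M] (e : P → Q → M)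
  (he₁ : ∀ (x y : P) (g : Q), e (x + y) g = e x g * e y g)
  (he₂ : ∀ (x : P) (g h : Q), e x (g + h) = e x g * e x h)

def biadditiveOfMul : P →+ Q →+ Additive M :=
  AddMonoidHom.mk' (fun x => AddMonoidHom.mk' (fun g => Additive.ofMul (e x g)) (he₂ x))
    fun x y => by ext g; exact congrArg Additive.ofMul (he₁ x y g)

theorem biadditiveOfMul_apply (x : P) (g : Q) :
    biadditiveOfMul e he₁ he₂ x g = Additive.ofMul (e x g) := rfl

end Biadditive

section SectionCochain

variable {G Ĝ M : Type*} [AddCommGroup G] [AddCommGroup Ĝ] [CommGroup M]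
  {N : AddSubgroup G} {Nperp : AddSubgroup Ĝ}
  (e : Ĝ → G → M) (σ : G ⧸ N → G) (σh : Ĝ ⧸ Nperp → Ĝ)

/-- The paper's `β`, with `χ(a)` and `χ̂(a)` replaced by arbitrary `x` and `xh`. -/
def sectionCochain (x : G ⧸ N) (xh : Ĝ ⧸ Nperp) (z : G ⧸ N) (zh : Ĝ ⧸ Nperp) : M :=
  e (σh (zh + xh) - σh zh - σh xh) (σ (z + x)) * e (σh zh) (σ x)

theorem sectionCochain_coboundary
    (he₁ : ∀ (x y : Ĝ) (g : G), e (x + y) g = e x g * e y g)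
    (he₂ : ∀ (x : Ĝ) (g h : G), e x (g + h) = e x g * e x h)
    (hann : ∀ p ∈ Nperp, ∀ n ∈ N, e p n = 1)
    (hσ : ∀ z : G ⧸ N, ((σ z : G) : G ⧸ N) = z)
    (hσh : ∀ zh : Ĝ ⧸ Nperp, ((σh zh : Ĝ) : Ĝ ⧸ Nperp) = zh)
    (x y z : G ⧸ N) (xh yh zh : Ĝ ⧸ Nperp) :
    sectionCochain e σ σh y yh (z + x) (zh + xh) *
        (sectionCochain e σ σh (y + x) (yh + xh) z zh)⁻¹ * sectionCochain e σ σh x xh z zh =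
      e (σh xh) (σ y) * (e (σh yh - σh (yh + xh) + σh xh) (σ (y + x)))⁻¹ *
        (e (σh yh - σh (yh + xh) + σh xh) (σ z))⁻¹ * e (σh zh) (σ y - σ (y + x) + σ x) := by
  have mem_N : σ (z + (y + x)) - σ (z + x) - σ y ∈ N := by
    rw [← QuotientAddGroup.eq_zero_iff]; simp only [QuotientAddGroup.mk_sub, hσ]; abel
  have mem_N' : σ (z + (y + x)) - σ (y + x) - σ z ∈ N := by
    rw [← QuotientAddGroup.eq_zero_iff]; simp only [QuotientAddGroup.mk_sub, hσ]; abel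
  have mem_Nperp : σh (zh + xh) - σh zh - σh xh ∈ Nperp := by
    rw [← QuotientAddGroup.eq_zero_iff]; simp only [QuotientAddGroup.mk_sub, hσh]; abel
  have mem_Nperp' : σh yh - σh (yh + xh) + σh xh ∈ Nperp := by
    rw [← QuotientAddGroup.eq_zero_iff]
    simp only [QuotientAddGroup.mk_add, QuotientAddGroup.mk_sub, hσh]; abel
  -- Expanded by biadditivity, the two sides differ exactly by these two pairings of `N⊥` with `N`.
  have hvanish₁ := congrArg Additive.ofMul (hann _ mem_Nperp _ mem_N)
  have hvanish₂ := congrArg Additive.ofMul (hann _ mem_Nperp' _ mem_N')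
  have hz : z + x + y = z + (y + x) := by abel
  have hzh : zh + xh + yh = zh + (yh + xh) := by abel
  apply Additive.ofMul.injective
  simp only [sectionCochain, ofMul_mul, ofMul_inv, ofMul_one, hz, hzh,
    ← biadditiveOfMul_apply e he₁ he₂, map_add, map_sub, AddMonoidHom.add_apply,
    AddMonoidHom.sub_apply] at hvanish₁ hvanish₂ ⊢
  linear_combination (norm := abel) -hvanish₁ - hvanish₂

end SectionCochain

theorem statement5_general
    {Γ : Type*} [Group Γ]
    {G : Type*} [AddCommGroup G] [TopologicalSpace G]
    (N : AddSubgroup G)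
    -- the Pontryagin dual of `G`, abstracted by its pairing with `G`
    {Ghat : Type*} [AddCommGroup Ghat] [TopologicalSpace Ghat]
    (e : Ghat → G → Circle)
    (he₁ : ∀ (x y : Ghat) (g : G), e (x + y) g = e x g * e y g)
    (he₂ : ∀ (x : Ghat) (g h : G), e x (g + h) = e x g * e x h)
    (heCont : ∀ x : Ghat, Continuous (e x))
    (hevCont : ∀ g : G, Continuous fun x : Ghat => e x g)
    -- the annihilator `N⊥` of `N`
    (Nperp : AddSubgroup Ghat)
    (hNperp : ∀ x : Ghat, x ∈ Nperp ↔ ∀ n ∈ N, e x (n : G) = 1)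
    -- the well-defined pairing of `Ĝ/N⊥` with `N`
    (eQN : Ghat ⧸ Nperp → N → Circle)
    (heQN : ∀ (x : Ghat) (n : N), eQN (x : Ghat ⧸ Nperp) n = e x (n : G))
    -- the well-defined pairing of `N⊥` with `G/N`
    (ePQ : Nperp → G ⧸ N → Circle)
    (hePQ : ∀ (p : Nperp) (g : G), ePQ p ((g : G) : G ⧸ N) = e (p : Ghat) g)
    -- the homomorphisms `χ` and `χ̂`
    (χ : Γ → G ⧸ N) (hχ : ∀ a b : Γ, χ (a * b) = χ a + χ b)
    (χhat : Γ → Ghat ⧸ Nperp) (hχhat : ∀ a b : Γ, χhat (a * b) = χhat a + χhat b)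
    -- set-theoretic sections `σ` and `σ̂` of the quotient maps
    (σ : G ⧸ N → G) (hσ : ∀ z : G ⧸ N, ((σ z : G) : G ⧸ N) = z)
    (σh : Ghat ⧸ Nperp → Ghat) (hσh : ∀ zh : Ghat ⧸ Nperp, ((σh zh : Ghat) : Ghat ⧸ Nperp) = zh)
    -- `η(a,b) ∈ N` and `η̂(a,b) ∈ N⊥`
    (hη : ∀ a b : Γ, σ (χ b) - σ (χ (b * a)) + σ (χ a) ∈ N)
    (hηhat : ∀ a b : Γ, σh (χhat b) - σh (χhat (b * a)) + σh (χhat a) ∈ Nperp)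
    -- `γ(a,b) := ⟨σ̂(χ̂(a)), σ(χ(b))⟩ · ⟨η̂(a,b), χ(ba)⟩⁻¹`
    (γ : Γ → Γ → Circle)
    (hγ : ∀ a b : Γ, γ a b = e (σh (χhat a)) (σ (χ b)) *
      (ePQ ⟨σh (χhat b) - σh (χhat (b * a)) + σh (χhat a), hηhat a b⟩ (χ (b * a)))⁻¹)
    -- `β(a, z, ẑ)`
    (β : Γ → G ⧸ N → Ghat ⧸ Nperp → Circle)
    (hβ : ∀ (a : Γ) (z : G ⧸ N) (zh : Ghat ⧸ Nperp),
      β a z zh = e (σh (zh + χhat a) - σh zh - σh (χhat a)) (σ (z + χ a)) *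
        e (σh zh) (σ (χ a))) :
    -- the coboundary of `β` decomposes as `γ(a,b) · ⟨η̂(a,b), z⟩⁻¹ · ⟨ẑ, η(a,b)⟩`
    (∀ (a b : Γ) (z : G ⧸ N) (zh : Ghat ⧸ Nperp),
      β b (z + χ a) (zh + χhat a) * (β (b * a) z zh)⁻¹ * β a z zh =
        γ a b *
          (ePQ ⟨σh (χhat b) - σh (χhat (b * a)) + σh (χhat a), hηhat a b⟩ z)⁻¹ *
          eQN zh ⟨σ (χ b) - σ (χ (b * a)) + σ (χ a), hη a b⟩) ∧
    -- in particular the coboundary of `β` is continuous in `(z, ẑ)`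
    (∀ a b : Γ,
      Continuous fun p : (G ⧸ N) × (Ghat ⧸ Nperp) =>
        β b (p.1 + χ a) (p.2 + χhat a) * (β (b * a) p.1 p.2)⁻¹ * β a p.1 p.2) := by
  have hann : ∀ p ∈ Nperp, ∀ n ∈ N, e p n = 1 := fun p hp => (hNperp p).mp hp
  have hePQ_σ : ∀ p z, ePQ p z = e p (σ z) := fun p z => by rw [← hePQ, hσ]
  have heQN_σh : ∀ zh n, eQN zh n = e (σh zh) n := fun zh n => by rw [← heQN, hσh]
  have hβ_eq : β = fun a => sectionCochain e σ σh (χ a) (χhat a) := by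
    funext a z zh
    exact hβ a z zh
  have hcob : ∀ (a b : Γ) (z : G ⧸ N) (zh : Ghat ⧸ Nperp),
      β b (z + χ a) (zh + χhat a) * (β (b * a) z zh)⁻¹ * β a z zh =
        γ a b *
          (ePQ ⟨σh (χhat b) - σh (χhat (b * a)) + σh (χhat a), hηhat a b⟩ z)⁻¹ *
          eQN zh ⟨σ (χ b) - σ (χ (b * a)) + σ (χ a), hη a b⟩ := by
    intro a b z zh
    simp only [hγ, hePQ_σ, heQN_σh, hβ_eq, hχ b a, hχhat b a]
    exact sectionCochain_coboundary e σ σh he₁ he₂ hann hσ hσh _ _ _ _ _ _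
  refine ⟨hcob, fun a b => ?_⟩
  have hcont_ePQ : ∀ p, Continuous (ePQ p) := fun p =>
    (QuotientAddGroup.isQuotientMap_mk N).continuous_iff.mpr
      (by simpa only [Function.comp_def, hePQ] using heCont p)
  have hcont_eQN : ∀ n, Continuous fun zh => eQN zh n := fun n =>
    (QuotientAddGroup.isQuotientMap_mk Nperp).continuous_iff.mpr
      (by simpa only [Function.comp_def, heQN] using hevCont n)
  simp only [hcob a b]
  fun_prop

/-- With Borel (not necessarily continuous) sections `σ : G/N → G` and `σ̂ : Ĝ/N⊥ → Ĝ` of the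
quotient maps, define
`β(a, z, ẑ) := ⟨σ̂(ẑ+χ̂(a)) − σ̂(ẑ) − σ̂(χ̂(a)), σ(z+χ(a))⟩ · ⟨σ̂(ẑ), σ(χ(a))⟩`.
Then the group-cohomological coboundary
`(δ_{χ×χ̂}β)(a,b,z,ẑ) = β(b, z+χ(a), ẑ+χ̂(a)) · β(ba, z, ẑ)⁻¹ · β(a, z, ẑ)`
equals `γ(a,b) · ⟨η̂(a,b), z⟩⁻¹ · ⟨ẑ, η(a,b)⟩`, and in particular, for fixed `a, b` it is a
continuous function of `(z, ẑ) ∈ G/N × Ĝ/N⊥`, although `σ` and `σ̂` need not be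
continuous. -/
theorem statement5
    {Γ : Type*} [Group Γ] [Finite Γ]
    {G : Type*} [AddCommGroup G] [TopologicalSpace G] [IsTopologicalAddGroup G]
      [LocallyCompactSpace G] [SecondCountableTopology G] [T2Space G]
    (N : AddSubgroup G) [DiscreteTopology N] [CompactSpace (G ⧸ N)]
    -- the Pontryagin dual of `G`, abstracted by its pairing with `G`
    {Ghat : Type*} [AddCommGroup Ghat] [TopologicalSpace Ghat] [IsTopologicalAddGroup Ghat]
    (e : Ghat → G → Circle)
    (he₁ : ∀ (x y : Ghat) (g : G), e (x + y) g = e x g * e y g)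
    (he₂ : ∀ (x : Ghat) (g h : G), e x (g + h) = e x g * e x h)
    (heCont : ∀ x : Ghat, Continuous (e x))
    (hevCont : ∀ g : G, Continuous fun x : Ghat => e x g)
    -- the annihilator `N⊥` of `N`
    (Nperp : AddSubgroup Ghat)
    (hNperp : ∀ x : Ghat, x ∈ Nperp ↔ ∀ n ∈ N, e x (n : G) = 1)
    -- the well-defined pairing of `Ĝ/N⊥` with `N`
    (eQN : Ghat ⧸ Nperp → N → Circle)
    (heQN : ∀ (x : Ghat) (n : N), eQN (x : Ghat ⧸ Nperp) n = e x (n : G))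
    -- the well-defined pairing of `N⊥` with `G/N`
    (ePQ : Nperp → G ⧸ N → Circle)
    (hePQ : ∀ (p : Nperp) (g : G), ePQ p ((g : G) : G ⧸ N) = e (p : Ghat) g)
    -- the homomorphisms `χ` and `χ̂`
    (χ : Γ → G ⧸ N) (hχ : ∀ a b : Γ, χ (a * b) = χ a + χ b)
    (χhat : Γ → Ghat ⧸ Nperp) (hχhat : ∀ a b : Γ, χhat (a * b) = χhat a + χhat b)
    -- set-theoretic sections `σ` and `σ̂` of the quotient maps
    (σ : G ⧸ N → G) (hσ : ∀ z : G ⧸ N, ((σ z : G) : G ⧸ N) = z)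
    (σh : Ghat ⧸ Nperp → Ghat) (hσh : ∀ zh : Ghat ⧸ Nperp, ((σh zh : Ghat) : Ghat ⧸ Nperp) = zh)
    -- `η(a,b) ∈ N` and `η̂(a,b) ∈ N⊥`
    (hη : ∀ a b : Γ, σ (χ b) - σ (χ (b * a)) + σ (χ a) ∈ N)
    (hηhat : ∀ a b : Γ, σh (χhat b) - σh (χhat (b * a)) + σh (χhat a) ∈ Nperp)
    -- `γ(a,b) := ⟨σ̂(χ̂(a)), σ(χ(b))⟩ · ⟨η̂(a,b), χ(ba)⟩⁻¹`
    (γ : Γ → Γ → Circle)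
    (hγ : ∀ a b : Γ, γ a b = e (σh (χhat a)) (σ (χ b)) *
      (ePQ ⟨σh (χhat b) - σh (χhat (b * a)) + σh (χhat a), hηhat a b⟩ (χ (b * a)))⁻¹)
    -- `β(a, z, ẑ)`
    (β : Γ → G ⧸ N → Ghat ⧸ Nperp → Circle)
    (hβ : ∀ (a : Γ) (z : G ⧸ N) (zh : Ghat ⧸ Nperp),
      β a z zh = e (σh (zh + χhat a) - σh zh - σh (χhat a)) (σ (z + χ a)) *
        e (σh zh) (σ (χ a))) :
    -- the coboundary of `β` decomposes as `γ(a,b) · ⟨η̂(a,b), z⟩⁻¹ · ⟨ẑ, η(a,b)⟩`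
    (∀ (a b : Γ) (z : G ⧸ N) (zh : Ghat ⧸ Nperp),
      β b (z + χ a) (zh + χhat a) * (β (b * a) z zh)⁻¹ * β a z zh =
        γ a b *
          (ePQ ⟨σh (χhat b) - σh (χhat (b * a)) + σh (χhat a), hηhat a b⟩ z)⁻¹ *
          eQN zh ⟨σ (χ b) - σ (χ (b * a)) + σ (χ a), hη a b⟩) ∧
    -- in particular the coboundary of `β` is continuous in `(z, ẑ)`
    (∀ a b : Γ,
      Continuous fun p : (G ⧸ N) × (Ghat ⧸ Nperp) =>
        β b (p.1 + χ a) (p.2 + χhat a) * (β (b * a) p.1 p.2)⁻¹ * β a p.1 p.2) :=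
  statement5_general N e he₁ he₂ heCont hevCont Nperp hNperp eQN heQN ePQ hePQ χ hχ χhat hχhat σ hσ
    σh hσh hη hηhat γ hγ β hβ
end

section
/- For all a, b, c ∈ Γ: ⟨η̂(b,c), χ(a)⟩ = ⟨χ̂(a), η(b,c)⟩ · γ(b,c) · γ(ba,c)⁻¹ · γ(a,cb) · γ(a,b)⁻¹. Consequently, the two U(1)-valued 3-cocycles (a,b,c) ↦ ⟨χ̂(a), η(b,c)⟩ and (a,b,c) ↦ ⟨η̂(b,c), χ(a)⟩ on Γ (with trivial Γ-action on U(1)) differ by the coboundary of the 2-cochain γ, and hence are cohomologous in H³(Γ, U(1)). -/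
/-!
Write `s a = σ̂(χ̂(a))` and `t a = σ(χ(a))`. Expanding both sides of the identity by
bilinearity of the pairing, everything cancels formally, using only associativity in `Γ`,
except for the two pairings `⟨η̂(b,c), η(a,cb)⟩` and `⟨η̂(a,b), η(ba,c)⟩`. These are
pairings of an element of `N⊥` with an element of `N`, hence trivial.
-/

section BilinearIdentity

variable {Γ A B C : Type*} [Semigroup Γ] [AddCommGroup A] [AddCommGroup B] [AddCommGroup C]

/-- For `t = σ ∘ χ` and `t = σ̂ ∘ χ̂` this is the paper's `η` and `η̂`. -/
def homDefect (t : Γ → B) (a b : Γ) : B :=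
  t b - t (b * a) + t a

/-- The paper's `γ`, written additively. -/
def pairingCochain (β : A →+ B →+ C) (s : Γ → A) (t : Γ → B) (a b : Γ) : C :=
  β (s a) (t b) - β (homDefect s a b) (t (b * a))

theorem pairing_homDefect_eq (β : A →+ B →+ C) (s : Γ → A) (t : Γ → B) (a b c : Γ) :
    β (homDefect s b c) (t a) =
      β (s a) (homDefect t b c) +
        (pairingCochain β s t b c - pairingCochain β s t (b * a) c +
          pairingCochain β s t a (c * b) - pairingCochain β s t a b) +
        β (homDefect s b c) (homDefect t a (c * b)) -
        β (homDefect s a b) (homDefect t (b * a) c) := by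
  simp only [pairingCochain, homDefect, map_add, map_sub, AddMonoidHom.add_apply,
    AddMonoidHom.sub_apply, mul_assoc]
  abel

end BilinearIdentity

def AddMonoidHom.ofBimul {A B C : Type*} [AddCommGroup A] [AddCommGroup B] [CommGroup C]
    (e : A → B → C) (he₁ : ∀ x y g, e (x + y) g = e x g * e y g)
    (he₂ : ∀ x g h, e x (g + h) = e x g * e x h) : A →+ B →+ Additive C :=
  AddMonoidHom.mk' (fun x => AddMonoidHom.mk' (fun g => Additive.ofMul (e x g)) (he₂ x))
    fun x y => by ext g; exact he₁ x y g

theorem statement6_general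
    {Γ : Type*} [Group Γ]
    {G : Type*} [AddCommGroup G]
    (N : AddSubgroup G)
    -- the Pontryagin dual of `G`, abstracted by its pairing with `G`
    {Ghat : Type*} [AddCommGroup Ghat]
    (e : Ghat → G → Circle)
    (he₁ : ∀ (x y : Ghat) (g : G), e (x + y) g = e x g * e y g)
    (he₂ : ∀ (x : Ghat) (g h : G), e x (g + h) = e x g * e x h)
    -- the annihilator `N⊥` of `N`
    (Nperp : AddSubgroup Ghat)
    (hNperp : ∀ x : Ghat, x ∈ Nperp ↔ ∀ n ∈ N, e x (n : G) = 1)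
    -- the well-defined pairing of `Ĝ/N⊥` with `N`
    (eQN : Ghat ⧸ Nperp → N → Circle)
    (heQN : ∀ (x : Ghat) (n : N), eQN (x : Ghat ⧸ Nperp) n = e x (n : G))
    -- the well-defined pairing of `N⊥` with `G/N`
    (ePQ : Nperp → G ⧸ N → Circle)
    (hePQ : ∀ (p : Nperp) (g : G), ePQ p ((g : G) : G ⧸ N) = e (p : Ghat) g)
    -- the homomorphisms `χ` and `χ̂`
    (χ : Γ → G ⧸ N)
    (χhat : Γ → Ghat ⧸ Nperp)
    -- set-theoretic sections `σ` and `σ̂` of the quotient maps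
    (σ : G ⧸ N → G) (hσ : ∀ z : G ⧸ N, ((σ z : G) : G ⧸ N) = z)
    (σh : Ghat ⧸ Nperp → Ghat) (hσh : ∀ zh : Ghat ⧸ Nperp, ((σh zh : Ghat) : Ghat ⧸ Nperp) = zh)
    -- `η(a,b) ∈ N` and `η̂(a,b) ∈ N⊥`
    (hη : ∀ a b : Γ, σ (χ b) - σ (χ (b * a)) + σ (χ a) ∈ N)
    (hηhat : ∀ a b : Γ, σh (χhat b) - σh (χhat (b * a)) + σh (χhat a) ∈ Nperp)
    (γ : Γ → Γ → Circle)
    (hγ : ∀ a b : Γ, γ a b = e (σh (χhat a)) (σ (χ b)) *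
      (ePQ ⟨σh (χhat b) - σh (χhat (b * a)) + σh (χhat a), hηhat a b⟩ (χ (b * a)))⁻¹) :
    -- the main identity
    (∀ a b c : Γ,
      ePQ ⟨σh (χhat c) - σh (χhat (c * b)) + σh (χhat b), hηhat b c⟩ (χ a) =
        eQN (χhat a) ⟨σ (χ c) - σ (χ (c * b)) + σ (χ b), hη b c⟩ *
          (γ b c * (γ (b * a) c)⁻¹ * γ a (c * b) * (γ a b)⁻¹)) ∧
    -- hence the two 3-cocycles differ by the coboundary of a 2-cochain (are cohomologous)
    (∃ γ' : Γ → Γ → Circle,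
      ∀ a b c : Γ,
        ePQ ⟨σh (χhat c) - σh (χhat (c * b)) + σh (χhat b), hηhat b c⟩ (χ a) =
          eQN (χhat a) ⟨σ (χ c) - σ (χ (c * b)) + σ (χ b), hη b c⟩ *
            (γ' b c * (γ' (b * a) c)⁻¹ * γ' a (c * b) * (γ' a b)⁻¹)) := by
  set β := AddMonoidHom.ofBimul e he₁ he₂
  set s : Γ → Ghat := fun a => σh (χhat a)
  set t : Γ → G := fun a => σ (χ a)
  have hePQ_χ : ∀ p g, ePQ p (χ g) = e p (t g) := fun p g => by rw [← hePQ, hσ]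
  have heQN_χhat : ∀ g n, eQN (χhat g) n = e (s g) n := fun g n => by rw [← heQN, hσh]
  have hγ_β : ∀ a b, Additive.ofMul (γ a b) = pairingCochain β s t a b := fun a b => by
    rw [hγ, hePQ_χ]; rfl
  have hperp : ∀ a b c d, β (homDefect s a b) (homDefect t c d) = 0 := fun a b c d =>
    congrArg Additive.ofMul <| (hNperp _).mp (hηhat a b) _ (hη c d)
  have main : ∀ a b c : Γ,
      ePQ ⟨σh (χhat c) - σh (χhat (c * b)) + σh (χhat b), hηhat b c⟩ (χ a) =
        eQN (χhat a) ⟨σ (χ c) - σ (χ (c * b)) + σ (χ b), hη b c⟩ *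
          (γ b c * (γ (b * a) c)⁻¹ * γ a (c * b) * (γ a b)⁻¹) := fun a b c => by
    apply Additive.ofMul.injective
    simp only [hePQ_χ, heQN_χhat, ofMul_mul, ofMul_inv, hγ_β]
    have := pairing_homDefect_eq β s t a b c
    rw [hperp, hperp, add_zero, sub_zero] at this
    convert this using 2 <;> abel
  exact ⟨main, γ, main⟩

/-- With `η(a,b) := σ(χ(b)) − σ(χ(ba)) + σ(χ(a)) ∈ N`,
`η̂(a,b) := σ̂(χ̂(b)) − σ̂(χ̂(ba)) + σ̂(χ̂(a)) ∈ N⊥` and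
`γ(a,b) := ⟨σ̂(χ̂(a)), σ(χ(b))⟩ · ⟨η̂(a,b), χ(ba)⟩⁻¹`, one has, for all `a, b, c ∈ Γ`:
`⟨η̂(b,c), χ(a)⟩ = ⟨χ̂(a), η(b,c)⟩ · γ(b,c) · γ(ba,c)⁻¹ · γ(a,cb) · γ(a,b)⁻¹`.
Consequently the two `U(1)`-valued 3-cocycles `(a,b,c) ↦ ⟨χ̂(a), η(b,c)⟩` and
`(a,b,c) ↦ ⟨η̂(b,c), χ(a)⟩` differ by the coboundary of a 2-cochain, hence are
cohomologous in `H³(Γ, U(1))`. -/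
theorem statement6
    {Γ : Type*} [Group Γ] [Finite Γ]
    {G : Type*} [AddCommGroup G] [TopologicalSpace G] [IsTopologicalAddGroup G]
      [LocallyCompactSpace G] [SecondCountableTopology G] [T2Space G]
    (N : AddSubgroup G) [DiscreteTopology N] [CompactSpace (G ⧸ N)]
    -- the Pontryagin dual of `G`, abstracted by its pairing with `G`
    {Ghat : Type*} [AddCommGroup Ghat]
    (e : Ghat → G → Circle)
    (he₁ : ∀ (x y : Ghat) (g : G), e (x + y) g = e x g * e y g)
    (he₂ : ∀ (x : Ghat) (g h : G), e x (g + h) = e x g * e x h)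
    -- the annihilator `N⊥` of `N`
    (Nperp : AddSubgroup Ghat)
    (hNperp : ∀ x : Ghat, x ∈ Nperp ↔ ∀ n ∈ N, e x (n : G) = 1)
    -- the well-defined pairing of `Ĝ/N⊥` with `N`
    (eQN : Ghat ⧸ Nperp → N → Circle)
    (heQN : ∀ (x : Ghat) (n : N), eQN (x : Ghat ⧸ Nperp) n = e x (n : G))
    -- the well-defined pairing of `N⊥` with `G/N`
    (ePQ : Nperp → G ⧸ N → Circle)
    (hePQ : ∀ (p : Nperp) (g : G), ePQ p ((g : G) : G ⧸ N) = e (p : Ghat) g)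
    -- the homomorphisms `χ` and `χ̂`
    (χ : Γ → G ⧸ N) (hχ : ∀ a b : Γ, χ (a * b) = χ a + χ b)
    (χhat : Γ → Ghat ⧸ Nperp) (hχhat : ∀ a b : Γ, χhat (a * b) = χhat a + χhat b)
    -- set-theoretic sections `σ` and `σ̂` of the quotient maps
    (σ : G ⧸ N → G) (hσ : ∀ z : G ⧸ N, ((σ z : G) : G ⧸ N) = z)
    (σh : Ghat ⧸ Nperp → Ghat) (hσh : ∀ zh : Ghat ⧸ Nperp, ((σh zh : Ghat) : Ghat ⧸ Nperp) = zh)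
    -- `η(a,b) ∈ N` and `η̂(a,b) ∈ N⊥`
    (hη : ∀ a b : Γ, σ (χ b) - σ (χ (b * a)) + σ (χ a) ∈ N)
    (hηhat : ∀ a b : Γ, σh (χhat b) - σh (χhat (b * a)) + σh (χhat a) ∈ Nperp)
    (γ : Γ → Γ → Circle)
    (hγ : ∀ a b : Γ, γ a b = e (σh (χhat a)) (σ (χ b)) *
      (ePQ ⟨σh (χhat b) - σh (χhat (b * a)) + σh (χhat a), hηhat a b⟩ (χ (b * a)))⁻¹) :
    -- the main identity
    (∀ a b c : Γ,
      ePQ ⟨σh (χhat c) - σh (χhat (c * b)) + σh (χhat b), hηhat b c⟩ (χ a) =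
        eQN (χhat a) ⟨σ (χ c) - σ (χ (c * b)) + σ (χ b), hη b c⟩ *
          (γ b c * (γ (b * a) c)⁻¹ * γ a (c * b) * (γ a b)⁻¹)) ∧
    -- hence the two 3-cocycles differ by the coboundary of a 2-cochain (are cohomologous)
    (∃ γ' : Γ → Γ → Circle,
      ∀ a b c : Γ,
        ePQ ⟨σh (χhat c) - σh (χhat (c * b)) + σh (χhat b), hηhat b c⟩ (χ a) =
          eQN (χhat a) ⟨σ (χ c) - σ (χ (c * b)) + σ (χ b), hη b c⟩ *
            (γ' b c * (γ' (b * a) c)⁻¹ * γ' a (c * b) * (γ' a b)⁻¹)) :=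
  statement6_general N e he₁ he₂ Nperp hNperp eQN heQN ePQ hePQ χ χhat σ hσ σh hσh hη hηhat γ hγ
end

section
/- Let ψ : Γ × Γ × G/N → U(1) and φ : Γ × G × G/N → U(1) satisfy, for all a, b, c ∈ Γ, g, h ∈ G, z ∈ G/N: (R1) ψ(b, c, z + χ(a)) · ψ(ba, c, z)⁻¹ · ψ(a, cb, z) · ψ(a, b, z)⁻¹ = 1; (R2) φ(b, g, z + χ(a)) · φ(ba, g, z)⁻¹ · φ(a, g, z) = ψ(a, b, z + π(g)) · ψ(a, b, z)⁻¹; (R3) φ(a, g + h, z) = φ(a, h, z + π(g)) · φ(a, g, z); and suppose ⟨χ̂(a), n⟩ = φ(a, n, 0)⁻¹ for all a ∈ Γ, n ∈ N. Define ψ̂(a, b, ẑ) := ψ(a, b, 0) · φ(b, σ(χ(a)), 0)⁻¹ · ⟨χ̂(ba) + ẑ, σ(χ(ba)) − σ(χ(a)) − σ(χ(b))⟩, and set φ̃(a, z) := φ(a, σ(z), 0) · ⟨σ̂(χ̂(a)), σ(z)⟩ and s(a) := ⟨σ̂(χ̂(a)), σ(χ(a))⟩. Then for all a, b ∈ Γ,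 z ∈ G/N, ẑ ∈ Ĝ/N⊥: ψ(a, b, z) · ψ̂(a, b, ẑ)⁻¹ = [φ̃(b, z + χ(a)) · φ̃(ba, z)⁻¹ · φ̃(a, z)] · [s(b) · s(ba)⁻¹ · s(a)] · (χ⊔χ̂)(a, b, z, ẑ). -/
/-!
Applying (R2) with `g = σ(z)` at the base point `0` and then (R3) expresses `ψ(a,b,z) · ψ̂(a,b,ẑ)⁻¹`
through values of `φ(·,·,0)` and of the pairing. To compare with `φ̃(b, z + χ(a))`, the argument
`σ(χ(a)) + σ(z)` of `φ(b,·,0)` is moved to `σ(z + χ(a))` inside its `N`-coset, which by (R3) and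
`⟨χ̂(b), n⟩ = φ(b,n,0)⁻¹` costs a pairing with `σ̂(χ̂(b))`. After this all `φ`-values cancel, and
what remains is an identity between pairing values: `σ̂χ̂(a) + σ̂χ̂(b)` and `σχ(a) + σχ(b)` differ
from `σ̂χ̂(ba)` and `σχ(ba)` by `η̂(a,b)` and `η(a,b)`, so bilinearity leaves exactly the factor
`⟨η̂(a,b), η(a,b)⟩`, which is trivial because `η̂(a,b) ∈ N⊥` and `η(a,b) ∈ N`.
-/

section Pairing

variable {A B M : Type*} [AddCommGroup A] [AddCommGroup B] [CommGroup M] (e : A → B → M)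
  (he₁ : ∀ (x y : A) (g : B), e (x + y) g = e x g * e y g)
  (he₂ : ∀ (x : A) (g h : B), e x (g + h) = e x g * e x h)

def pairingHom : A →+ B →+ Additive M :=
  AddMonoidHom.mk' (fun x => AddMonoidHom.mk' (fun g => Additive.ofMul (e x g)) (he₂ x))
    fun x y => by ext g; exact he₁ x y g

theorem ofMul_eq_pairingHom (x : A) (g : B) :
    Additive.ofMul (e x g) = pairingHom e he₁ he₂ x g :=
  rfl

end Pairing

section Cocycle

variable {Γ G M : Type*} [AddCommGroup G] [CommGroup M] {N : AddSubgroup G}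
  {φ : Γ → G → G ⧸ N → M}

theorem phi_eq_of_mk_eq
    (R3 : ∀ (a : Γ) (g h : G) (z : G ⧸ N), φ a (g + h) z = φ a h (z + (g : G ⧸ N)) * φ a g z)
    (a : Γ) (g : G) {h : G} {z : G ⧸ N} (hh : (h : G ⧸ N) = z) :
    φ a g z = φ a (h + g) 0 * (φ a h 0)⁻¹ := by
  rw [R3, zero_add, hh, mul_inv_cancel_right]

theorem phi_add_of_mem
    (R3 : ∀ (a : Γ) (g h : G) (z : G ⧸ N), φ a (g + h) z = φ a h (z + (g : G ⧸ N)) * φ a g z)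
    (a : Γ) (g : G) {n : G} (hn : n ∈ N) :
    φ a (n + g) 0 = φ a g 0 * φ a n 0 := by
  rw [R3, zero_add, (QuotientAddGroup.eq_zero_iff n).mpr hn]

theorem psi_eq_of_mk_eq [Group Γ] {ψ : Γ → Γ → G ⧸ N → M} {χ : Γ → G ⧸ N}
    (R2 : ∀ (a b : Γ) (g : G) (z : G ⧸ N),
      φ b g (z + χ a) * (φ (b * a) g z)⁻¹ * φ a g z = ψ a b (z + (g : G ⧸ N)) * (ψ a b z)⁻¹)
    (a b : Γ) {g : G} {z : G ⧸ N} (hg : (g : G ⧸ N) = z) :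
    ψ a b z = φ b g (χ a) * (φ (b * a) g 0)⁻¹ * φ a g 0 * ψ a b 0 := by
  have h := R2 a b g 0
  rw [zero_add, zero_add, hg] at h
  exact mul_inv_eq_iff_eq_mul.mp h.symm

end Cocycle

theorem statement7_general
    {Γ : Type*} [Group Γ]
    {G : Type*} [AddCommGroup G]
    (N : AddSubgroup G)
    -- the Pontryagin dual of `G`, abstracted by its pairing with `G`
    {Ghat : Type*} [AddCommGroup Ghat]
    (e : Ghat → G → Circle)
    (he₁ : ∀ (x y : Ghat) (g : G), e (x + y) g = e x g * e y g)
    (he₂ : ∀ (x : Ghat) (g h : G), e x (g + h) = e x g * e x h)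
    -- the annihilator `N⊥` of `N`
    (Nperp : AddSubgroup Ghat)
    (hNperp : ∀ x : Ghat, x ∈ Nperp ↔ ∀ n ∈ N, e x (n : G) = 1)
    -- the well-defined pairing of `Ĝ/N⊥` with `N`
    (eQN : Ghat ⧸ Nperp → N → Circle)
    (heQN : ∀ (x : Ghat) (n : N), eQN (x : Ghat ⧸ Nperp) n = e x (n : G))
    -- the well-defined pairing of `N⊥` with `G/N`
    (ePQ : Nperp → G ⧸ N → Circle)
    (hePQ : ∀ (p : Nperp) (g : G), ePQ p ((g : G) : G ⧸ N) = e (p : Ghat) g)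
    -- the homomorphisms `χ` and `χ̂`
    (χ : Γ → G ⧸ N)
    (χhat : Γ → Ghat ⧸ Nperp)
    -- set-theoretic sections `σ` and `σ̂` of the quotient maps
    (σ : G ⧸ N → G) (hσ : ∀ z : G ⧸ N, ((σ z : G) : G ⧸ N) = z)
    (σh : Ghat ⧸ Nperp → Ghat) (hσh : ∀ zh : Ghat ⧸ Nperp, ((σh zh : Ghat) : Ghat ⧸ Nperp) = zh)
    -- `η(a,b) ∈ N`, `η̂(a,b) ∈ N⊥`, and `σ(χ(ba)) − σ(χ(a)) − σ(χ(b)) = −η(a,b) ∈ N`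
    (hη : ∀ a b : Γ, σ (χ b) - σ (χ (b * a)) + σ (χ a) ∈ N)
    (hηhat : ∀ a b : Γ, σh (χhat b) - σh (χhat (b * a)) + σh (χhat a) ∈ Nperp)
    (hη' : ∀ a b : Γ, σ (χ (b * a)) - σ (χ a) - σ (χ b) ∈ N)
    -- `γ` and the cocycle `χ⊔χ̂`
    (γ : Γ → Γ → Circle)
    (hγ : ∀ a b : Γ, γ a b = e (σh (χhat a)) (σ (χ b)) *
      (ePQ ⟨σh (χhat b) - σh (χhat (b * a)) + σh (χhat a), hηhat a b⟩ (χ (b * a)))⁻¹)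
    (sq : Γ → Γ → G ⧸ N → Ghat ⧸ Nperp → Circle)
    (hsq : ∀ (a b : Γ) (z : G ⧸ N) (zh : Ghat ⧸ Nperp),
      sq a b z zh = γ a b *
        (ePQ ⟨σh (χhat b) - σh (χhat (b * a)) + σh (χhat a), hηhat a b⟩ z)⁻¹ *
        eQN zh ⟨σ (χ b) - σ (χ (b * a)) + σ (χ a), hη a b⟩)
    -- the cocycle data `(ψ, φ, 1)` of a dualisable dynamical triple
    (ψ : Γ → Γ → (G ⧸ N) → Circle) (φ : Γ → G → (G ⧸ N) → Circle)
    (R2 : ∀ (a b : Γ) (g : G) (z : G ⧸ N),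
      φ b g (z + χ a) * (φ (b * a) g z)⁻¹ * φ a g z = ψ a b (z + (g : G ⧸ N)) * (ψ a b z)⁻¹)
    (R3 : ∀ (a : Γ) (g h : G) (z : G ⧸ N),
      φ a (g + h) z = φ a h (z + (g : G ⧸ N)) * φ a g z)
    (hpair : ∀ (a : Γ) (n : N), eQN (χhat a) n = (φ a (n : G) 0)⁻¹)
    -- the dual cocycle `ψ̂`
    (ψhat : Γ → Γ → (Ghat ⧸ Nperp) → Circle)
    (hψhat : ∀ (a b : Γ) (zh : Ghat ⧸ Nperp),
      ψhat a b zh = ψ a b 0 * (φ b (σ (χ a)) 0)⁻¹ *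
        eQN (χhat (b * a) + zh) ⟨σ (χ (b * a)) - σ (χ a) - σ (χ b), hη' a b⟩)
    -- `φ̃(a,z) := φ(a,σ(z),0) · ⟨σ̂(χ̂(a)), σ(z)⟩` and `s(a) := ⟨σ̂(χ̂(a)), σ(χ(a))⟩`
    (φt : Γ → (G ⧸ N) → Circle)
    (hφt : ∀ (a : Γ) (z : G ⧸ N), φt a z = φ a (σ z) 0 * e (σh (χhat a)) (σ z))
    (s : Γ → Circle)
    (hs : ∀ a : Γ, s a = e (σh (χhat a)) (σ (χ a))) :
    ∀ (a b : Γ) (z : G ⧸ N) (zh : Ghat ⧸ Nperp),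
      ψ a b z * (ψhat a b zh)⁻¹ =
        (φt b (z + χ a) * (φt (b * a) z)⁻¹ * φt a z) *
          (s b * (s (b * a))⁻¹ * s a) * sq a b z zh := by
  intro a b z zh
  have eQN_eq_e : ∀ (x : Ghat ⧸ Nperp) (n : N), eQN x n = e (σh x) n := fun x n => by
    rw [← heQN, hσh]
  have ePQ_eq_e : ∀ (p : Nperp) (z : G ⧸ N), ePQ p z = e p (σ z) := fun p z => by
    rw [← hePQ, hσ]
  have hn : σ (z + χ a) - (σ (χ a) + σ z) ∈ N := by
    rw [← QuotientAddGroup.eq_zero_iff, QuotientAddGroup.mk_sub, QuotientAddGroup.mk_add,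
      hσ, hσ, hσ, add_comm, sub_self]
  have hφ : φ b (σ (z + χ a)) 0 =
      φ b (σ (χ a) + σ z) 0 * (e (σh (χhat b)) (σ (z + χ a) - (σ (χ a) + σ z)))⁻¹ := by
    rw [← eQN_eq_e _ ⟨_, hn⟩, hpair, inv_inv, ← phi_add_of_mem R3 b _ hn, sub_add_cancel]
  have hperp : e (σh (χhat b) - σh (χhat (b * a)) + σh (χhat a))
      (σ (χ b) - σ (χ (b * a)) + σ (χ a)) = 1 :=
    (hNperp _).mp (hηhat a b) _ (hη a b)
  have hsum : χhat (b * a) + zh = ((σh (χhat (b * a)) + σh zh : Ghat) : Ghat ⧸ Nperp) := by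
    rw [QuotientAddGroup.mk_add, hσh, hσh]
  rw [hψhat, hsq, hγ, hφt, hφt, hφt, hs, hs, hs, psi_eq_of_mk_eq R2 a b (hσ z),
    phi_eq_of_mk_eq R3 b (σ z) (hσ (χ a)), hφ, hsum, heQN, eQN_eq_e, ePQ_eq_e, ePQ_eq_e]
  apply Additive.ofMul.injective
  -- the two sides differ exactly by `⟨η̂(a,b), η(a,b)⟩`
  rw [eq_comm, ← sub_eq_zero, ← ofMul_one, ← hperp]
  simp only [ofMul_mul, ofMul_inv, ofMul_eq_pairingHom e he₁ he₂, map_add, map_sub,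
    AddMonoidHom.add_apply, AddMonoidHom.sub_apply]
  abel

/-- For a dualisable dynamical-triple cocycle `(ψ, φ, 1)` (hypotheses (R1)–(R3)), the dual
homomorphism `χ̂` with `⟨χ̂(a), n⟩ = φ(a, n, 0)⁻¹`, and the dual cocycle
`ψ̂(a,b,ẑ) := ψ(a,b,0) · φ(b,σ(χ(a)),0)⁻¹ · ⟨χ̂(ba)+ẑ, σ(χ(ba))−σ(χ(a))−σ(χ(b))⟩`,
setting `φ̃(a,z) := φ(a,σ(z),0)·⟨σ̂(χ̂(a)),σ(z)⟩` and `s(a) := ⟨σ̂(χ̂(a)),σ(χ(a))⟩`,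
one has
`ψ(a,b,z) · ψ̂(a,b,ẑ)⁻¹
  = [φ̃(b,z+χ(a))·φ̃(ba,z)⁻¹·φ̃(a,z)] · [s(b)·s(ba)⁻¹·s(a)] · (χ⊔χ̂)(a,b,z,ẑ)`. -/
theorem statement7
    {Γ : Type*} [Group Γ] [Finite Γ]
    {G : Type*} [AddCommGroup G] [TopologicalSpace G] [IsTopologicalAddGroup G]
      [LocallyCompactSpace G] [SecondCountableTopology G] [T2Space G]
    (N : AddSubgroup G) [DiscreteTopology N] [CompactSpace (G ⧸ N)]
    -- the Pontryagin dual of `G`, abstracted by its pairing with `G`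
    {Ghat : Type*} [AddCommGroup Ghat]
    (e : Ghat → G → Circle)
    (he₁ : ∀ (x y : Ghat) (g : G), e (x + y) g = e x g * e y g)
    (he₂ : ∀ (x : Ghat) (g h : G), e x (g + h) = e x g * e x h)
    -- the annihilator `N⊥` of `N`
    (Nperp : AddSubgroup Ghat)
    (hNperp : ∀ x : Ghat, x ∈ Nperp ↔ ∀ n ∈ N, e x (n : G) = 1)
    -- the well-defined pairing of `Ĝ/N⊥` with `N`
    (eQN : Ghat ⧸ Nperp → N → Circle)
    (heQN : ∀ (x : Ghat) (n : N), eQN (x : Ghat ⧸ Nperp) n = e x (n : G))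
    -- the well-defined pairing of `N⊥` with `G/N`
    (ePQ : Nperp → G ⧸ N → Circle)
    (hePQ : ∀ (p : Nperp) (g : G), ePQ p ((g : G) : G ⧸ N) = e (p : Ghat) g)
    -- the homomorphisms `χ` and `χ̂`
    (χ : Γ → G ⧸ N) (hχ : ∀ a b : Γ, χ (a * b) = χ a + χ b)
    (χhat : Γ → Ghat ⧸ Nperp) (hχhat : ∀ a b : Γ, χhat (a * b) = χhat a + χhat b)
    -- set-theoretic sections `σ` and `σ̂` of the quotient maps
    (σ : G ⧸ N → G) (hσ : ∀ z : G ⧸ N, ((σ z : G) : G ⧸ N) = z)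
    (σh : Ghat ⧸ Nperp → Ghat) (hσh : ∀ zh : Ghat ⧸ Nperp, ((σh zh : Ghat) : Ghat ⧸ Nperp) = zh)
    -- `η(a,b) ∈ N`, `η̂(a,b) ∈ N⊥`, and `σ(χ(ba)) − σ(χ(a)) − σ(χ(b)) = −η(a,b) ∈ N`
    (hη : ∀ a b : Γ, σ (χ b) - σ (χ (b * a)) + σ (χ a) ∈ N)
    (hηhat : ∀ a b : Γ, σh (χhat b) - σh (χhat (b * a)) + σh (χhat a) ∈ Nperp)
    (hη' : ∀ a b : Γ, σ (χ (b * a)) - σ (χ a) - σ (χ b) ∈ N)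
    -- `γ` and the cocycle `χ⊔χ̂`
    (γ : Γ → Γ → Circle)
    (hγ : ∀ a b : Γ, γ a b = e (σh (χhat a)) (σ (χ b)) *
      (ePQ ⟨σh (χhat b) - σh (χhat (b * a)) + σh (χhat a), hηhat a b⟩ (χ (b * a)))⁻¹)
    (sq : Γ → Γ → G ⧸ N → Ghat ⧸ Nperp → Circle)
    (hsq : ∀ (a b : Γ) (z : G ⧸ N) (zh : Ghat ⧸ Nperp),
      sq a b z zh = γ a b *
        (ePQ ⟨σh (χhat b) - σh (χhat (b * a)) + σh (χhat a), hηhat a b⟩ z)⁻¹ *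
        eQN zh ⟨σ (χ b) - σ (χ (b * a)) + σ (χ a), hη a b⟩)
    -- the cocycle data `(ψ, φ, 1)` of a dualisable dynamical triple
    (ψ : Γ → Γ → (G ⧸ N) → Circle) (φ : Γ → G → (G ⧸ N) → Circle)
    (R1 : ∀ (a b c : Γ) (z : G ⧸ N),
      ψ b c (z + χ a) * (ψ (b * a) c z)⁻¹ * ψ a (c * b) z * (ψ a b z)⁻¹ = 1)
    (R2 : ∀ (a b : Γ) (g : G) (z : G ⧸ N),
      φ b g (z + χ a) * (φ (b * a) g z)⁻¹ * φ a g z = ψ a b (z + (g : G ⧸ N)) * (ψ a b z)⁻¹)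
    (R3 : ∀ (a : Γ) (g h : G) (z : G ⧸ N),
      φ a (g + h) z = φ a h (z + (g : G ⧸ N)) * φ a g z)
    (hpair : ∀ (a : Γ) (n : N), eQN (χhat a) n = (φ a (n : G) 0)⁻¹)
    -- the dual cocycle `ψ̂`
    (ψhat : Γ → Γ → (Ghat ⧸ Nperp) → Circle)
    (hψhat : ∀ (a b : Γ) (zh : Ghat ⧸ Nperp),
      ψhat a b zh = ψ a b 0 * (φ b (σ (χ a)) 0)⁻¹ *
        eQN (χhat (b * a) + zh) ⟨σ (χ (b * a)) - σ (χ a) - σ (χ b), hη' a b⟩)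
    -- `φ̃(a,z) := φ(a,σ(z),0) · ⟨σ̂(χ̂(a)), σ(z)⟩` and `s(a) := ⟨σ̂(χ̂(a)), σ(χ(a))⟩`
    (φt : Γ → (G ⧸ N) → Circle)
    (hφt : ∀ (a : Γ) (z : G ⧸ N), φt a z = φ a (σ z) 0 * e (σh (χhat a)) (σ z))
    (s : Γ → Circle)
    (hs : ∀ a : Γ, s a = e (σh (χhat a)) (σ (χ a))) :
    ∀ (a b : Γ) (z : G ⧸ N) (zh : Ghat ⧸ Nperp),
      ψ a b z * (ψhat a b zh)⁻¹ =
        (φt b (z + χ a) * (φt (b * a) z)⁻¹ * φt a z) *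
          (s b * (s (b * a))⁻¹ * s a) * sq a b z zh :=
  statement7_general N e he₁ he₂ Nperp hNperp eQN heQN ePQ hePQ χ χhat σ hσ σh hσh hη hηhat hη' γ hγ
    sq hsq ψ φ R2 R3 hpair ψhat hψhat φt hφt s hs
end

section
/- Let L ∈ ℤ, and let ψ : Γ × Γ × G/N → U(1) and ψ̂ : Γ × Γ × Ĝ/N⊥ → U(1) satisfy ψ(a, b, z) · ψ̂(a, b, ẑ)⁻¹ = ((χ⊔χ̂)(a, b, z, ẑ))^L for all a, b ∈ Γ, z ∈ G/N, ẑ ∈ Ĝ/N⊥. Then: (i) ψ̂(a, b, ẑ) = ψ(a, b, 0) · γ(a,b)^{−L} · ⟨ẑ, η(a,b)⟩^{−L}; (ii) for all g ∈ G and z ∈ G/N: ψ(a, b, z + π(g)) · ψ(a, b, z)⁻¹ = ⟨η̂(a,b), π(g)⟩^{−L} = φ(b, g, z + χ(a)) · φ(ba, g, z)⁻¹ · φ(a, g, z), where φ(a, g, z) := ⟨σ̂(χ̂(a)), g⟩^{−L}; (iii) for all ĝ ∈ Ĝ and ẑ ∈ Ĝ/N⊥: ψ̂(a, b, ẑ +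 π̂(ĝ)) · ψ̂(a, b, ẑ)⁻¹ = ⟨ĝ, η(a,b)⟩^{−L} = φ̂(b, ĝ, ẑ + χ̂(a)) · φ̂(ba, ĝ, ẑ)⁻¹ · φ̂(a, ĝ, ẑ), where φ̂(a, ĝ, ẑ) := ⟨ĝ, σ(χ(a))⟩^{−L}. -/
/-!
Putting `ẑ = 0`, resp. `z = 0`, in the regularity equation solves for `ψ`, resp. `ψ̂`, as a
constant times the `(-L)`-th power of a pairing with `η̂(a,b)`, resp. `η(a,b)`. The pairings are
bihomomorphisms that descend to the quotients, so the ratio of the values at `z + π(g)` and `z`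
only sees the pairing with `g`; expanding `η̂(a,b)` and `η(a,b)` as alternating sums of values of
`σ̂ ∘ χ̂` and `σ ∘ χ` turns that pairing into the coboundary of `φ`, resp. `φ̂`.
-/

section Pairing

variable {A M : Type*} [AddGroup A] [Group M] {F : A → M}

theorem map_zero_eq_one_of_map_add (hF : ∀ x y, F (x + y) = F x * F y) : F 0 = 1 := by
  simpa using hF 0 0

theorem map_sub_add_of_map_add (hF : ∀ x y, F (x + y) = F x * F y) (x y z : A) :
    F (x - y + z) = F x * (F y)⁻¹ * F z := by
  rw [hF, eq_mul_inv_of_mul_eq (a := F (x - y)) (by rw [← hF, sub_add_cancel])]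

end Pairing

section QuotientPairing

variable {B M : Type*} [AddCommGroup B] {N : AddSubgroup B}

theorem apply_add_mk_of_apply_mk [Mul M] {f : B ⧸ N → M} {F : B → M}
    (hF : ∀ x y, F (x + y) = F x * F y)
    (hf : ∀ x : B, f x = F x) (z : B ⧸ N) (x : B) : f (z + (x : B ⧸ N)) = f z * F x := by
  induction z using QuotientAddGroup.induction_on with
  | H y => rw [← QuotientAddGroup.mk_add, hf, hf, hF]

theorem apply_zero_of_apply_mk [Group M] {f : B ⧸ N → M} {F : B → M}
    (hF : ∀ x y, F (x + y) = F x * F y)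
    (hf : ∀ x : B, f x = F x) : f 0 = 1 := by
  rw [← QuotientAddGroup.mk_zero, hf, map_zero_eq_one_of_map_add hF]

end QuotientPairing

section CommGroup

variable {M : Type*} [CommGroup M]

theorem eq_mul_zpow_neg_mul_zpow_neg_of_mul_inv_eq {c u k v : M} {n : ℤ}
    (h : c * u⁻¹ = (k * v) ^ n) :
    u = c * k ^ (-n) * v ^ (-n) := by
  rw [mul_assoc, ← mul_zpow, zpow_neg, ← div_eq_mul_inv, eq_div_iff_mul_eq'']
  exact (mul_inv_eq_iff_eq_mul.mp h).symm

theorem eq_mul_zpow_mul_zpow_neg_of_mul_inv_eq {c u k v : M} {n : ℤ}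
    (h : u * c⁻¹ = (k * v⁻¹) ^ n) :
    u = c * k ^ n * v ^ (-n) := by
  rw [mul_inv_eq_iff_eq_mul.mp h, mul_zpow, inv_zpow']
  ac_rfl

theorem mul_inv_eq_zpow_of_eq_mul_zpow {α : Type*} {u f : α → M} {c : M} {n : ℤ}
    (h : ∀ x, u x = c * f x ^ n) (x y : α) : u x * (u y)⁻¹ = (f x * (f y)⁻¹) ^ n := by
  simp only [← div_eq_mul_inv, h, mul_div_mul_left_eq_div, div_zpow]

end CommGroup

theorem statement8_general
    {Γ : Type*} [Group Γ]
    {G : Type*} [AddCommGroup G]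
    (N : AddSubgroup G)
    -- the Pontryagin dual of `G`, abstracted by its pairing with `G`
    {Ghat : Type*} [AddCommGroup Ghat]
    (e : Ghat → G → Circle)
    (he₁ : ∀ (x y : Ghat) (g : G), e (x + y) g = e x g * e y g)
    (he₂ : ∀ (x : Ghat) (g h : G), e x (g + h) = e x g * e x h)
    -- the annihilator `N⊥` of `N`
    (Nperp : AddSubgroup Ghat)
    -- the well-defined pairing of `Ĝ/N⊥` with `N`
    (eQN : Ghat ⧸ Nperp → N → Circle)
    (heQN : ∀ (x : Ghat) (n : N), eQN (x : Ghat ⧸ Nperp) n = e x (n : G))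
    -- the well-defined pairing of `N⊥` with `G/N`
    (ePQ : Nperp → G ⧸ N → Circle)
    (hePQ : ∀ (p : Nperp) (g : G), ePQ p ((g : G) : G ⧸ N) = e (p : Ghat) g)
    -- the homomorphisms `χ` and `χ̂`
    (χ : Γ → G ⧸ N)
    (χhat : Γ → Ghat ⧸ Nperp)
    -- set-theoretic sections `σ` and `σ̂` of the quotient maps
    (σ : G ⧸ N → G)
    (σh : Ghat ⧸ Nperp → Ghat)
    -- `η(a,b) ∈ N` and `η̂(a,b) ∈ N⊥`
    (hη : ∀ a b : Γ, σ (χ b) - σ (χ (b * a)) + σ (χ a) ∈ N)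
    (hηhat : ∀ a b : Γ, σh (χhat b) - σh (χhat (b * a)) + σh (χhat a) ∈ Nperp)
    -- `γ` and the cocycle `χ⊔χ̂`
    (γ : Γ → Γ → Circle)
    (sq : Γ → Γ → G ⧸ N → Ghat ⧸ Nperp → Circle)
    (hsq : ∀ (a b : Γ) (z : G ⧸ N) (zh : Ghat ⧸ Nperp),
      sq a b z zh = γ a b *
        (ePQ ⟨σh (χhat b) - σh (χhat (b * a)) + σh (χhat a), hηhat a b⟩ z)⁻¹ *
        eQN zh ⟨σ (χ b) - σ (χ (b * a)) + σ (χ a), hη a b⟩)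
    -- the regularity equation of order `L`
    (L : ℤ)
    (ψ : Γ → Γ → (G ⧸ N) → Circle) (ψhat : Γ → Γ → (Ghat ⧸ Nperp) → Circle)
    (hreg : ∀ (a b : Γ) (z : G ⧸ N) (zh : Ghat ⧸ Nperp),
      ψ a b z * (ψhat a b zh)⁻¹ = (sq a b z zh) ^ L)
    -- `φ(a,g,z) := ⟨σ̂(χ̂(a)), g⟩^{−L}` and `φ̂(a,ĝ,ẑ) := ⟨ĝ, σ(χ(a))⟩^{−L}`
    (φ : Γ → G → (G ⧸ N) → Circle)
    (hφ : ∀ (a : Γ) (g : G) (z : G ⧸ N), φ a g z = (e (σh (χhat a)) g) ^ (-L))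
    (φhat : Γ → Ghat → (Ghat ⧸ Nperp) → Circle)
    (hφhat : ∀ (a : Γ) (gh : Ghat) (zh : Ghat ⧸ Nperp),
      φhat a gh zh = (e gh (σ (χ a))) ^ (-L)) :
    -- (i)
    (∀ (a b : Γ) (zh : Ghat ⧸ Nperp),
      ψhat a b zh = ψ a b 0 * (γ a b) ^ (-L) *
        (eQN zh ⟨σ (χ b) - σ (χ (b * a)) + σ (χ a), hη a b⟩) ^ (-L)) ∧
    -- (ii)
    (∀ (a b : Γ) (g : G) (z : G ⧸ N),
      ψ a b (z + (g : G ⧸ N)) * (ψ a b z)⁻¹ =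
        (ePQ ⟨σh (χhat b) - σh (χhat (b * a)) + σh (χhat a), hηhat a b⟩
          ((g : G) : G ⧸ N)) ^ (-L) ∧
      (ePQ ⟨σh (χhat b) - σh (χhat (b * a)) + σh (χhat a), hηhat a b⟩
          ((g : G) : G ⧸ N)) ^ (-L) =
        φ b g (z + χ a) * (φ (b * a) g z)⁻¹ * φ a g z) ∧
    -- (iii)
    (∀ (a b : Γ) (gh : Ghat) (zh : Ghat ⧸ Nperp),
      ψhat a b (zh + (gh : Ghat ⧸ Nperp)) * (ψhat a b zh)⁻¹ =
        (e gh (σ (χ b) - σ (χ (b * a)) + σ (χ a))) ^ (-L) ∧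
      (e gh (σ (χ b) - σ (χ (b * a)) + σ (χ a))) ^ (-L) =
        φhat b gh (zh + χhat a) * (φhat (b * a) gh zh)⁻¹ * φhat a gh zh) := by
  have ePQ_zero (p : Nperp) : ePQ p 0 = 1 := apply_zero_of_apply_mk (he₂ p) (hePQ p)
  have eQN_zero (n : N) : eQN 0 n = 1 :=
    apply_zero_of_apply_mk (f := (eQN · n)) (F := (e · n)) (he₁ · · n) (heQN · n)
  have hψhat (a b : Γ) (zh : Ghat ⧸ Nperp) :
      ψhat a b zh = ψ a b 0 * (γ a b) ^ (-L) *
        (eQN zh ⟨σ (χ b) - σ (χ (b * a)) + σ (χ a), hη a b⟩) ^ (-L) := by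
    have h := hreg a b 0 zh
    rw [hsq, ePQ_zero, inv_one, mul_one] at h
    exact eq_mul_zpow_neg_mul_zpow_neg_of_mul_inv_eq h
  have hψ (a b : Γ) (z : G ⧸ N) :
      ψ a b z = ψhat a b 0 * (γ a b) ^ L *
        (ePQ ⟨σh (χhat b) - σh (χhat (b * a)) + σh (χhat a), hηhat a b⟩ z) ^ (-L) := by
    have h := hreg a b z 0
    rw [hsq, eQN_zero, mul_one] at h
    exact eq_mul_zpow_mul_zpow_neg_of_mul_inv_eq h
  refine ⟨hψhat, fun a b g z => ⟨?_, ?_⟩, fun a b gh zh => ⟨?_, ?_⟩⟩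
  · rw [mul_inv_eq_zpow_of_eq_mul_zpow (hψ a b), apply_add_mk_of_apply_mk (he₂ _) (hePQ _),
      mul_inv_cancel_comm, hePQ]
  · simp only [hePQ, hφ, map_sub_add_of_map_add (F := (e · g)) (he₁ · · g), mul_zpow,
      inv_zpow]
  · rw [mul_inv_eq_zpow_of_eq_mul_zpow (hψhat a b),
      apply_add_mk_of_apply_mk (f := (eQN · _)) (F := (e · _)) (he₁ · · _) (heQN · _),
      mul_inv_cancel_comm]
  · simp only [hφhat, map_sub_add_of_map_add (he₂ gh), mul_zpow, inv_zpow]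

/-- Let `L ∈ ℤ`, and suppose `ψ` and `ψ̂` satisfy the regularity equation
`ψ(a,b,z) · ψ̂(a,b,ẑ)⁻¹ = ((χ⊔χ̂)(a,b,z,ẑ))^L`.  Then
(i)   `ψ̂(a,b,ẑ) = ψ(a,b,0) · γ(a,b)^{−L} · ⟨ẑ, η(a,b)⟩^{−L}`;
(ii)  `ψ(a,b,z+π(g)) · ψ(a,b,z)⁻¹ = ⟨η̂(a,b), π(g)⟩^{−L}
       = φ(b,g,z+χ(a)) · φ(ba,g,z)⁻¹ · φ(a,g,z)` with `φ(a,g,z) := ⟨σ̂(χ̂(a)), g⟩^{−L}`;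
(iii) `ψ̂(a,b,ẑ+π̂(ĝ)) · ψ̂(a,b,ẑ)⁻¹ = ⟨ĝ, η(a,b)⟩^{−L}
       = φ̂(b,ĝ,ẑ+χ̂(a)) · φ̂(ba,ĝ,ẑ)⁻¹ · φ̂(a,ĝ,ẑ)` with `φ̂(a,ĝ,ẑ) := ⟨ĝ, σ(χ(a))⟩^{−L}`. -/
theorem statement8
    {Γ : Type*} [Group Γ] [Finite Γ]
    {G : Type*} [AddCommGroup G] [TopologicalSpace G] [IsTopologicalAddGroup G]
      [LocallyCompactSpace G] [SecondCountableTopology G] [T2Space G]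
    (N : AddSubgroup G) [DiscreteTopology N] [CompactSpace (G ⧸ N)]
    -- the Pontryagin dual of `G`, abstracted by its pairing with `G`
    {Ghat : Type*} [AddCommGroup Ghat]
    (e : Ghat → G → Circle)
    (he₁ : ∀ (x y : Ghat) (g : G), e (x + y) g = e x g * e y g)
    (he₂ : ∀ (x : Ghat) (g h : G), e x (g + h) = e x g * e x h)
    -- the annihilator `N⊥` of `N`
    (Nperp : AddSubgroup Ghat)
    (hNperp : ∀ x : Ghat, x ∈ Nperp ↔ ∀ n ∈ N, e x (n : G) = 1)
    -- the well-defined pairing of `Ĝ/N⊥` with `N`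
    (eQN : Ghat ⧸ Nperp → N → Circle)
    (heQN : ∀ (x : Ghat) (n : N), eQN (x : Ghat ⧸ Nperp) n = e x (n : G))
    -- the well-defined pairing of `N⊥` with `G/N`
    (ePQ : Nperp → G ⧸ N → Circle)
    (hePQ : ∀ (p : Nperp) (g : G), ePQ p ((g : G) : G ⧸ N) = e (p : Ghat) g)
    -- the homomorphisms `χ` and `χ̂`
    (χ : Γ → G ⧸ N) (hχ : ∀ a b : Γ, χ (a * b) = χ a + χ b)
    (χhat : Γ → Ghat ⧸ Nperp) (hχhat : ∀ a b : Γ, χhat (a * b) = χhat a + χhat b)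
    -- set-theoretic sections `σ` and `σ̂` of the quotient maps
    (σ : G ⧸ N → G) (hσ : ∀ z : G ⧸ N, ((σ z : G) : G ⧸ N) = z)
    (σh : Ghat ⧸ Nperp → Ghat) (hσh : ∀ zh : Ghat ⧸ Nperp, ((σh zh : Ghat) : Ghat ⧸ Nperp) = zh)
    -- `η(a,b) ∈ N` and `η̂(a,b) ∈ N⊥`
    (hη : ∀ a b : Γ, σ (χ b) - σ (χ (b * a)) + σ (χ a) ∈ N)
    (hηhat : ∀ a b : Γ, σh (χhat b) - σh (χhat (b * a)) + σh (χhat a) ∈ Nperp)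
    -- `γ` and the cocycle `χ⊔χ̂`
    (γ : Γ → Γ → Circle)
    (hγ : ∀ a b : Γ, γ a b = e (σh (χhat a)) (σ (χ b)) *
      (ePQ ⟨σh (χhat b) - σh (χhat (b * a)) + σh (χhat a), hηhat a b⟩ (χ (b * a)))⁻¹)
    (sq : Γ → Γ → G ⧸ N → Ghat ⧸ Nperp → Circle)
    (hsq : ∀ (a b : Γ) (z : G ⧸ N) (zh : Ghat ⧸ Nperp),
      sq a b z zh = γ a b *
        (ePQ ⟨σh (χhat b) - σh (χhat (b * a)) + σh (χhat a), hηhat a b⟩ z)⁻¹ *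
        eQN zh ⟨σ (χ b) - σ (χ (b * a)) + σ (χ a), hη a b⟩)
    -- the regularity equation of order `L`
    (L : ℤ)
    (ψ : Γ → Γ → (G ⧸ N) → Circle) (ψhat : Γ → Γ → (Ghat ⧸ Nperp) → Circle)
    (hreg : ∀ (a b : Γ) (z : G ⧸ N) (zh : Ghat ⧸ Nperp),
      ψ a b z * (ψhat a b zh)⁻¹ = (sq a b z zh) ^ L)
    -- `φ(a,g,z) := ⟨σ̂(χ̂(a)), g⟩^{−L}` and `φ̂(a,ĝ,ẑ) := ⟨ĝ, σ(χ(a))⟩^{−L}`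
    (φ : Γ → G → (G ⧸ N) → Circle)
    (hφ : ∀ (a : Γ) (g : G) (z : G ⧸ N), φ a g z = (e (σh (χhat a)) g) ^ (-L))
    (φhat : Γ → Ghat → (Ghat ⧸ Nperp) → Circle)
    (hφhat : ∀ (a : Γ) (gh : Ghat) (zh : Ghat ⧸ Nperp),
      φhat a gh zh = (e gh (σ (χ a))) ^ (-L)) :
    -- (i)
    (∀ (a b : Γ) (zh : Ghat ⧸ Nperp),
      ψhat a b zh = ψ a b 0 * (γ a b) ^ (-L) *
        (eQN zh ⟨σ (χ b) - σ (χ (b * a)) + σ (χ a), hη a b⟩) ^ (-L)) ∧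
    -- (ii)
    (∀ (a b : Γ) (g : G) (z : G ⧸ N),
      ψ a b (z + (g : G ⧸ N)) * (ψ a b z)⁻¹ =
        (ePQ ⟨σh (χhat b) - σh (χhat (b * a)) + σh (χhat a), hηhat a b⟩
          ((g : G) : G ⧸ N)) ^ (-L) ∧
      (ePQ ⟨σh (χhat b) - σh (χhat (b * a)) + σh (χhat a), hηhat a b⟩
          ((g : G) : G ⧸ N)) ^ (-L) =
        φ b g (z + χ a) * (φ (b * a) g z)⁻¹ * φ a g z) ∧
    -- (iii)
    (∀ (a b : Γ) (gh : Ghat) (zh : Ghat ⧸ Nperp),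
      ψhat a b (zh + (gh : Ghat ⧸ Nperp)) * (ψhat a b zh)⁻¹ =
        (e gh (σ (χ b) - σ (χ (b * a)) + σ (χ a))) ^ (-L) ∧
      (e gh (σ (χ b) - σ (χ (b * a)) + σ (χ a))) ^ (-L) =
        φhat b gh (zh + χhat a) * (φhat (b * a) gh zh)⁻¹ * φhat a gh zh) :=
  statement8_general N e he₁ he₂ Nperp eQN heQN ePQ hePQ χ χhat σ σh hη hηhat γ sq hsq L ψ ψhat hreg
    φ hφ φhat hφhat
end

section
/- Let L ∈ ℤ, and let ψ : Γ × Γ × G/N → U(1) and ψ̂ : Γ × Γ × Ĝ/N⊥ → U(1) satisfy: (a) ψ(a, b, z) · ψ̂(a, b, ẑ)⁻¹ = ((χ⊔χ̂)(a, b, z, ẑ))^L for all a, b ∈ Γ, z ∈ G/N, ẑ ∈ Ĝ/N⊥, and (b) ψ̂(b, c, ẑ + χ̂(a)) · ψ̂(ba, c, ẑ)⁻¹ · ψ̂(a, cb, ẑ) · ψ̂(a, b, ẑ)⁻¹ = 1 for all a, b, c ∈ Γ, ẑ ∈ Ĝ/N⊥. Define ψ'(a, b, ẑ) := γ(a,b)^{−L}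 · ⟨ẑ, η(a,b)⟩⁻¹ · ψ(a, b, 0) and ν(a, z) := ⟨L·σ̂(χ̂(a)) − σ̂(L·χ̂(a)), z + χ(a)⟩ (note L·σ̂(χ̂(a)) − σ̂(L·χ̂(a)) ∈ N⊥). Let (χ⊔(Lχ̂)) denote the function defined exactly as (χ⊔χ̂) but with χ̂ replaced by the homomorphism L·χ̂ (and the same sections σ, σ̂). Then: (1) ψ'(b, c, ẑ + L·χ̂(a)) · ψ'(ba, c, ẑ)⁻¹ · ψ'(a, cb, ẑ) · ψ'(a, b, ẑ)⁻¹ = 1 for all a, b, c ∈ Γ, ẑ ∈ Ĝ/N⊥; (2) ψ(a, b, z) · ψ'(a, b, ẑ)⁻¹ · ν(b, z + χ(a)) · ν(ba, z)⁻¹ · ν(a, z) = (χ⊔(Lχ̂))(a, b, z, ẑ) for all a, b ∈ Γ, z ∈ G/N, ẑ ∈ Ĝ/N⊥. -/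
/-!
Evaluating (a) at `z = 0` separates the variables: with `φ := γ^{-L} · ψ(·,·,0)` one gets
`ψ̂(a,b,ẑ) = φ(a,b) · ⟨ẑ, η(a,b)⟩^{-L}` and `ψ(a,b,z) = ψ(a,b,0) · ⟨η̂(a,b), z⟩^{-L}`, while
`ψ'(a,b,ẑ) = φ(a,b) · ⟨ẑ, η(a,b)⟩^{-1}` by definition.

Since `η` is a 2-cocycle of `Γ` with values in `N`, the coboundary of `φ · ⟨·, η⟩^k` for the
action of `Γ` by the translations `s(a)` is the coboundary of `φ` times `⟨s(a), η(b,c)⟩^k`. As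
`⟨L·χ̂(a), η⟩^{-1} = ⟨χ̂(a), η⟩^{-L}`, (1) for `ψ'` is the same equation as (b) for `ψ̂`.

For (2), let `η̂_L` be `η̂` built from `L·χ̂`. The discrepancy `L·η̂ − η̂_L` between `(χ⊔χ̂)^L`
and `χ⊔(Lχ̂)` is the coboundary of `μ(a) := L·σ̂(χ̂(a)) − σ̂(L·χ̂(a))` in `N⊥`, and the
coboundary of `ν(a,z) = ⟨μ(a), z + χ(a)⟩` absorbs it.
-/

structure IsBimultiplicative {A B C : Type*} [AddCommGroup A] [AddCommGroup B] [CommGroup C]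
    (p : A → B → C) : Prop where
  map_add_left : ∀ (x y : A) (b : B), p (x + y) b = p x b * p y b
  map_add_right : ∀ (a : A) (x y : B), p a (x + y) = p a x * p a y

namespace IsBimultiplicative

variable {A B A' B' C : Type*} [AddCommGroup A] [AddCommGroup B] [AddCommGroup A']
  [AddCommGroup B'] [CommGroup C] {p : A → B → C}

def leftHom (hp : IsBimultiplicative p) (b : B) : A →+ Additive C :=
  AddMonoidHom.mk' (fun a => Additive.ofMul (p a b)) fun x y => congrArg _ (hp.map_add_left x y b)

def rightHom (hp : IsBimultiplicative p) (a : A) : B →+ Additive C :=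
  AddMonoidHom.mk' (fun b => Additive.ofMul (p a b)) (hp.map_add_right a)

theorem map_zsmul_left (hp : IsBimultiplicative p) (n : ℤ) (a : A) (b : B) :
    p (n • a) b = p a b ^ n :=
  map_zsmul (hp.leftHom b) n a

theorem map_sub_left (hp : IsBimultiplicative p) (x y : A) (b : B) :
    p (x - y) b = p x b / p y b :=
  map_sub (hp.leftHom b) x y

theorem map_zero_right (hp : IsBimultiplicative p) (a : A) : p a 0 = 1 :=
  map_zero (hp.rightHom a)

theorem map_sub_right (hp : IsBimultiplicative p) (a : A) (x y : B) :
    p a (x - y) = p a x / p a y :=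
  map_sub (hp.rightHom a) x y

theorem comp (hp : IsBimultiplicative p) (f : A' →+ A) (g : B' →+ B) :
    IsBimultiplicative fun a b => p (f a) (g b) where
  map_add_left x y b := by simp only [map_add, hp.map_add_left]
  map_add_right a x y := by simp only [map_add, hp.map_add_right]

theorem of_surjective {p' : A' → B' → C} (hp : IsBimultiplicative p) (f : A →+ A') (g : B →+ B')
    (hf : Function.Surjective f) (hg : Function.Surjective g)
    (h : ∀ a b, p' (f a) (g b) = p a b) : IsBimultiplicative p' where
  map_add_left x y b := by
    obtain ⟨x, rfl⟩ := hf x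
    obtain ⟨y, rfl⟩ := hf y
    obtain ⟨b, rfl⟩ := hg b
    rw [← map_add, h, h, h, hp.map_add_left]
  map_add_right a x y := by
    obtain ⟨a, rfl⟩ := hf a
    obtain ⟨x, rfl⟩ := hg x
    obtain ⟨y, rfl⟩ := hg y
    rw [← map_add, h, h, h, hp.map_add_right]

end IsBimultiplicative

theorem separate_variables_of_mul_inv_eq_zpow {X Y C : Type*} [Zero X] [Nonempty Y] [CommGroup C] {f u : X → C}
    {g v : Y → C} {c : C} {L : ℤ} (hu : u 0 = 1)
    (h : ∀ x y, f x * (g y)⁻¹ = (c * (u x)⁻¹ * v y) ^ L) :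
    (∀ y, g y = c ^ (-L) * f 0 * v y ^ (-L)) ∧ ∀ x, f x = f 0 * u x ^ (-L) := by
  have hg (y : Y) : g y = c ^ (-L) * f 0 * v y ^ (-L) := by
    have h0 := congrArg Additive.ofMul (h 0 y)
    rw [hu] at h0
    apply Additive.ofMul.injective
    simp only [ofMul_mul, ofMul_inv, ofMul_zpow, ofMul_one] at h0 ⊢
    linear_combination (norm := module) -h0
  refine ⟨hg, fun x => ?_⟩
  obtain ⟨y⟩ := ‹Nonempty Y›
  have hx := congrArg Additive.ofMul (h x y)
  rw [hg] at hx
  apply Additive.ofMul.injective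
  simp only [ofMul_mul, ofMul_inv, ofMul_zpow] at hx ⊢
  linear_combination (norm := module) hx

section Cochains

variable {Γ Q M C : Type*} [Group Γ] [AddCommGroup Q] [AddCommGroup M] [CommGroup C]

def coboundary₂ (s : Γ → Q) (f : Γ → Γ → Q → C) (a b c : Γ) (q : Q) : C :=
  f b c (q + s a) * (f (b * a) c q)⁻¹ * f a (c * b) q * (f a b q)⁻¹

theorem coboundary₂_mul_pairing {p : Q → M → C} (hp : IsBimultiplicative p) {η : Γ → Γ → M}
    (hη : ∀ a b c, η b c - η (b * a) c + η a (c * b) - η a b = 0) (s : Γ → Q) (φ : Γ → Γ → C)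
    (k : ℤ) (a b c : Γ) (q : Q) :
    coboundary₂ s (fun a b q => φ a b * p q (η a b) ^ k) a b c q =
      coboundary₂ s (fun a b _ => φ a b) a b c q * p (s a) (η b c) ^ k := by
  have h := congrArg (p q) (hη a b c)
  simp only [hp.map_sub_right, hp.map_add_right, hp.map_zero_right] at h
  simp only [coboundary₂, hp.map_add_left]
  apply Additive.ofMul.injective
  apply_fun Additive.ofMul at h
  simp only [ofMul_mul, ofMul_inv, ofMul_zpow, ofMul_div, ofMul_one] at h ⊢
  linear_combination (norm := module) k • h

theorem coboundary₂_pairing_zsmul {p : Q → M → C} (hp : IsBimultiplicative p) {η : Γ → Γ → M}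
    (hη : ∀ a b c, η b c - η (b * a) c + η a (c * b) - η a b = 0) (s : Γ → Q) (φ : Γ → Γ → C)
    (L : ℤ) (a b c : Γ) (q : Q) :
    coboundary₂ (fun a => L • s a) (fun a b q => φ a b * p q (η a b) ^ (-1 : ℤ)) a b c q =
      coboundary₂ s (fun a b q => φ a b * p q (η a b) ^ (-L)) a b c q := by
  rw [coboundary₂_mul_pairing hp hη, coboundary₂_mul_pairing hp hη, hp.map_zsmul_left,
    ← zpow_mul, mul_neg_one]
  rfl

theorem coboundary_pairing_translate {P Z : Type*} [AddCommGroup P] [AddCommGroup Z]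
    {p : P → Z → C} (hp : IsBimultiplicative p) (μ : Γ → P) {χ : Γ → Z}
    (hχ : ∀ a b, χ (a * b) = χ a + χ b) (a b : Γ) (z : Z) :
    p (μ b) (z + χ a + χ b) * (p (μ (b * a)) (z + χ (b * a)))⁻¹ * p (μ a) (z + χ a) =
      p (μ b - μ (b * a) + μ a) (z + χ (b * a)) * (p (μ a) (χ b))⁻¹ := by
  simp only [hχ b a, hp.map_add_left, hp.map_sub_left, hp.map_add_right]
  apply Additive.ofMul.injective
  simp only [ofMul_mul, ofMul_inv, ofMul_div]
  abel

end Cochains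

theorem statement9_general
    {Γ : Type*} [Group Γ]
    {G : Type*} [AddCommGroup G]
    (N : AddSubgroup G)
    -- the Pontryagin dual of `G`, abstracted by its pairing with `G`
    {Ghat : Type*} [AddCommGroup Ghat]
    (e : Ghat → G → Circle)
    (he₁ : ∀ (x y : Ghat) (g : G), e (x + y) g = e x g * e y g)
    (he₂ : ∀ (x : Ghat) (g h : G), e x (g + h) = e x g * e x h)
    -- the annihilator `N⊥` of `N`
    (Nperp : AddSubgroup Ghat)
    -- the well-defined pairing of `Ĝ/N⊥` with `N`
    (eQN : Ghat ⧸ Nperp → N → Circle)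
    (heQN : ∀ (x : Ghat) (n : N), eQN (x : Ghat ⧸ Nperp) n = e x (n : G))
    -- the well-defined pairing of `N⊥` with `G/N`
    (ePQ : Nperp → G ⧸ N → Circle)
    (hePQ : ∀ (p : Nperp) (g : G), ePQ p ((g : G) : G ⧸ N) = e (p : Ghat) g)
    -- the homomorphisms `χ` and `χ̂`
    (χ : Γ → G ⧸ N) (hχ : ∀ a b : Γ, χ (a * b) = χ a + χ b)
    (χhat : Γ → Ghat ⧸ Nperp)
    -- set-theoretic sections `σ` and `σ̂` of the quotient maps
    (σ : G ⧸ N → G) (hσ : ∀ z : G ⧸ N, ((σ z : G) : G ⧸ N) = z)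
    (σh : Ghat ⧸ Nperp → Ghat)
    -- `η(a,b) ∈ N` and `η̂(a,b) ∈ N⊥`
    (hη : ∀ a b : Γ, σ (χ b) - σ (χ (b * a)) + σ (χ a) ∈ N)
    (hηhat : ∀ a b : Γ, σh (χhat b) - σh (χhat (b * a)) + σh (χhat a) ∈ Nperp)
    -- `γ` and the cocycle `χ⊔χ̂`
    (γ : Γ → Γ → Circle)
    (hγ : ∀ a b : Γ, γ a b = e (σh (χhat a)) (σ (χ b)) *
      (ePQ ⟨σh (χhat b) - σh (χhat (b * a)) + σh (χhat a), hηhat a b⟩ (χ (b * a)))⁻¹)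
    (sq : Γ → Γ → G ⧸ N → Ghat ⧸ Nperp → Circle)
    (hsq : ∀ (a b : Γ) (z : G ⧸ N) (zh : Ghat ⧸ Nperp),
      sq a b z zh = γ a b *
        (ePQ ⟨σh (χhat b) - σh (χhat (b * a)) + σh (χhat a), hηhat a b⟩ z)⁻¹ *
        eQN zh ⟨σ (χ b) - σ (χ (b * a)) + σ (χ a), hη a b⟩)
    -- the data `χ⊔(Lχ̂)`, built exactly as `χ⊔χ̂` but for the homomorphism `L·χ̂`
    (L : ℤ)
    (hηhatL : ∀ a b : Γ,
      σh (L • χhat b) - σh (L • χhat (b * a)) + σh (L • χhat a) ∈ Nperp)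
    (γL : Γ → Γ → Circle)
    (hγL : ∀ a b : Γ, γL a b = e (σh (L • χhat a)) (σ (χ b)) *
      (ePQ ⟨σh (L • χhat b) - σh (L • χhat (b * a)) + σh (L • χhat a), hηhatL a b⟩
        (χ (b * a)))⁻¹)
    (sqL : Γ → Γ → G ⧸ N → Ghat ⧸ Nperp → Circle)
    (hsqL : ∀ (a b : Γ) (z : G ⧸ N) (zh : Ghat ⧸ Nperp),
      sqL a b z zh = γL a b *
        (ePQ ⟨σh (L • χhat b) - σh (L • χhat (b * a)) + σh (L • χhat a), hηhatL a b⟩ z)⁻¹ *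
        eQN zh ⟨σ (χ b) - σ (χ (b * a)) + σ (χ a), hη a b⟩)
    -- the hypotheses (a) and (b)
    (ψ : Γ → Γ → (G ⧸ N) → Circle) (ψhat : Γ → Γ → (Ghat ⧸ Nperp) → Circle)
    (hreg : ∀ (a b : Γ) (z : G ⧸ N) (zh : Ghat ⧸ Nperp),
      ψ a b z * (ψhat a b zh)⁻¹ = (sq a b z zh) ^ L)
    (hcoc : ∀ (a b c : Γ) (zh : Ghat ⧸ Nperp),
      ψhat b c (zh + χhat a) * (ψhat (b * a) c zh)⁻¹ * ψhat a (c * b) zh *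
        (ψhat a b zh)⁻¹ = 1)
    -- `ψ'(a,b,ẑ) := γ(a,b)^{−L} · ⟨ẑ, η(a,b)⟩⁻¹ · ψ(a,b,0)`
    (ψ' : Γ → Γ → (Ghat ⧸ Nperp) → Circle)
    (hψ' : ∀ (a b : Γ) (zh : Ghat ⧸ Nperp),
      ψ' a b zh = (γ a b) ^ (-L) *
        (eQN zh ⟨σ (χ b) - σ (χ (b * a)) + σ (χ a), hη a b⟩)⁻¹ * ψ a b 0)
    -- `ν(a,z) := ⟨L·σ̂(χ̂(a)) − σ̂(L·χ̂(a)), z + χ(a)⟩`, noting the element lies in `N⊥`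
    (hν : ∀ a : Γ, L • σh (χhat a) - σh (L • χhat a) ∈ Nperp)
    (ν : Γ → (G ⧸ N) → Circle)
    (hνdef : ∀ (a : Γ) (z : G ⧸ N),
      ν a z = ePQ ⟨L • σh (χhat a) - σh (L • χhat a), hν a⟩ (z + χ a)) :
    -- (1) `ψ'` is a cocycle for the shifted homomorphism `L·χ̂`
    (∀ (a b c : Γ) (zh : Ghat ⧸ Nperp),
      ψ' b c (zh + L • χhat a) * (ψ' (b * a) c zh)⁻¹ * ψ' a (c * b) zh *
        (ψ' a b zh)⁻¹ = 1) ∧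
    -- (2) the order-1 regularity equation up to the coboundary of `ν`
    (∀ (a b : Γ) (z : G ⧸ N) (zh : Ghat ⧸ Nperp),
      ψ a b z * (ψ' a b zh)⁻¹ * ν b (z + χ a) * (ν (b * a) z)⁻¹ * ν a z =
        sqL a b z zh) := by
  have hE : IsBimultiplicative e := ⟨he₁, he₂⟩
  have hQN : IsBimultiplicative eQN :=
    (hE.comp (.id Ghat) N.subtype).of_surjective (QuotientAddGroup.mk' Nperp) (.id N)
      QuotientAddGroup.mk_surjective Function.surjective_id heQN
  have hPQ : IsBimultiplicative ePQ :=
    (hE.comp Nperp.subtype (.id G)).of_surjective (.id Nperp) (QuotientAddGroup.mk' N)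
      Function.surjective_id QuotientAddGroup.mk_surjective hePQ
  let η : Γ → Γ → N := fun a b => ⟨_, hη a b⟩
  let ηhat : Γ → Γ → Nperp := fun a b => ⟨_, hηhat a b⟩
  let ηhatL : Γ → Γ → Nperp := fun a b => ⟨_, hηhatL a b⟩
  let μ : Γ → Nperp := fun a => ⟨_, hν a⟩
  have hηcoc (a b c : Γ) : η b c - η (b * a) c + η a (c * b) - η a b = 0 := by
    ext
    simp only [η, mul_assoc, AddSubgroup.coe_add, AddSubgroup.coe_sub, ZeroMemClass.coe_zero]
    abel
  have hμ (a b : Γ) : L • ηhat a b - ηhatL a b = μ b - μ (b * a) + μ a := by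
    ext
    simp only [ηhat, ηhatL, μ, AddSubgroup.coe_add, AddSubgroup.coe_sub, AddSubgroup.coe_zsmul]
    module
  let φ : Γ → Γ → Circle := fun a b => γ a b ^ (-L) * ψ a b 0
  have hsep (a b : Γ) :=
    separate_variables_of_mul_inv_eq_zpow (f := ψ a b) (g := ψhat a b) (c := γ a b)
      (v := fun zh => eQN zh (η a b)) (hPQ.map_zero_right (ηhat a b)) fun z zh => by
        rw [hreg, hsq]
  have hψhat_eq : ψhat = fun a b zh => φ a b * eQN zh (η a b) ^ (-L) :=
    funext fun a => funext fun b => funext (hsep a b).1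
  have hψ'_eq : ψ' = fun a b zh => φ a b * eQN zh (η a b) ^ (-1 : ℤ) :=
    funext fun a => funext fun b => funext fun zh => by rw [hψ', zpow_neg_one, mul_right_comm]
  refine ⟨fun a b c zh => ?_, fun a b z zh => ?_⟩
  · change coboundary₂ (fun a => L • χhat a) ψ' a b c zh = 1
    rw [hψ'_eq, coboundary₂_pairing_zsmul hQN hηcoc, ← hψhat_eq]
    exact hcoc a b c zh
  · have hγpow : γ a b ^ L =
        γL a b * ePQ (μ a) (χ b) / ePQ (L • ηhat a b - ηhatL a b) (χ (b * a)) := by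
      have hμe : ePQ (μ a) (χ b) = e (μ a) (σ (χ b)) := by rw [← hePQ, hσ]
      rw [hγ, hγL, hμe, hPQ.map_sub_left, hPQ.map_zsmul_left, hE.map_sub_left, hE.map_zsmul_left]
      apply Additive.ofMul.injective
      simp only [ofMul_mul, ofMul_inv, ofMul_zpow, ofMul_div]
      module
    have hηhatpow :
        ePQ (ηhat a b) z ^ L = ePQ (ηhatL a b) z * ePQ (L • ηhat a b - ηhatL a b) z := by
      rw [← hPQ.map_zsmul_left, ← hPQ.map_add_left, add_sub_cancel]
    have hνcob : ν b (z + χ a) * (ν (b * a) z)⁻¹ * ν a z =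
        ePQ (L • ηhat a b - ηhatL a b) (z + χ (b * a)) * (ePQ (μ a) (χ b))⁻¹ := by
      simpa only [hνdef, hμ] using coboundary_pairing_translate hPQ μ hχ a b z
    rw [hsqL, (hsep a b).2 z, hψ'_eq]
    apply Additive.ofMul.injective
    apply_fun Additive.ofMul at hγpow hηhatpow hνcob
    simp only [φ, hPQ.map_add_right, ofMul_mul, ofMul_inv, ofMul_zpow, ofMul_div]
      at hγpow hηhatpow hνcob ⊢
    linear_combination (norm := module) hγpow - hηhatpow + hνcob

/-- Let `L ∈ ℤ`, and let `ψ`, `ψ̂` satisfy (a) the regularity equation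
`ψ(a,b,z) · ψ̂(a,b,ẑ)⁻¹ = ((χ⊔χ̂)(a,b,z,ẑ))^L` and (b) the cocycle identity for `ψ̂`
with respect to `χ̂`.  With
`ψ'(a,b,ẑ) := γ(a,b)^{−L} · ⟨ẑ, η(a,b)⟩⁻¹ · ψ(a,b,0)` and
`ν(a,z) := ⟨L·σ̂(χ̂(a)) − σ̂(L·χ̂(a)), z + χ(a)⟩`, and `χ⊔(Lχ̂)` defined exactly as
`χ⊔χ̂` but with `χ̂` replaced by `L·χ̂` (same sections):
(1) `ψ'` satisfies the cocycle identity for the shifted homomorphism `L·χ̂`, and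
(2) `ψ(a,b,z) · ψ'(a,b,ẑ)⁻¹ · ν(b,z+χ(a)) · ν(ba,z)⁻¹ · ν(a,z) = (χ⊔(Lχ̂))(a,b,z,ẑ)`. -/
theorem statement9
    {Γ : Type*} [Group Γ] [Finite Γ]
    {G : Type*} [AddCommGroup G] [TopologicalSpace G] [IsTopologicalAddGroup G]
      [LocallyCompactSpace G] [SecondCountableTopology G] [T2Space G]
    (N : AddSubgroup G) [DiscreteTopology N] [CompactSpace (G ⧸ N)]
    -- the Pontryagin dual of `G`, abstracted by its pairing with `G`
    {Ghat : Type*} [AddCommGroup Ghat]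
    (e : Ghat → G → Circle)
    (he₁ : ∀ (x y : Ghat) (g : G), e (x + y) g = e x g * e y g)
    (he₂ : ∀ (x : Ghat) (g h : G), e x (g + h) = e x g * e x h)
    -- the annihilator `N⊥` of `N`
    (Nperp : AddSubgroup Ghat)
    (hNperp : ∀ x : Ghat, x ∈ Nperp ↔ ∀ n ∈ N, e x (n : G) = 1)
    -- the well-defined pairing of `Ĝ/N⊥` with `N`
    (eQN : Ghat ⧸ Nperp → N → Circle)
    (heQN : ∀ (x : Ghat) (n : N), eQN (x : Ghat ⧸ Nperp) n = e x (n : G))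
    -- the well-defined pairing of `N⊥` with `G/N`
    (ePQ : Nperp → G ⧸ N → Circle)
    (hePQ : ∀ (p : Nperp) (g : G), ePQ p ((g : G) : G ⧸ N) = e (p : Ghat) g)
    -- the homomorphisms `χ` and `χ̂`
    (χ : Γ → G ⧸ N) (hχ : ∀ a b : Γ, χ (a * b) = χ a + χ b)
    (χhat : Γ → Ghat ⧸ Nperp) (hχhat : ∀ a b : Γ, χhat (a * b) = χhat a + χhat b)
    -- set-theoretic sections `σ` and `σ̂` of the quotient maps
    (σ : G ⧸ N → G) (hσ : ∀ z : G ⧸ N, ((σ z : G) : G ⧸ N) = z)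
    (σh : Ghat ⧸ Nperp → Ghat) (hσh : ∀ zh : Ghat ⧸ Nperp, ((σh zh : Ghat) : Ghat ⧸ Nperp) = zh)
    -- `η(a,b) ∈ N` and `η̂(a,b) ∈ N⊥`
    (hη : ∀ a b : Γ, σ (χ b) - σ (χ (b * a)) + σ (χ a) ∈ N)
    (hηhat : ∀ a b : Γ, σh (χhat b) - σh (χhat (b * a)) + σh (χhat a) ∈ Nperp)
    -- `γ` and the cocycle `χ⊔χ̂`
    (γ : Γ → Γ → Circle)
    (hγ : ∀ a b : Γ, γ a b = e (σh (χhat a)) (σ (χ b)) *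
      (ePQ ⟨σh (χhat b) - σh (χhat (b * a)) + σh (χhat a), hηhat a b⟩ (χ (b * a)))⁻¹)
    (sq : Γ → Γ → G ⧸ N → Ghat ⧸ Nperp → Circle)
    (hsq : ∀ (a b : Γ) (z : G ⧸ N) (zh : Ghat ⧸ Nperp),
      sq a b z zh = γ a b *
        (ePQ ⟨σh (χhat b) - σh (χhat (b * a)) + σh (χhat a), hηhat a b⟩ z)⁻¹ *
        eQN zh ⟨σ (χ b) - σ (χ (b * a)) + σ (χ a), hη a b⟩)
    -- the data `χ⊔(Lχ̂)`, built exactly as `χ⊔χ̂` but for the homomorphism `L·χ̂`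
    (L : ℤ)
    (hηhatL : ∀ a b : Γ,
      σh (L • χhat b) - σh (L • χhat (b * a)) + σh (L • χhat a) ∈ Nperp)
    (γL : Γ → Γ → Circle)
    (hγL : ∀ a b : Γ, γL a b = e (σh (L • χhat a)) (σ (χ b)) *
      (ePQ ⟨σh (L • χhat b) - σh (L • χhat (b * a)) + σh (L • χhat a), hηhatL a b⟩
        (χ (b * a)))⁻¹)
    (sqL : Γ → Γ → G ⧸ N → Ghat ⧸ Nperp → Circle)
    (hsqL : ∀ (a b : Γ) (z : G ⧸ N) (zh : Ghat ⧸ Nperp),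
      sqL a b z zh = γL a b *
        (ePQ ⟨σh (L • χhat b) - σh (L • χhat (b * a)) + σh (L • χhat a), hηhatL a b⟩ z)⁻¹ *
        eQN zh ⟨σ (χ b) - σ (χ (b * a)) + σ (χ a), hη a b⟩)
    -- the hypotheses (a) and (b)
    (ψ : Γ → Γ → (G ⧸ N) → Circle) (ψhat : Γ → Γ → (Ghat ⧸ Nperp) → Circle)
    (hreg : ∀ (a b : Γ) (z : G ⧸ N) (zh : Ghat ⧸ Nperp),
      ψ a b z * (ψhat a b zh)⁻¹ = (sq a b z zh) ^ L)
    (hcoc : ∀ (a b c : Γ) (zh : Ghat ⧸ Nperp),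
      ψhat b c (zh + χhat a) * (ψhat (b * a) c zh)⁻¹ * ψhat a (c * b) zh *
        (ψhat a b zh)⁻¹ = 1)
    -- `ψ'(a,b,ẑ) := γ(a,b)^{−L} · ⟨ẑ, η(a,b)⟩⁻¹ · ψ(a,b,0)`
    (ψ' : Γ → Γ → (Ghat ⧸ Nperp) → Circle)
    (hψ' : ∀ (a b : Γ) (zh : Ghat ⧸ Nperp),
      ψ' a b zh = (γ a b) ^ (-L) *
        (eQN zh ⟨σ (χ b) - σ (χ (b * a)) + σ (χ a), hη a b⟩)⁻¹ * ψ a b 0)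
    -- `ν(a,z) := ⟨L·σ̂(χ̂(a)) − σ̂(L·χ̂(a)), z + χ(a)⟩`, noting the element lies in `N⊥`
    (hν : ∀ a : Γ, L • σh (χhat a) - σh (L • χhat a) ∈ Nperp)
    (ν : Γ → (G ⧸ N) → Circle)
    (hνdef : ∀ (a : Γ) (z : G ⧸ N),
      ν a z = ePQ ⟨L • σh (χhat a) - σh (L • χhat a), hν a⟩ (z + χ a)) :
    -- (1) `ψ'` is a cocycle for the shifted homomorphism `L·χ̂`
    (∀ (a b c : Γ) (zh : Ghat ⧸ Nperp),
      ψ' b c (zh + L • χhat a) * (ψ' (b * a) c zh)⁻¹ * ψ' a (c * b) zh *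
        (ψ' a b zh)⁻¹ = 1) ∧
    -- (2) the order-1 regularity equation up to the coboundary of `ν`
    (∀ (a b : Γ) (z : G ⧸ N) (zh : Ghat ⧸ Nperp),
      ψ a b z * (ψ' a b zh)⁻¹ * ν b (z + χ a) * (ν (b * a) z)⁻¹ * ν a z =
        sqL a b z zh) :=
  statement9_general N e he₁ he₂ Nperp eQN heQN ePQ hePQ χ hχ χhat σ hσ σh hη hηhat γ hγ sq hsq L
    hηhatL γL hγL sqL hsqL ψ ψhat hreg hcoc ψ' hψ' hν ν hνdef
end

section
/- Let m : G × G/N → B(H) be a map such that m(g, z) is a unitary operator on H for every (g, z), the map (g, z) ↦ m(g, z)ξ is Borel measurable G × G/N → H for every ξ ∈ H, and the cocycle identity m(g + h, z) = m(h, z + π(g)) ∘ m(g, z) holds for all g, h ∈ G and z ∈ G/N. Then for every F ∈ L²(G/N; H) and every g ∈ G the function z ↦ m(g, z)(F(z)) again represents an element of L²(G/N; H), and the resulting map G → L²(G/N; H), g ↦ [z ↦ m(g, z)(F(z))], is continuous; equivalently, the map sending g ∈ G to the unitary multiplication operator by m(g, ·) on L²(G/N; H) is continuous for the strong operator topology.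 -/
/-!
The twisted translations `(U g F) z = m(g, z - π g) (F (z - π g))` are isometries of
`L²(G/N; H)`, and the cocycle identity makes them an action: `U (g + h) = U h ∘ U g`. Hence the
orbit map `g ↦ U g F` has translation-invariant distances, and it is Borel measurable into the
separable space `L²`. A Steinhaus argument makes such a map continuous: countably many
`δ`-balls cover its image, so one of their preimages `A` has positive Haar measure, and on the
neighbourhood `A - A` of `0` the orbit stays `2δ`-close to `U 0 F`. Finally, multiplication by
`m(g, ·)` is `U g` followed by the translation by `π g`, and translation acts jointly
continuously on `L²`.
-/

open MeasureTheory Filter Topology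
open scoped ENNReal

section Steinhaus

variable {G E : Type*} [AddGroup G] [TopologicalSpace G] [IsTopologicalAddGroup G]
  [LocallyCompactSpace G] [MeasurableSpace G] [BorelSpace G]
  [PseudoMetricSpace E] [TopologicalSpace.SeparableSpace E]

theorem eventually_dist_lt_of_measurable_dist_of_dist_add_right (ν : Measure G)
    [ν.IsAddHaarMeasure] [ν.InnerRegular] {φ : G → E}
    (hmeas : ∀ c, Measurable fun g => dist (φ g) c)
    (hinv : ∀ g h k, dist (φ (g + k)) (φ (h + k)) = dist (φ g) (φ h))
    {ε : ℝ} (hε : 0 < ε) : ∀ᶠ g in 𝓝 0, dist (φ g) (φ 0) < ε := by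
  obtain ⟨D, hDc, hDdense⟩ := TopologicalSpace.exists_countable_dense E
  set A : E → Set G := fun c => {g | dist (φ g) c < ε / 2}
  have hcover : ⋃ c ∈ D, A c = Set.univ := by
    refine Set.eq_univ_of_forall fun g => ?_
    obtain ⟨c, hcD, hc⟩ := hDdense.exists_dist_lt (φ g) (half_pos hε)
    exact Set.mem_biUnion hcD hc
  obtain ⟨c, -, hc⟩ : ∃ c ∈ D, 0 < ν (A c) := by
    by_contra! h
    have : ν Set.univ = 0 := by
      rw [← hcover]
      exact (measure_biUnion_null_iff hDc).2 fun c hc => nonpos_iff_eq_zero.1 (h c hc)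
    exact (Measure.measure_univ_pos.2 (NeZero.ne ν)).ne' this
  filter_upwards [Measure.sub_mem_nhds_zero_of_addHaar_pos ν (A c)
    (measurableSet_lt (hmeas c) measurable_const) hc]
  rintro _ ⟨a, ha, b, hb, rfl⟩
  calc dist (φ (a - b)) (φ 0) = dist (φ a) (φ b) := by
        simpa using (hinv (a - b) 0 b).symm
    _ ≤ dist (φ a) c + dist (φ b) c := dist_triangle_right _ _ _
    _ < ε / 2 + ε / 2 := add_lt_add ha hb
    _ = ε := add_halves ε

theorem continuous_of_measurable_dist_of_dist_add_right (ν : Measure G)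
    [ν.IsAddHaarMeasure] [ν.InnerRegular] {φ : G → E}
    (hmeas : ∀ c, Measurable fun g => dist (φ g) c)
    (hinv : ∀ g h k, dist (φ (g + k)) (φ (h + k)) = dist (φ g) (φ h)) : Continuous φ := by
  refine continuous_iff_continuousAt.2 fun g₀ => Metric.tendsto_nhds.2 fun ε hε => ?_
  have hshift : Tendsto (· - g₀) (𝓝 g₀) (𝓝 0) := by
    simpa using (continuous_sub_right g₀).tendsto g₀
  filter_upwards [hshift.eventually
    (eventually_dist_lt_of_measurable_dist_of_dist_add_right ν hmeas hinv hε)] with g hg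
  simpa using (hinv (g - g₀) 0 g₀).trans_lt hg

end Steinhaus

theorem Measurable.apply_of_continuous_of_measurable {α E F : Type*} [MeasurableSpace α]
    [TopologicalSpace E] [TopologicalSpace.MetrizableSpace E] [SecondCountableTopology E]
    [MeasurableSpace E] [OpensMeasurableSpace E] [TopologicalSpace F]
    [TopologicalSpace.PseudoMetrizableSpace F] [MeasurableSpace F] [BorelSpace F]
    {u : α → E → F} (hcont : ∀ a, Continuous (u a)) (hmeas : ∀ x, Measurable fun a => u a x)
    {v : α → E} (hv : Measurable v) : Measurable fun a => u a (v a) :=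
  (measurable_uncurry_of_continuous_of_measurable (u := fun x a => u a x) hcont
    hmeas).comp (hv.prodMk measurable_id)

section LpPointwise

variable {α 𝕜 E : Type*} [MeasurableSpace α] {μ : Measure α} {p : ℝ≥0∞}
  [NontriviallyNormedField 𝕜] [NormedAddCommGroup E] [NormedSpace 𝕜 E]
  -- `_root_` because the instance `MeasureTheory.Lp.SecondCountableTopology` shadows the class
  -- in declarations named in `MeasureTheory.Lp`.
  [_root_.SecondCountableTopology E] [MeasurableSpace E] [BorelSpace E]

theorem MeasureTheory.MemLp.apply_of_norm_map (A : α → E →L[𝕜] E)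
    (hA : ∀ ξ, Measurable fun a => A a ξ) (hiso : ∀ a ξ, ‖A a ξ‖ = ‖ξ‖) {f : α → E}
    (hf : MemLp f p μ) : MemLp (fun a => A a (f a)) p μ := by
  have hf' := hf.aestronglyMeasurable
  have hAf : AEStronglyMeasurable (fun a => A a (f a)) μ := by
    refine (Measurable.apply_of_continuous_of_measurable (fun a => (A a).continuous) hA
      hf'.stronglyMeasurable_mk.measurable).aestronglyMeasurable.congr ?_
    filter_upwards [hf'.ae_eq_mk] with a ha
    rw [ha]
  exact (memLp_congr_norm hAf hf' (ae_of_all _ fun a => hiso a (f a))).2 hf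

variable [Fact (1 ≤ p)]

noncomputable def MeasureTheory.Lp.pointwiseApplyₗᵢ (A : α → E →L[𝕜] E)
    (hA : ∀ ξ, Measurable fun a => A a ξ) (hiso : ∀ a ξ, ‖A a ξ‖ = ‖ξ‖) :
    Lp E p μ →ₗᵢ[𝕜] Lp E p μ where
  toFun f := ((Lp.memLp f).apply_of_norm_map A hA hiso).toLp _
  map_add' f g := by
    refine Lp.ext ?_
    filter_upwards [MemLp.coeFn_toLp ((Lp.memLp (f + g)).apply_of_norm_map A hA hiso),
      MemLp.coeFn_toLp ((Lp.memLp f).apply_of_norm_map A hA hiso),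
      MemLp.coeFn_toLp ((Lp.memLp g).apply_of_norm_map A hA hiso), Lp.coeFn_add f g,
      Lp.coeFn_add (((Lp.memLp f).apply_of_norm_map A hA hiso).toLp _)
        (((Lp.memLp g).apply_of_norm_map A hA hiso).toLp _)] with a h h₁ h₂ hfg hsum
    simp only [h, hsum, Pi.add_apply, h₁, h₂, hfg, map_add]
  map_smul' c f := by
    refine Lp.ext ?_
    filter_upwards [MemLp.coeFn_toLp ((Lp.memLp (c • f)).apply_of_norm_map A hA hiso),
      MemLp.coeFn_toLp ((Lp.memLp f).apply_of_norm_map A hA hiso), Lp.coeFn_smul c f,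
      Lp.coeFn_smul c (((Lp.memLp f).apply_of_norm_map A hA hiso).toLp _)]
      with a h h₁ hcf hsmul
    simp only [h, hsmul, Pi.smul_apply, h₁, hcf, map_smul, RingHom.id_apply]
  norm_map' f := by
    change ‖((Lp.memLp f).apply_of_norm_map A hA hiso).toLp _‖ = _
    rw [Lp.norm_toLp, Lp.norm_def]
    exact congrArg ENNReal.toReal (eLpNorm_congr_norm_ae (ae_of_all _ fun a => hiso a (f a)))

theorem MeasureTheory.Lp.coeFn_pointwiseApplyₗᵢ (A : α → E →L[𝕜] E)
    (hA : ∀ ξ, Measurable fun a => A a ξ) (hiso : ∀ a ξ, ‖A a ξ‖ = ‖ξ‖) (f : Lp E p μ) :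
    pointwiseApplyₗᵢ A hA hiso f =ᵐ[μ] fun a => A a (f a) :=
  MemLp.coeFn_toLp ((Lp.memLp f).apply_of_norm_map A hA hiso)

theorem MeasureTheory.Lp.measurable_dist_of_ae_eq_uncurry {β : Type*} [MeasurableSpace β]
    [SFinite μ] (hp : p ≠ ∞) {φ : β → Lp E p μ} {Φ : β × α → E} (hΦ : Measurable Φ)
    (hφ : ∀ b, φ b =ᵐ[μ] fun a => Φ (b, a)) (c : Lp E p μ) :
    Measurable fun b => dist (φ b) c := by
  have hc := Lp.aestronglyMeasurable c
  have hp₀ : p ≠ 0 := (one_pos.trans_le Fact.out).ne'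
  have hdist : ∀ b, dist (φ b) c =
      ((∫⁻ a, ‖Φ (b, a) - hc.mk c a‖ₑ ^ p.toReal ∂μ) ^ (1 / p.toReal)).toReal := by
    intro b
    rw [Lp.dist_def, ← eLpNorm_eq_lintegral_rpow_enorm_toReal hp₀ hp]
    congr 1
    refine eLpNorm_congr_ae ?_
    filter_upwards [hφ b, hc.ae_eq_mk] with a h₁ h₂
    simp only [Pi.sub_apply, h₁, h₂]
  simp only [hdist]
  refine ENNReal.measurable_toReal.comp ((ENNReal.continuous_rpow_const.measurable).comp ?_)
  exact ((hΦ.sub (hc.stronglyMeasurable_mk.measurable.comp measurable_snd)).enorm.pow_const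
    _).lintegral_prod_right'

end LpPointwise

section TwistedTranslation

variable {G K 𝕜 H : Type*} [AddCommGroup G] [AddCommGroup K] [MeasurableSpace K]
  [MeasurableAdd K] (μ : Measure K) [μ.IsAddRightInvariant]
  [NontriviallyNormedField 𝕜] [NormedAddCommGroup H] [NormedSpace 𝕜 H]
  [SecondCountableTopology H] [MeasurableSpace H] [BorelSpace H]
  {p : ℝ≥0∞} [Fact (1 ≤ p)] (π : G →+ K) (m : G → K → H →L[𝕜] H)

noncomputable def twistedTranslationₗᵢ (hmeas : ∀ g ξ, Measurable fun z => m g z ξ)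
    (hiso : ∀ g z ξ, ‖m g z ξ‖ = ‖ξ‖) (g : G) : Lp H p μ →ₗᵢ[𝕜] Lp H p μ :=
  (Lp.pointwiseApplyₗᵢ (fun z => m g (z - π g))
    (fun ξ => (hmeas g ξ).comp (measurePreserving_sub_right μ (π g)).measurable)
    (fun _ => hiso g _)).comp
    (Lp.compMeasurePreservingₗᵢ 𝕜 (· - π g) (measurePreserving_sub_right μ (π g)))

variable {μ π m}

theorem coeFn_twistedTranslationₗᵢ (hmeas : ∀ g ξ, Measurable fun z => m g z ξ)
    (hiso : ∀ g z ξ, ‖m g z ξ‖ = ‖ξ‖) (g : G) (F : Lp H p μ) :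
    twistedTranslationₗᵢ μ π m hmeas hiso g F =ᵐ[μ] fun z => m g (z - π g) (F (z - π g)) := by
  rw [twistedTranslationₗᵢ, LinearIsometry.coe_comp, Function.comp_apply]
  refine (Lp.coeFn_pointwiseApplyₗᵢ _ _ _ _).trans ?_
  filter_upwards [Lp.coeFn_compMeasurePreserving F (measurePreserving_sub_right μ (π g))]
    with z hz
  exact congrArg _ hz

theorem twistedTranslationₗᵢ_add (hmeas : ∀ g ξ, Measurable fun z => m g z ξ)
    (hiso : ∀ g z ξ, ‖m g z ξ‖ = ‖ξ‖)
    (hcoc : ∀ g h z, m (g + h) z = (m h (z + π g)).comp (m g z)) (g h : G) (F : Lp H p μ) :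
    twistedTranslationₗᵢ μ π m hmeas hiso (g + h) F =
      twistedTranslationₗᵢ μ π m hmeas hiso h (twistedTranslationₗᵢ μ π m hmeas hiso g F) := by
  refine Lp.ext ?_
  filter_upwards [coeFn_twistedTranslationₗᵢ hmeas hiso (g + h) F,
    coeFn_twistedTranslationₗᵢ hmeas hiso h (twistedTranslationₗᵢ μ π m hmeas hiso g F),
    (measurePreserving_sub_right μ (π h)).quasiMeasurePreserving.ae_eq_comp
      (coeFn_twistedTranslationₗᵢ hmeas hiso g F)] with z h₁ h₂ h₃
  simp only [Function.comp_apply] at h₃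
  have hshift : z - π (g + h) + π g = z - π h := by rw [map_add]; abel
  have hsub : z - π (g + h) = z - π h - π g := by rw [map_add]; abel
  rw [h₁, h₂, h₃, hcoc, ContinuousLinearMap.comp_apply, hshift, hsub]

theorem measurable_dist_twistedTranslationₗᵢ [MeasurableSpace G] [MeasurableSub₂ K] [SFinite μ]
    (hp : p ≠ ∞) (hπ : Measurable π) (hmeas : ∀ ξ, Measurable fun q : G × K => m q.1 q.2 ξ)
    (hiso : ∀ g z ξ, ‖m g z ξ‖ = ‖ξ‖) (F c : Lp H p μ) :
    Measurable fun g => dist (twistedTranslationₗᵢ μ π m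
      (fun _ ξ => (hmeas ξ).comp measurable_prodMk_left) hiso g F) c := by
  have hF := Lp.aestronglyMeasurable F
  have hsub : Measurable fun q : G × K => q.2 - π q.1 :=
    measurable_snd.sub (hπ.comp measurable_fst)
  refine Lp.measurable_dist_of_ae_eq_uncurry hp
    (Measurable.apply_of_continuous_of_measurable (u := fun q : G × K => m q.1 (q.2 - π q.1))
      (fun q => (m _ _).continuous) (fun ξ => (hmeas ξ).comp (measurable_fst.prodMk hsub))
      (hF.stronglyMeasurable_mk.measurable.comp hsub)) (fun g => ?_) c
  filter_upwards [coeFn_twistedTranslationₗᵢ _ hiso g F,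
    (measurePreserving_sub_right μ (π g)).quasiMeasurePreserving.ae_eq_comp hF.ae_eq_mk]
    with z h₁ h₂
  simp only [Function.comp_apply] at h₂
  rw [h₁, h₂]
  rfl

theorem coeFn_compMeasurePreserving_add_twistedTranslationₗᵢ
    (hmeas : ∀ g ξ, Measurable fun z => m g z ξ) (hiso : ∀ g z ξ, ‖m g z ξ‖ = ‖ξ‖)
    (g : G) (F : Lp H p μ) :
    Lp.compMeasurePreserving (· + π g) (measurePreserving_add_right μ (π g))
      (twistedTranslationₗᵢ μ π m hmeas hiso g F) =ᵐ[μ] fun z => m g z (F z) := by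
  filter_upwards [Lp.coeFn_compMeasurePreserving (twistedTranslationₗᵢ μ π m hmeas hiso g F)
      (measurePreserving_add_right μ (π g)),
    (measurePreserving_add_right μ (π g)).quasiMeasurePreserving.ae_eq_comp
      (coeFn_twistedTranslationₗᵢ hmeas hiso g F)] with z h₁ h₂
  simp only [Function.comp_apply] at h₁ h₂
  rw [h₁, h₂, add_sub_cancel_right]

theorem continuous_twistedTranslationₗᵢ_apply [TopologicalSpace G] [IsTopologicalAddGroup G]
    [LocallyCompactSpace G] [MeasurableSpace G] [BorelSpace G] (ν : Measure G)
    [ν.IsAddHaarMeasure] [ν.InnerRegular] [MeasurableSub₂ K] [SFinite μ] [IsSeparable μ]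
    (hp : p ≠ ∞) (hπ : Measurable π) (hmeas : ∀ ξ, Measurable fun q : G × K => m q.1 q.2 ξ)
    (hiso : ∀ g z ξ, ‖m g z ξ‖ = ‖ξ‖)
    (hcoc : ∀ g h z, m (g + h) z = (m h (z + π g)).comp (m g z)) (F : Lp H p μ) :
    Continuous fun g => twistedTranslationₗᵢ μ π m
      (fun _ ξ => (hmeas ξ).comp measurable_prodMk_left) hiso g F :=
  have : Fact (p ≠ ∞) := ⟨hp⟩
  continuous_of_measurable_dist_of_dist_add_right ν
    (measurable_dist_twistedTranslationₗᵢ hp hπ hmeas hiso F) fun g h k => by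
      simp only [twistedTranslationₗᵢ_add _ hiso hcoc, LinearIsometry.dist_map]

end TwistedTranslation

theorem statement13_general
    {G : Type*} [AddCommGroup G] [TopologicalSpace G] [IsTopologicalAddGroup G]
      [LocallyCompactSpace G] [SecondCountableTopology G]
      [MeasurableSpace G] [BorelSpace G]
    (N : AddSubgroup G)
    [MeasurableSpace (G ⧸ N)] [BorelSpace (G ⧸ N)]
    (μ : Measure (G ⧸ N)) [μ.IsAddHaarMeasure]
    {H : Type*} [NormedAddCommGroup H] [InnerProductSpace ℂ H] [CompleteSpace H]
      [SecondCountableTopology H] [MeasurableSpace H] [BorelSpace H]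
    (m : G → (G ⧸ N) → (H →L[ℂ] H))
    (hunit : ∀ (g : G) (z : G ⧸ N), m g z ∈ unitary (H →L[ℂ] H))
    (hmeas : ∀ ξ : H, Measurable fun p : G × (G ⧸ N) => m p.1 p.2 ξ)
    (hcoc : ∀ (g h : G) (z : G ⧸ N),
      m (g + h) z = (m h (z + (g : G ⧸ N))).comp (m g z)) :
    ∀ F : Lp H 2 μ, ∃ T : G → Lp H 2 μ,
      (∀ g : G, (T g : (G ⧸ N) → H) =ᵐ[μ] fun z => m g z (F z)) ∧
      Continuous T := by
  intro F
  have hiso g z ξ : ‖m g z ξ‖ = ‖ξ‖ := (m g z).norm_map_of_mem_unitary (hunit g z) ξ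
  set π := QuotientAddGroup.mk' N
  have hπ : Continuous π := continuous_quotient_mk'
  have hτ : Continuous fun g => ContinuousMap.addRight (π g) :=
    ContinuousMap.continuous_of_continuous_uncurry _
      (continuous_snd.add (hπ.comp continuous_fst))
  refine ⟨fun g => Lp.compMeasurePreserving (ContinuousMap.addRight (π g))
    (measurePreserving_add_right μ (π g)) (twistedTranslationₗᵢ μ π m
      (fun _ ξ => (hmeas ξ).comp measurable_prodMk_left) hiso g F),
    fun g => coeFn_compMeasurePreserving_add_twistedTranslationₗᵢ _ hiso g F, ?_⟩
  exact (continuous_twistedTranslationₗᵢ_apply Measure.addHaar ENNReal.ofNat_ne_top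
    hπ.measurable hmeas hiso hcoc F).compMeasurePreservingLp hτ _ ENNReal.ofNat_ne_top

/-- Let `G` be a second-countable locally compact Hausdorff abelian topological group, `N ≤ G`
discrete with `G/N` compact, `μ` a Haar measure on `G/N`, and `H` a separable complex
Hilbert space.  Let `m : G × G/N → B(H)` take unitary values, be Borel in `(g, z)` when
applied to each vector, and satisfy the cocycle identity
`m(g + h, z) = m(h, z + π(g)) ∘ m(g, z)`.  Then for every `F ∈ L²(G/N; H)` the function
`z ↦ m(g, z)(F(z))` again represents an element of `L²(G/N; H)` for every `g`, and the
resulting map `G → L²(G/N; H)` is continuous (equivalently, `g ↦ (multiplication by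
m(g, ·))` is strongly continuous). -/
theorem statement13
    {G : Type*} [AddCommGroup G] [TopologicalSpace G] [IsTopologicalAddGroup G]
      [LocallyCompactSpace G] [SecondCountableTopology G] [T2Space G]
      [MeasurableSpace G] [BorelSpace G]
    (N : AddSubgroup G) [DiscreteTopology N] [CompactSpace (G ⧸ N)]
    [MeasurableSpace (G ⧸ N)] [BorelSpace (G ⧸ N)]
    (μ : Measure (G ⧸ N)) [μ.IsAddHaarMeasure]
    {H : Type*} [NormedAddCommGroup H] [InnerProductSpace ℂ H] [CompleteSpace H]
      [SecondCountableTopology H] [MeasurableSpace H] [BorelSpace H]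
    (m : G → (G ⧸ N) → (H →L[ℂ] H))
    (hunit : ∀ (g : G) (z : G ⧸ N), m g z ∈ unitary (H →L[ℂ] H))
    (hmeas : ∀ ξ : H, Measurable fun p : G × (G ⧸ N) => m p.1 p.2 ξ)
    (hcoc : ∀ (g h : G) (z : G ⧸ N),
      m (g + h) z = (m h (z + (g : G ⧸ N))).comp (m g z)) :
    ∀ F : Lp H 2 μ, ∃ T : G → Lp H 2 μ,
      (∀ g : G, (T g : (G ⧸ N) → H) =ᵐ[μ] fun z => m g z (F z)) ∧
      Continuous T :=
  statement13_general N μ m hunit hmeas hcoc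
end

section
/- Let (σ, σ̂) and (σ', σ̂') be two pairs of set-theoretic sections of π and π̂, and let (χ⊔_{σ,σ̂}χ̂) and (χ⊔_{σ',σ̂'}χ̂) denote the corresponding functions Γ × Γ × G/N × Ĝ/N⊥ → U(1). Then there exist functions c₁ : Γ × G/N → U(1) and c₂ : Γ × Ĝ/N⊥ → U(1), each continuous in its second variable, such that, writing c(a, z, ẑ) := c₁(a, z) · c₂(a, ẑ), for all a, b ∈ Γ, z ∈ G/N, ẑ ∈ Ĝ/N⊥: (χ⊔_{σ',σ̂'}χ̂)(a, b, z, ẑ) · ((χ⊔_{σ,σ̂}χ̂)(a, b, z, ẑ))⁻¹ = c(b, z + χ(a), ẑ + χ̂(a)) · c(ba, z, ẑ)⁻¹ · c(a, z, ẑ). In particular, the cohomology class of χ⊔χ̂ is independent of the choice of the sections σ and σ̂. -/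
/-!
Write `δ = σ' - σ`, with values in `N`, and `δ̂ = σ̂' - σ̂`, with values in `N⊥`. Lifting `z`
and `ẑ` to `g ∈ G` and `x ∈ Ĝ` and expanding both cocycles bilinearly, their quotient is the
coboundary of `c(a, z, ẑ) = ⟨δ̂ χ̂ a, g⟩⁻¹ · ⟨x, δ χ a⟩ · ⟨δ̂ χ̂ a, σ χ a⟩⁻¹` times the
pairings `⟨δ̂ χ̂ a + δ̂ χ̂ b, η_σ(a, b)⟩`, `⟨δ̂ χ̂ a, δ χ b⟩` and `⟨η̂_σ̂'(a, b), δ χ (ba)⟩`,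
each of which pairs `N⊥` with `N` and is therefore trivial.
-/

section BiadditivePairing

variable {Γ A₁ A₂ M : Type*} [Mul Γ] [AddCommGroup A₁] [AddCommGroup A₂] [AddCommGroup M]

def sectionDefect {A : Type*} [AddCommGroup A] (S : Γ → A) (a b : Γ) : A :=
  S b - S (b * a) + S a

variable (f : A₁ →+ A₂ →+ M)

/- With `S = σ ∘ χ` and `Sh = σ̂ ∘ χ̂`, `liftedCocycle` is `χ⊔_{σ,σ̂}χ̂ (a, b, π g, π̂ x)` and
`liftedCochain` is the cochain `c (a, π g, π̂ x)` written additively. -/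
def liftedCocycle (Sh : Γ → A₁) (S : Γ → A₂) (a b : Γ) (x : A₁) (g : A₂) : M :=
  f (Sh a) (S b) - f (sectionDefect Sh a b) (S (b * a)) - f (sectionDefect Sh a b) g +
    f x (sectionDefect S a b)

def liftedCochain (Sh Sh' : Γ → A₁) (S S' : Γ → A₂) (a : Γ) (x : A₁) (g : A₂) : M :=
  -f (Sh' a - Sh a) g + (f x (S' a - S a) - f (Sh' a - Sh a) (S a))

theorem liftedCocycle_sub_liftedCocycle (Sh Sh' : Γ → A₁) (S S' : Γ → A₂) (a b : Γ)
    (x : A₁) (g : A₂) :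
    liftedCocycle f Sh' S' a b x g - liftedCocycle f Sh S a b x g =
      liftedCochain f Sh Sh' S S' b (x + Sh a) (g + S a) - liftedCochain f Sh Sh' S S' (b * a) x g
        + liftedCochain f Sh Sh' S S' a x g
        + f (Sh' a - Sh a + (Sh' b - Sh b)) (sectionDefect S a b)
        + f (Sh' a - Sh a) (S' b - S b)
        - f (sectionDefect Sh' a b) (S' (b * a) - S (b * a)) := by
  simp only [liftedCocycle, liftedCochain, sectionDefect, map_add, map_sub,
    AddMonoidHom.add_apply, AddMonoidHom.sub_apply]
  abel

theorem liftedCocycle_sub_liftedCocycle_eq_coboundary {P : AddSubgroup A₁} {Q : AddSubgroup A₂}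
    (hf : ∀ p ∈ P, ∀ q ∈ Q, f p q = 0) {Sh Sh' : Γ → A₁} {S S' : Γ → A₂}
    (hSh : ∀ a, Sh' a - Sh a ∈ P) (hS : ∀ a, S' a - S a ∈ Q)
    (hdefect : ∀ a b, sectionDefect S a b ∈ Q) (hdefect' : ∀ a b, sectionDefect Sh' a b ∈ P)
    (a b : Γ) (x : A₁) (g : A₂) :
    liftedCocycle f Sh' S' a b x g - liftedCocycle f Sh S a b x g =
      liftedCochain f Sh Sh' S S' b (x + Sh a) (g + S a) - liftedCochain f Sh Sh' S S' (b * a) x g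
        + liftedCochain f Sh Sh' S S' a x g := by
  rw [liftedCocycle_sub_liftedCocycle, hf _ (add_mem (hSh a) (hSh b)) _ (hdefect a b),
    hf _ (hSh a) _ (hS b), hf _ (hdefect' a b) _ (hS (b * a))]
  simp only [add_zero, sub_zero]

end BiadditivePairing

def additivePairing {A₁ A₂ M : Type*} [AddCommGroup A₁] [AddCommGroup A₂] [CommGroup M]
    (e : A₁ → A₂ → M) (he₁ : ∀ x y g, e (x + y) g = e x g * e y g)
    (he₂ : ∀ x g h, e x (g + h) = e x g * e x h) : A₁ →+ A₂ →+ Additive M :=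
  AddMonoidHom.mk' (fun x => AddMonoidHom.mk' (fun g => Additive.ofMul (e x g)) (he₂ x))
    fun x y => by ext g; exact he₁ x y g

theorem additivePairing_apply {A₁ A₂ M : Type*} [AddCommGroup A₁] [AddCommGroup A₂] [CommGroup M]
    (e : A₁ → A₂ → M) (he₁ : ∀ x y g, e (x + y) g = e x g * e y g)
    (he₂ : ∀ x g h, e x (g + h) = e x g * e x h) (x : A₁) (g : A₂) :
    additivePairing e he₁ he₂ x g = Additive.ofMul (e x g) := rfl

theorem statement14_general
    {Γ : Type*} [Group Γ]
    {G : Type*} [AddCommGroup G] [TopologicalSpace G]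
    (N : AddSubgroup G)
    -- the Pontryagin dual of `G`, abstracted by its pairing with `G`
    {Ghat : Type*} [AddCommGroup Ghat] [TopologicalSpace Ghat]
    (e : Ghat → G → Circle)
    (he₁ : ∀ (x y : Ghat) (g : G), e (x + y) g = e x g * e y g)
    (he₂ : ∀ (x : Ghat) (g h : G), e x (g + h) = e x g * e x h)
    (heCont : ∀ x : Ghat, Continuous (e x))
    (hevCont : ∀ g : G, Continuous fun x : Ghat => e x g)
    -- the annihilator `N⊥` of `N`
    (Nperp : AddSubgroup Ghat)
    (hNperp : ∀ x : Ghat, x ∈ Nperp ↔ ∀ n ∈ N, e x (n : G) = 1)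
    -- the well-defined pairing of `Ĝ/N⊥` with `N`
    (eQN : Ghat ⧸ Nperp → N → Circle)
    (heQN : ∀ (x : Ghat) (n : N), eQN (x : Ghat ⧸ Nperp) n = e x (n : G))
    -- the well-defined pairing of `N⊥` with `G/N`
    (ePQ : Nperp → G ⧸ N → Circle)
    (hePQ : ∀ (p : Nperp) (g : G), ePQ p ((g : G) : G ⧸ N) = e (p : Ghat) g)
    -- the homomorphisms `χ` and `χ̂`
    (χ : Γ → G ⧸ N)
    (χhat : Γ → Ghat ⧸ Nperp)
    -- the first pair of sections `(σ, σ̂)` and its cocycle `χ⊔_{σ,σ̂}χ̂`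
    (σ : G ⧸ N → G) (hσ : ∀ z : G ⧸ N, ((σ z : G) : G ⧸ N) = z)
    (σh : Ghat ⧸ Nperp → Ghat) (hσh : ∀ zh : Ghat ⧸ Nperp, ((σh zh : Ghat) : Ghat ⧸ Nperp) = zh)
    (hη : ∀ a b : Γ, σ (χ b) - σ (χ (b * a)) + σ (χ a) ∈ N)
    (hηhat : ∀ a b : Γ, σh (χhat b) - σh (χhat (b * a)) + σh (χhat a) ∈ Nperp)
    (γ : Γ → Γ → Circle)
    (hγ : ∀ a b : Γ, γ a b = e (σh (χhat a)) (σ (χ b)) *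
      (ePQ ⟨σh (χhat b) - σh (χhat (b * a)) + σh (χhat a), hηhat a b⟩ (χ (b * a)))⁻¹)
    (sq : Γ → Γ → G ⧸ N → Ghat ⧸ Nperp → Circle)
    (hsq : ∀ (a b : Γ) (z : G ⧸ N) (zh : Ghat ⧸ Nperp),
      sq a b z zh = γ a b *
        (ePQ ⟨σh (χhat b) - σh (χhat (b * a)) + σh (χhat a), hηhat a b⟩ z)⁻¹ *
        eQN zh ⟨σ (χ b) - σ (χ (b * a)) + σ (χ a), hη a b⟩)
    -- the second pair of sections `(σ', σ̂')` and its cocycle `χ⊔_{σ',σ̂'}χ̂`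
    (σ' : G ⧸ N → G) (hσ' : ∀ z : G ⧸ N, ((σ' z : G) : G ⧸ N) = z)
    (σh' : Ghat ⧸ Nperp → Ghat)
    (hσh' : ∀ zh : Ghat ⧸ Nperp, ((σh' zh : Ghat) : Ghat ⧸ Nperp) = zh)
    (hη' : ∀ a b : Γ, σ' (χ b) - σ' (χ (b * a)) + σ' (χ a) ∈ N)
    (hηhat' : ∀ a b : Γ, σh' (χhat b) - σh' (χhat (b * a)) + σh' (χhat a) ∈ Nperp)
    (γ' : Γ → Γ → Circle)
    (hγ' : ∀ a b : Γ, γ' a b = e (σh' (χhat a)) (σ' (χ b)) *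
      (ePQ ⟨σh' (χhat b) - σh' (χhat (b * a)) + σh' (χhat a), hηhat' a b⟩ (χ (b * a)))⁻¹)
    (sq' : Γ → Γ → G ⧸ N → Ghat ⧸ Nperp → Circle)
    (hsq' : ∀ (a b : Γ) (z : G ⧸ N) (zh : Ghat ⧸ Nperp),
      sq' a b z zh = γ' a b *
        (ePQ ⟨σh' (χhat b) - σh' (χhat (b * a)) + σh' (χhat a), hηhat' a b⟩ z)⁻¹ *
        eQN zh ⟨σ' (χ b) - σ' (χ (b * a)) + σ' (χ a), hη' a b⟩) :
    -- the two cocycles differ by the coboundary of a 1-cochain of product form,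
    -- continuous in the `G/N`- and `Ĝ/N⊥`-variables
    ∃ (c₁ : Γ → G ⧸ N → Circle) (c₂ : Γ → Ghat ⧸ Nperp → Circle),
      (∀ a : Γ, Continuous (c₁ a)) ∧ (∀ a : Γ, Continuous (c₂ a)) ∧
      (∀ (a b : Γ) (z : G ⧸ N) (zh : Ghat ⧸ Nperp),
        sq' a b z zh * (sq a b z zh)⁻¹ =
          (c₁ b (z + χ a) * c₂ b (zh + χhat a)) *
            (c₁ (b * a) z * c₂ (b * a) zh)⁻¹ *
            (c₁ a z * c₂ a zh)) := by
  have hdN : ∀ z, σ' z - σ z ∈ N := fun z =>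
    QuotientAddGroup.eq_iff_sub_mem.mp ((hσ' z).trans (hσ z).symm)
  have hdP : ∀ zh, σh' zh - σh zh ∈ Nperp := fun zh =>
    QuotientAddGroup.eq_iff_sub_mem.mp ((hσh' zh).trans (hσh zh).symm)
  refine ⟨fun a z => (ePQ ⟨σh' (χhat a) - σh (χhat a), hdP _⟩ z)⁻¹,
    fun a zh => eQN zh ⟨σ' (χ a) - σ (χ a), hdN _⟩ * (e (σh' (χhat a) - σh (χhat a)) (σ (χ a)))⁻¹,
    fun a => ?_, fun a => ?_, ?_⟩
  · refine ((QuotientAddGroup.isQuotientMap_mk N).continuous_iff.mpr ?_).inv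
    simpa only [Function.comp_def, hePQ] using heCont _
  · refine ((QuotientAddGroup.isQuotientMap_mk Nperp).continuous_iff.mpr ?_).mul continuous_const
    simpa only [Function.comp_def, heQN] using hevCont _
  intro a b z zh
  obtain ⟨g, rfl⟩ := QuotientAddGroup.mk_surjective z
  obtain ⟨x, rfl⟩ := QuotientAddGroup.mk_surjective zh
  have ePQ_eq_of_section : ∀ s : G ⧸ N → G, (∀ z, (s z : G ⧸ N) = z) →
      ∀ p z, ePQ p z = e p (s z) := fun s hs p z => by rw [← hePQ, hs]
  have ePQ_mk_add : ∀ p c, ePQ p (g + χ c) = e p (g + σ (χ c)) := fun p c => by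
    rw [← hePQ, QuotientAddGroup.mk_add, hσ]
  have eQN_mk_add : ∀ c n, eQN (x + χhat c) n = e (x + σh (χhat c)) n := fun c n => by
    rw [← heQN, QuotientAddGroup.mk_add, hσh]
  -- `⟨η̂, χ (b * a)⟩` is read off through the lift given by the section of its own cocycle
  simp only [ePQ_eq_of_section σ hσ] at hγ
  simp only [ePQ_eq_of_section σ' hσ'] at hγ'
  simp only [hsq, hsq', hγ, hγ', hePQ, heQN, ePQ_mk_add, eQN_mk_add]
  have key := liftedCocycle_sub_liftedCocycle_eq_coboundary (additivePairing e he₁ he₂)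
    (fun p hp n hn => congrArg Additive.ofMul ((hNperp p).mp hp n hn))
    (Sh := σh ∘ χhat) (Sh' := σh' ∘ χhat) (S := σ ∘ χ) (S' := σ' ∘ χ)
    (fun a => hdP _) (fun a => hdN _) hη hηhat' a b x g
  apply Additive.ofMul.injective
  simpa only [liftedCocycle, liftedCochain, sectionDefect, Function.comp_apply,
    additivePairing_apply, ofMul_mul, ofMul_inv, sub_eq_add_neg] using key

/-- Let `(σ, σ̂)` and `(σ', σ̂')` be two pairs of set-theoretic sections of the quotient maps
`π : G → G/N` and `π̂ : Ĝ → Ĝ/N⊥`, and let `χ⊔_{σ,σ̂}χ̂` and `χ⊔_{σ',σ̂'}χ̂` be the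
corresponding 2-cocycles.  Then there are functions `c₁ : Γ × G/N → U(1)` and
`c₂ : Γ × Ĝ/N⊥ → U(1)`, each continuous in its second variable, such that with
`c(a, z, ẑ) := c₁(a, z)·c₂(a, ẑ)` the two cocycles differ by the coboundary
`c(b, z+χ(a), ẑ+χ̂(a)) · c(ba, z, ẑ)⁻¹ · c(a, z, ẑ)`; in particular the class of `χ⊔χ̂`
does not depend on the choice of sections. -/
theorem statement14
    {Γ : Type*} [Group Γ] [Finite Γ]
    {G : Type*} [AddCommGroup G] [TopologicalSpace G] [IsTopologicalAddGroup G]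
      [LocallyCompactSpace G] [SecondCountableTopology G] [T2Space G]
    (N : AddSubgroup G) [DiscreteTopology N] [CompactSpace (G ⧸ N)]
    -- the Pontryagin dual of `G`, abstracted by its pairing with `G`
    {Ghat : Type*} [AddCommGroup Ghat] [TopologicalSpace Ghat] [IsTopologicalAddGroup Ghat]
    (e : Ghat → G → Circle)
    (he₁ : ∀ (x y : Ghat) (g : G), e (x + y) g = e x g * e y g)
    (he₂ : ∀ (x : Ghat) (g h : G), e x (g + h) = e x g * e x h)
    (heCont : ∀ x : Ghat, Continuous (e x))
    (hevCont : ∀ g : G, Continuous fun x : Ghat => e x g)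
    -- the annihilator `N⊥` of `N`
    (Nperp : AddSubgroup Ghat)
    (hNperp : ∀ x : Ghat, x ∈ Nperp ↔ ∀ n ∈ N, e x (n : G) = 1)
    -- the well-defined pairing of `Ĝ/N⊥` with `N`
    (eQN : Ghat ⧸ Nperp → N → Circle)
    (heQN : ∀ (x : Ghat) (n : N), eQN (x : Ghat ⧸ Nperp) n = e x (n : G))
    -- the well-defined pairing of `N⊥` with `G/N`
    (ePQ : Nperp → G ⧸ N → Circle)
    (hePQ : ∀ (p : Nperp) (g : G), ePQ p ((g : G) : G ⧸ N) = e (p : Ghat) g)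
    -- the homomorphisms `χ` and `χ̂`
    (χ : Γ → G ⧸ N) (hχ : ∀ a b : Γ, χ (a * b) = χ a + χ b)
    (χhat : Γ → Ghat ⧸ Nperp) (hχhat : ∀ a b : Γ, χhat (a * b) = χhat a + χhat b)
    -- the first pair of sections `(σ, σ̂)` and its cocycle `χ⊔_{σ,σ̂}χ̂`
    (σ : G ⧸ N → G) (hσ : ∀ z : G ⧸ N, ((σ z : G) : G ⧸ N) = z)
    (σh : Ghat ⧸ Nperp → Ghat) (hσh : ∀ zh : Ghat ⧸ Nperp, ((σh zh : Ghat) : Ghat ⧸ Nperp) = zh)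
    (hη : ∀ a b : Γ, σ (χ b) - σ (χ (b * a)) + σ (χ a) ∈ N)
    (hηhat : ∀ a b : Γ, σh (χhat b) - σh (χhat (b * a)) + σh (χhat a) ∈ Nperp)
    (γ : Γ → Γ → Circle)
    (hγ : ∀ a b : Γ, γ a b = e (σh (χhat a)) (σ (χ b)) *
      (ePQ ⟨σh (χhat b) - σh (χhat (b * a)) + σh (χhat a), hηhat a b⟩ (χ (b * a)))⁻¹)
    (sq : Γ → Γ → G ⧸ N → Ghat ⧸ Nperp → Circle)
    (hsq : ∀ (a b : Γ) (z : G ⧸ N) (zh : Ghat ⧸ Nperp),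
      sq a b z zh = γ a b *
        (ePQ ⟨σh (χhat b) - σh (χhat (b * a)) + σh (χhat a), hηhat a b⟩ z)⁻¹ *
        eQN zh ⟨σ (χ b) - σ (χ (b * a)) + σ (χ a), hη a b⟩)
    -- the second pair of sections `(σ', σ̂')` and its cocycle `χ⊔_{σ',σ̂'}χ̂`
    (σ' : G ⧸ N → G) (hσ' : ∀ z : G ⧸ N, ((σ' z : G) : G ⧸ N) = z)
    (σh' : Ghat ⧸ Nperp → Ghat)
    (hσh' : ∀ zh : Ghat ⧸ Nperp, ((σh' zh : Ghat) : Ghat ⧸ Nperp) = zh)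
    (hη' : ∀ a b : Γ, σ' (χ b) - σ' (χ (b * a)) + σ' (χ a) ∈ N)
    (hηhat' : ∀ a b : Γ, σh' (χhat b) - σh' (χhat (b * a)) + σh' (χhat a) ∈ Nperp)
    (γ' : Γ → Γ → Circle)
    (hγ' : ∀ a b : Γ, γ' a b = e (σh' (χhat a)) (σ' (χ b)) *
      (ePQ ⟨σh' (χhat b) - σh' (χhat (b * a)) + σh' (χhat a), hηhat' a b⟩ (χ (b * a)))⁻¹)
    (sq' : Γ → Γ → G ⧸ N → Ghat ⧸ Nperp → Circle)
    (hsq' : ∀ (a b : Γ) (z : G ⧸ N) (zh : Ghat ⧸ Nperp),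
      sq' a b z zh = γ' a b *
        (ePQ ⟨σh' (χhat b) - σh' (χhat (b * a)) + σh' (χhat a), hηhat' a b⟩ z)⁻¹ *
        eQN zh ⟨σ' (χ b) - σ' (χ (b * a)) + σ' (χ a), hη' a b⟩) :
    -- the two cocycles differ by the coboundary of a 1-cochain of product form,
    -- continuous in the `G/N`- and `Ĝ/N⊥`-variables
    ∃ (c₁ : Γ → G ⧸ N → Circle) (c₂ : Γ → Ghat ⧸ Nperp → Circle),
      (∀ a : Γ, Continuous (c₁ a)) ∧ (∀ a : Γ, Continuous (c₂ a)) ∧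
      (∀ (a b : Γ) (z : G ⧸ N) (zh : Ghat ⧸ Nperp),
        sq' a b z zh * (sq a b z zh)⁻¹ =
          (c₁ b (z + χ a) * c₂ b (zh + χhat a)) *
            (c₁ (b * a) z * c₂ (b * a) zh)⁻¹ *
            (c₁ a z * c₂ a zh)) :=
  statement14_general N e he₁ he₂ heCont hevCont Nperp hNperp eQN heQN ePQ hePQ χ χhat σ hσ σh hσh
    hη hηhat γ hγ sq hsq σ' hσ' σh' hσh' hη' hηhat' γ' hγ' sq' hsq'
end
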